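/- arXiv:1804.09329 — 8 statements merged into one kernel-verified Lean document; each statement's English description precedes it below -/
import Mathlib

section
/- The integral over (0,∞)^{p+1} of (∑_{l=1}^p C_l β_l + η)^a · exp(−b(∑_{l=1}^p C_l β_l + η)) dη dβ_1 … dβ_p equals Γ(a+p+1) / (p! · b^{a+p+1} · ∏_{l=1}^p C_l). Consequently the jointly robust prior density π^{JR}(β_1,…,β_p, η) = C (∑ C_l β_l + η)^a exp(−b(∑ C_l β_l + η)) with C = p! b^{a+p+1} ∏ C_l / Γ(a+p+1) integrates to 1, i.e., is a proper prior density. -/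
open MeasureTheory Real Finset

section JRAux

open Set


lemma scale_lemma (c : ℝ) (hc : 0 < c) (g : ℝ → ENNReal) :
    ∫⁻ x in Ioi (0:ℝ), g (c * x) = ENNReal.ofReal c⁻¹ * ∫⁻ t in Ioi (0:ℝ), g t := by
  have he : MeasurableEmbedding (fun x : ℝ => c * x) :=
    (Homeomorph.mulLeft₀ c hc.ne').measurableEmbedding
  have hpre : Ioi (0:ℝ) = (fun x : ℝ => c * x) ⁻¹' Ioi 0 := by
    ext x; simp [mul_pos_iff_of_pos_left, hc]
  have h1 : Measure.map (fun x : ℝ => c * x) (volume.restrict (Ioi 0))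
      = ENNReal.ofReal c⁻¹ • volume.restrict (Ioi 0) := by
    conv_lhs => rw [hpre]
    rw [← Measure.restrict_map he.measurable measurableSet_Ioi,
      Real.map_volume_mul_left hc.ne', abs_inv, abs_of_pos hc, Measure.restrict_smul]
  rw [← he.lintegral_map, h1, lintegral_smul_measure, smul_eq_mul]

lemma translate_lemma (s : ℝ) (g : ℝ → ENNReal) :
    ∫⁻ t in Ioi (0:ℝ), g (s + t) = ∫⁻ u in Ioi s, g u := by
  have he : MeasurableEmbedding (fun x : ℝ => s + x) :=
    (Homeomorph.addLeft s).measurableEmbedding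
  have hpre : Ioi (0:ℝ) = (fun x : ℝ => s + x) ⁻¹' Ioi s := by
    ext x; simp
  have h1 : Measure.map (fun x : ℝ => s + x) (volume.restrict (Ioi 0))
      = volume.restrict (Ioi s) := by
    conv_lhs => rw [hpre]
    rw [← Measure.restrict_map he.measurable measurableSet_Ioi,
      MeasureTheory.map_add_left_eq_self volume s]
  rw [← he.lintegral_map, h1]

lemma pow_slice_lemma (k : ℕ) (u : ℝ) (hu : 0 < u) :
    ∫⁻ s in Ioo (0:ℝ) u, ENNReal.ofReal ((u - s) ^ k)
      = ENNReal.ofReal (u ^ (k+1) / (k+1)) := by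
  have hint : IntegrableOn (fun s : ℝ => (u - s) ^ k) (Ioo 0 u) := by
    apply (ContinuousOn.integrableOn_compact isCompact_Icc ?_).mono_set Ioo_subset_Icc_self
    exact (continuous_const.sub continuous_id).continuousOn.pow k
  rw [← ofReal_integral_eq_lintegral_ofReal hint]
  · congr 1
    have h1 : ∫ s in Ioo (0:ℝ) u, (u - s) ^ k = ∫ s in (0:ℝ)..u, (u - s) ^ k := by
      rw [intervalIntegral.integral_of_le hu.le, integral_Ioc_eq_integral_Ioo]
    rw [h1, intervalIntegral.integral_comp_sub_left (fun x => x ^ k) u, sub_self, sub_zero,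
      integral_pow]
    push_cast
    ring
  · filter_upwards [ae_restrict_mem measurableSet_Ioo] with s hs
    have : 0 ≤ u - s := by linarith [hs.2]
    positivity

lemma conv_lemma (k : ℕ) (c : ℝ) (hc : 0 < c) (g : ℝ → ENNReal) (hg : Measurable g) :
    ∫⁻ y in Ioi (0:ℝ), ∫⁻ t in Ioi (0:ℝ), g (c * y + t) * ENNReal.ofReal (t ^ k)
      = ENNReal.ofReal ((c * (k+1))⁻¹) *
        ∫⁻ u in Ioi (0:ℝ), g u * ENNReal.ofReal (u ^ (k+1)) := by
  -- the inner integral as a function of the shift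
  set h : ℝ → ENNReal := fun s => ∫⁻ t in Ioi (0:ℝ), g (s + t) * ENNReal.ofReal (t ^ k) with hh
  have step1 : ∀ s : ℝ, h s = ∫⁻ u in Ioi s, g u * ENNReal.ofReal ((u - s) ^ k) := by
    intro s
    have := translate_lemma s (fun u => g u * ENNReal.ofReal ((u - s) ^ k))
    simpa using this
  rw [show (fun y => ∫⁻ t in Ioi (0:ℝ), g (c * y + t) * ENNReal.ofReal (t ^ k))
      = fun y => h (c * y) from rfl]
  rw [scale_lemma c hc h]
  -- Φ as indicator
  set Φ : ℝ → ℝ → ENNReal := fun s u =>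
    Set.indicator {q : ℝ × ℝ | q.1 < q.2} (fun q : ℝ × ℝ => g q.2 * ENNReal.ofReal ((q.2 - q.1) ^ k)) (s, u)
    with hΦ
  have hΦmeas : Measurable (Function.uncurry Φ) := by
    apply Measurable.indicator
    · exact (hg.comp measurable_snd).mul
        (ENNReal.measurable_ofReal.comp ((measurable_snd.sub measurable_fst).pow_const k))
    · exact measurableSet_lt measurable_fst measurable_snd
  have hswap : ∫⁻ s in Ioi (0:ℝ), ∫⁻ u in Ioi (0:ℝ), Φ s u
      = ∫⁻ u in Ioi (0:ℝ), ∫⁻ s in Ioi (0:ℝ), Φ s u := by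
    exact lintegral_lintegral_swap hΦmeas.aemeasurable
  have step2 : ∀ s ∈ Ioi (0:ℝ), h s = ∫⁻ u in Ioi (0:ℝ), Φ s u := by
    intro s hs
    rw [step1 s]
    have hsub : Ioi s ⊆ Ioi (0:ℝ) := fun x (hx : s < x) => show 0 < x from lt_trans (show 0 < s from hs) hx
    rw [← Measure.restrict_restrict_of_subset hsub]
    rw [show (∫⁻ u in Ioi s, g u * ENNReal.ofReal ((u - s) ^ k) ∂(volume.restrict (Ioi 0)))
        = ∫⁻ u, (Ioi s).indicator (fun u => g u * ENNReal.ofReal ((u - s) ^ k)) u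
            ∂(volume.restrict (Ioi 0)) from
      (lintegral_indicator measurableSet_Ioi _).symm]
    apply lintegral_congr
    intro u
    simp only [hΦ, Set.indicator]
    by_cases hsu : s < u <;> simp [hsu, Set.mem_Ioi]
  rw [setLIntegral_congr_fun measurableSet_Ioi step2, hswap]
  have step3 : ∀ u ∈ Ioi (0:ℝ),
      (∫⁻ s in Ioi (0:ℝ), Φ s u) = g u * ENNReal.ofReal (u ^ (k+1) / (k+1)) := by
    intro u hu
    have : (fun s => Φ s u) = (Iio u).indicator (fun s => g u * ENNReal.ofReal ((u - s) ^ k)) := by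
      funext s
      simp only [hΦ, Set.indicator]
      by_cases hsu : s < u <;> simp [hsu, Set.mem_Iio]
    rw [this, lintegral_indicator measurableSet_Iio,
      Measure.restrict_restrict measurableSet_Iio, Set.Iio_inter_Ioi,
      lintegral_const_mul (f := fun s => ENNReal.ofReal ((u - s) ^ k)) _ (((measurable_const.sub measurable_id').pow_const k).ennreal_ofReal), pow_slice_lemma k u hu]
  rw [setLIntegral_congr_fun measurableSet_Ioi step3]
  have hconst : ∀ u : ℝ, g u * ENNReal.ofReal (u ^ (k+1) / (k+1))
      = ENNReal.ofReal ((k+1:ℝ))⁻¹ * (g u * ENNReal.ofReal (u ^ (k+1))) := by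
    intro u
    rw [div_eq_mul_inv, ENNReal.ofReal_mul' (by positivity)]
    ring
  simp_rw [hconst]
  rw [lintegral_const_mul (f := fun x => g x * ENNReal.ofReal (x ^ (k+1))) _ (hg.mul ((measurable_id'.pow_const (k+1)).ennreal_ofReal)),
    ← mul_assoc, ← ENNReal.ofReal_mul (by positivity)]
  congr 2
  rw [mul_inv]

lemma main_lemma : ∀ (n : ℕ) (c : Fin (n+1) → ℝ), (∀ i, 0 < c i) →
    ∀ (g : ℝ → ENNReal), Measurable g →
    ∫⁻ x : Fin (n+1) → ℝ, g (∑ i, c i * x i)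
        ∂(Measure.pi fun _ => (volume : Measure ℝ).restrict (Ioi 0))
      = ENNReal.ofReal ((n.factorial * ∏ i, c i)⁻¹) *
          ∫⁻ t in Ioi (0:ℝ), g t * ENNReal.ofReal (t ^ n) := by
  intro n
  induction n with
  | zero =>
    intro c hc g hg
    have mp := measurePreserving_funUnique ((volume : Measure ℝ).restrict (Ioi 0)) (Fin 1)
    have : ∫⁻ x : Fin 1 → ℝ, g (∑ i, c i * x i)
        ∂(Measure.pi fun _ => (volume : Measure ℝ).restrict (Ioi 0))
        = ∫⁻ y in Ioi (0:ℝ), g (c 0 * y) := by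
      rw [← mp.lintegral_comp (f := fun y => g (c 0 * y)) (hg.comp (measurable_const_mul _))]
      congr 1
      funext x
      simp [MeasurableEquiv.funUnique, Fin.sum_univ_one]
    rw [this, scale_lemma (c 0) (hc 0) g]
    simp [Fin.prod_univ_one]
  | succ n ih =>
    intro c hc g hg
    have mp := measurePreserving_piFinSuccAbove
      (fun _ : Fin (n+2) => (volume : Measure ℝ).restrict (Ioi 0)) (Fin.last (n+1))
    set G : ℝ × (Fin (n+1) → ℝ) → ENNReal := fun q =>
      g (c (Fin.last (n+1)) * q.1 + ∑ j, c ((Fin.last (n+1)).succAbove j) * q.2 j) with hG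
    have hGmeas : Measurable G := by
      apply hg.comp
      exact (measurable_fst.const_mul _).add
        (Finset.measurable_sum univ fun j _ => (measurable_pi_apply j).comp measurable_snd |>.const_mul _)
    have key : ∫⁻ x : Fin (n+2) → ℝ, g (∑ i, c i * x i)
        ∂(Measure.pi fun _ => (volume : Measure ℝ).restrict (Ioi 0))
        = ∫⁻ q, G q ∂(((volume : Measure ℝ).restrict (Ioi 0)).prod
            (Measure.pi fun _ : Fin (n+1) => (volume : Measure ℝ).restrict (Ioi 0))) := by
      rw [← mp.lintegral_comp hGmeas]
      congr 1
      funext x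
      simp only [hG, MeasurableEquiv.piFinSuccAbove]
      rw [Fin.sum_univ_succAbove (fun i => c i * x i) (Fin.last (n+1))]
      rfl
    rw [key, lintegral_prod _ hGmeas.aemeasurable]
    have inner : ∀ y : ℝ, (∫⁻ z, G (y, z)
          ∂(Measure.pi fun _ : Fin (n+1) => (volume : Measure ℝ).restrict (Ioi 0)))
        = ENNReal.ofReal ((n.factorial * ∏ j, c ((Fin.last (n+1)).succAbove j))⁻¹) *
            ∫⁻ t in Ioi (0:ℝ), g (c (Fin.last (n+1)) * y + t) * ENNReal.ofReal (t ^ n) := by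
      intro y
      exact ih (fun j => c ((Fin.last (n+1)).succAbove j)) (fun j => hc _)
        (fun t => g (c (Fin.last (n+1)) * y + t)) (hg.comp (measurable_const_add _))
    simp_rw [inner]
    have hprod : (0:ℝ) < ∏ j, c ((Fin.last (n+1)).succAbove j) :=
      Finset.prod_pos (fun j _ => hc _)
    rw [lintegral_const_mul' _ _ ENNReal.ofReal_ne_top,
      conv_lemma n (c (Fin.last (n+1))) (hc _) g hg, ← mul_assoc,
      ← ENNReal.ofReal_mul (inv_nonneg.mpr (mul_nonneg (Nat.cast_nonneg _) hprod.le))]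
    congr 2
    rw [← mul_inv]
    congr 1
    rw [Fin.prod_univ_succAbove (fun i => c i) (Fin.last (n+1)), Nat.factorial_succ]
    push_cast
    ring

lemma restrict_orthant (m : ℕ) :
    (volume : Measure (Fin m → ℝ)).restrict {x | ∀ i, 0 < x i}
      = Measure.pi fun _ => (volume : Measure ℝ).restrict (Ioi 0) := by
  have hset : {x : Fin m → ℝ | ∀ i, 0 < x i} = Set.univ.pi fun _ => Ioi (0:ℝ) := by
    ext x; simp [Set.mem_pi]
  rw [hset]
  refine (Measure.pi_eq (μ := fun _ : Fin m => (volume : Measure ℝ).restrict (Ioi 0)) (μ' := volume.restrict (Set.univ.pi fun _ => Ioi (0:ℝ))) fun s hs => ?_).symm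
  rw [Measure.restrict_apply (MeasurableSet.univ_pi hs), ← Set.pi_inter_distrib,
    volume_pi, Measure.pi_pi]
  exact Finset.prod_congr rfl fun i _ =>
    (Measure.restrict_apply (hs i)).symm

lemma jr_first
    (p : ℕ) (hp : 1 ≤ p) (a b : ℝ) (ha : -(p + 1 : ℝ) < a) (hb : 0 < b)
    (C : Fin p → ℝ) (hC : ∀ l, 0 < C l) :
    (∫ x : Fin (p + 1) → ℝ in {x | ∀ i, 0 < x i},
        (∑ l : Fin p, C l * x l.castSucc + x (Fin.last p)) ^ a *
          Real.exp (-b * (∑ l : Fin p, C l * x l.castSucc + x (Fin.last p))))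
      = Real.Gamma (a + p + 1) / ((p.factorial : ℝ) * b ^ (a + p + 1) * ∏ l, C l) := by
  have hap1 : (0:ℝ) < a + p + 1 := by linarith
  have hprodC : (0:ℝ) < ∏ l, C l := Finset.prod_pos fun l _ => hC l
  set S : ℝ → ℝ := fun t => t ^ a * Real.exp (-b * t) with hSdef
  set T : (Fin (p+1) → ℝ) → ℝ := fun x => ∑ l : Fin p, C l * x l.castSucc + x (Fin.last p)
    with hTdef
  have hTmeas : Measurable T := by
    have h1 : Measurable fun x : Fin (p+1) → ℝ => ∑ l : Fin p, C l * x l.castSucc :=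
      Finset.measurable_sum univ fun l _ => (measurable_pi_apply _).const_mul _
    exact h1.add (measurable_pi_apply _)
  have hfmeas : Measurable fun x => S (T x) := by
    apply Measurable.mul
    · exact hTmeas.pow_const a
    · exact (hTmeas.const_mul (-b)).exp
  have horth : MeasurableSet {x : Fin (p+1) → ℝ | ∀ i, 0 < x i} := by
    have : {x : Fin (p+1) → ℝ | ∀ i, 0 < x i} = Set.univ.pi fun _ => Ioi (0:ℝ) := by
      ext x; simp [Set.mem_pi]
    rw [this]; exact MeasurableSet.univ_pi fun _ => measurableSet_Ioi
  have hnonneg : 0 ≤ᵐ[volume.restrict {x : Fin (p+1) → ℝ | ∀ i, 0 < x i}]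
      fun x => S (T x) := by
    filter_upwards [ae_restrict_mem horth] with x hx
    have hT : 0 < T x := by
      have h1 : 0 < x (Fin.last p) := hx _
      have h2 : 0 ≤ ∑ l : Fin p, C l * x l.castSucc :=
        Finset.sum_nonneg fun l _ => le_of_lt (mul_pos (hC l) (hx _))
      simp only [hTdef]; linarith
    have := rpow_pos_of_pos hT a
    positivity
  rw [show (∫ x : Fin (p + 1) → ℝ in {x | ∀ i, 0 < x i},
        (∑ l : Fin p, C l * x l.castSucc + x (Fin.last p)) ^ a *
          Real.exp (-b * (∑ l : Fin p, C l * x l.castSucc + x (Fin.last p))))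
      = ∫ x : Fin (p + 1) → ℝ in {x | ∀ i, 0 < x i}, S (T x) from rfl]
  rw [integral_eq_lintegral_of_nonneg_ae hnonneg
    (hfmeas.aestronglyMeasurable.restrict)]
  -- switch to the product measure
  rw [restrict_orthant (p+1)]
  -- express as g ∘ (∑ c_i x_i)
  set g : ℝ → ENNReal := fun t => ENNReal.ofReal (S t) with hgdef
  have hgmeas : Measurable g := by
    apply ENNReal.measurable_ofReal.comp
    exact (measurable_id'.pow_const a).mul ((measurable_id'.const_mul (-b)).exp)
  set c : Fin (p+1) → ℝ := Fin.snoc C 1 with hcdef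
  have hc : ∀ i, 0 < c i := by
    intro i
    refine Fin.lastCases ?_ (fun j => ?_) i
    · simp [hcdef]
    · simp only [hcdef, Fin.snoc_castSucc]; exact hC j
  have hsum : ∀ x : Fin (p+1) → ℝ, T x = ∑ i, c i * x i := by
    intro x
    rw [Fin.sum_univ_castSucc]
    simp [hcdef, hTdef]
  have hrw : (fun x : Fin (p+1) → ℝ => ENNReal.ofReal (S (T x)))
      = fun x => g (∑ i, c i * x i) := by
    funext x; rw [hgdef, hsum x]
  rw [hrw, main_lemma p c hc g hgmeas]
  -- compute the one-dimensional integral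
  have hprodc : ∏ i, c i = ∏ l, C l := by
    rw [Fin.prod_univ_castSucc]
    simp [hcdef]
  have h1d : (∫⁻ t in Ioi (0:ℝ), g t * ENNReal.ofReal (t ^ p))
      = ENNReal.ofReal ((1/b) ^ (a + p + 1) * Real.Gamma (a + p + 1)) := by
    have hcong : ∀ t ∈ Ioi (0:ℝ), g t * ENNReal.ofReal (t ^ p)
        = ENNReal.ofReal (t ^ (a + p) * Real.exp (-b * t)) := by
      intro t ht
      rw [hgdef]
      have ht0 : (0:ℝ) < t := ht
      rw [← ENNReal.ofReal_mul (by positivity)]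
      congr 1
      rw [hSdef]
      have : (t:ℝ) ^ (p:ℕ) = t ^ (p:ℝ) := by rw [← rpow_natCast]
      rw [mul_assoc, mul_comm (Real.exp (-b*t)), ← mul_assoc, this,
        ← rpow_add ht0]
    rw [setLIntegral_congr_fun measurableSet_Ioi hcong]
    rw [← ofReal_integral_eq_lintegral_ofReal]
    · congr 1
      have := integral_rpow_mul_exp_neg_mul_Ioi (a := a + p + 1) (r := b) hap1 hb
      simp only [add_sub_cancel_right] at this
      rw [← this]
      apply setIntegral_congr_fun measurableSet_Ioi
      intro t ht
      simp only [neg_mul, neg_neg]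
    · have := integrableOn_rpow_mul_exp_neg_mul_rpow
        (s := a + p) (p := 1) (b := b) (by linarith) one_pos hb
      refine this.congr_fun (fun t ht => ?_) measurableSet_Ioi
      simp only [rpow_one]
    · filter_upwards [ae_restrict_mem measurableSet_Ioi] with t ht
      have : (0:ℝ) < t := ht
      positivity
  have hpc : (0:ℝ) < ∏ i, c i := hprodc ▸ hprodC
  have h2 : (0:ℝ) ≤ ((p.factorial : ℝ) * ∏ i, c i)⁻¹ :=
    inv_nonneg.mpr (mul_nonneg (Nat.cast_nonneg _) hpc.le)
  have h3 : (0:ℝ) ≤ (1/b) ^ (a + (p:ℝ) + 1) * Real.Gamma (a + (p:ℝ) + 1) :=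
    mul_nonneg (rpow_nonneg (by positivity) _) (Real.Gamma_nonneg_of_nonneg hap1.le)
  rw [h1d, ← ENNReal.ofReal_mul h2, ENNReal.toReal_ofReal (mul_nonneg h2 h3)]
  rw [hprodc, one_div, inv_rpow hb.le]
  have hbp : (0:ℝ) < b ^ (a + (p:ℝ) + 1) := rpow_pos_of_pos hb _
  have hΓ : (0:ℝ) < Real.Gamma (a + (p:ℝ) + 1) := Real.Gamma_pos_of_pos hap1
  have hfac : (0:ℝ) < (p.factorial : ℝ) := by positivity
  field_simp

end JRAux

/-- Normalizing constant of the jointly robust prior with nugget: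
the integral over the positive orthant of `(∑ C_l β_l + η)^a exp(-b(∑ C_l β_l + η))`
equals `Γ(a+p+1)/(p! b^{a+p+1} ∏ C_l)`, and hence the JR prior density integrates to 1. -/
theorem jr_prior_normalizing_constant
    (p : ℕ) (hp : 1 ≤ p) (a b : ℝ) (ha : -(p + 1 : ℝ) < a) (hb : 0 < b)
    (C : Fin p → ℝ) (hC : ∀ l, 0 < C l) :
    (∫ x : Fin (p + 1) → ℝ in {x | ∀ i, 0 < x i},
        (∑ l : Fin p, C l * x l.castSucc + x (Fin.last p)) ^ a *
          Real.exp (-b * (∑ l : Fin p, C l * x l.castSucc + x (Fin.last p))))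
      = Real.Gamma (a + p + 1) / ((p.factorial : ℝ) * b ^ (a + p + 1) * ∏ l, C l) ∧
    (∫ x : Fin (p + 1) → ℝ in {x | ∀ i, 0 < x i},
        ((p.factorial : ℝ) * b ^ (a + p + 1) * (∏ l, C l) / Real.Gamma (a + p + 1)) *
          ((∑ l : Fin p, C l * x l.castSucc + x (Fin.last p)) ^ a *
            Real.exp (-b * (∑ l : Fin p, C l * x l.castSucc + x (Fin.last p)))))
      = 1 := by
  have h1 := jr_first p hp a b ha hb C hC
  refine ⟨h1, ?_⟩
  rw [MeasureTheory.integral_const_mul, h1]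
  have hap1 : (0:ℝ) < a + p + 1 := by linarith
  have hΓ : (0:ℝ) < Real.Gamma (a + (p:ℝ) + 1) := Real.Gamma_pos_of_pos hap1
  have hbp : (0:ℝ) < b ^ (a + (p:ℝ) + 1) := Real.rpow_pos_of_pos hb _
  have hprodC : (0:ℝ) < ∏ l, C l := Finset.prod_pos fun l _ => hC l
  have hfac : (0:ℝ) < (p.factorial : ℝ) := by positivity
  field_simp
end

section
/- For the probability density on (0,∞)^{p+1} proportional to (∑_{l=1}^p C_l β_l + η)^a exp(−b(∑_{l=1}^p C_l β_l + η)), the expectation of β_i equals (a+p+1) / ((p+1) C_i b) for each i = 1,…,p, and the expectation of η equals (a+p+1) / ((p+1) b). -/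
section JRhelpers

open MeasureTheory Real Set ENNReal intervalIntegral

namespace JR



lemma lint_shift (f : ℝ → ℝ≥0∞) (u : ℝ) :
    ∫⁻ t in Ioi (0:ℝ), f (u + t) = ∫⁻ s in Ioi u, f s := by
  have hmp : MeasurePreserving (fun t : ℝ => u + t) volume volume :=
    measurePreserving_add_left volume u
  have hemb : MeasurableEmbedding (fun t : ℝ => u + t) :=
    (Homeomorph.addLeft u).measurableEmbedding
  have := hmp.setLIntegral_comp_preimage_emb hemb f (Ioi u)
  rw [← this]
  congr 1
  ext t
  simp [lt_sub_iff_add_lt']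

lemma lint_scale (f : ℝ → ℝ≥0∞) (hf : Measurable f) {c : ℝ} (hc : 0 < c) :
    ∫⁻ t in Ioi (0:ℝ), f (c * t) = ENNReal.ofReal c⁻¹ * ∫⁻ s in Ioi (0:ℝ), f s := by
  have h1 : ((c : ℝ) * ·) ⁻¹' (Ioi (0:ℝ)) = Ioi 0 := by
    ext t; simp [mul_pos_iff_of_pos_left hc]
  have h2 : ∫⁻ s in Ioi (0:ℝ), f s ∂(Measure.map (c * ·) volume)
      = ∫⁻ t in (fun t => c * t) ⁻¹' (Ioi (0:ℝ)), f (c * t) ∂volume :=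
    setLIntegral_map measurableSet_Ioi hf (measurable_const_mul c)
  rw [Real.map_volume_mul_left (ne_of_gt hc)] at h2
  rw [h1] at h2
  rw [abs_of_pos (inv_pos.mpr hc)] at h2
  rw [← h2]
  simp [Measure.restrict_smul]



lemma orthant_meas (n : ℕ) : MeasurableSet {x : Fin n → ℝ | ∀ j, 0 < x j} := by
  have : {x : Fin n → ℝ | ∀ j, 0 < x j} = ⋂ j, {x | 0 < x j} := by ext x; simp
  rw [this]
  exact MeasurableSet.iInter fun j => measurableSet_lt measurable_const (measurable_pi_apply j)

lemma split (n : ℕ) (i : Fin (n+1)) (F : (Fin (n+1) → ℝ) → ℝ≥0∞) (hF : Measurable F) :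
    ∫⁻ x in {x : Fin (n+1) → ℝ | ∀ j, 0 < x j}, F x
      = ∫⁻ t in Ioi (0:ℝ), ∫⁻ z in {z : Fin n → ℝ | ∀ j, 0 < z j}, F (i.insertNth t z) := by
  have hmp := volume_preserving_piFinSuccAbove (fun _ : Fin (n+1) => ℝ) i
  set e := MeasurableEquiv.piFinSuccAbove (fun _ : Fin (n+1) => ℝ) i with he
  have key := hmp.setLIntegral_comp_emb e.measurableEmbedding (F ∘ e.symm)
    {x : Fin (n+1) → ℝ | ∀ j, 0 < x j}
  have hcomp : ∀ x, (F ∘ e.symm) (e x) = F x := fun x => by simp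
  rw [setLIntegral_congr_fun (orthant_meas (n+1))
    (fun x _ => (hcomp x))] at key
  rw [key]
  have hsymm : ∀ (t : ℝ) (z : Fin n → ℝ), e.symm (t, z) = i.insertNth t z := by
    intro t z
    simp [he, MeasurableEquiv.piFinSuccAbove_symm_apply, Fin.insertNthEquiv]
  have himg : e '' {x : Fin (n+1) → ℝ | ∀ j, 0 < x j}
      = (Ioi (0:ℝ)) ×ˢ {z : Fin n → ℝ | ∀ j, 0 < z j} := by
    ext ⟨t, z⟩
    constructor
    · rintro ⟨x, hx, hxe⟩
      have hxz : x = i.insertNth t z := by rw [← hsymm, ← hxe]; simp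
      subst hxz
      constructor
      · simpa using hx i
      · intro j; simpa using hx (i.succAbove j)
    · rintro ⟨ht, hz⟩
      refine ⟨i.insertNth t z, ?_, ?_⟩
      · intro j
        refine Fin.succAboveCases i ?_ ?_ j
        · simpa using ht
        · intro k; simpa using hz k
      · rw [show ((t,z) : ℝ × (Fin n → ℝ)) = e (i.insertNth t z) from by rw [← hsymm]; simp]
  rw [himg, Measure.volume_eq_prod, ← Measure.prod_restrict]
  have hFm : Measurable (F ∘ e.symm) := hF.comp e.symm.measurable
  rw [lintegral_prod _ hFm.aemeasurable]
  refine setLIntegral_congr_fun measurableSet_Ioi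
    (fun t _ => ?_)
  refine setLIntegral_congr_fun (orthant_meas n)
    (fun z _ => ?_)
  simp only [Function.comp_apply, hsymm]



lemma swap_lemma (f : ℝ → ℝ≥0∞) (hf : Measurable f) (W : ℝ → ℝ → ℝ≥0∞)
    (hW : Measurable (Function.uncurry W)) :
    ∫⁻ u in Ioi (0:ℝ), ∫⁻ v in Ioi u, f v * W u v
      = ∫⁻ v in Ioi (0:ℝ), f v * ∫⁻ u in Ioo 0 v, W u v := by
  set H : ℝ → ℝ → ℝ≥0∞ := fun u v =>
    Set.indicator {q : ℝ × ℝ | q.1 < q.2} (fun q => f q.2 * W q.1 q.2) (u, v) with hH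
  have hHm : Measurable (Function.uncurry H) := by
    have : Function.uncurry H
        = Set.indicator {q : ℝ × ℝ | q.1 < q.2} (fun q => f q.2 * W q.1 q.2) := by
      ext ⟨u, v⟩; rfl
    rw [this]
    exact Measurable.indicator ((hf.comp measurable_snd).mul hW)
      (measurableSet_lt measurable_fst measurable_snd)
  have step1 : ∀ u : ℝ, ∫⁻ v in Ioi u, f v * W u v = ∫⁻ v, H u v := by
    intro u
    rw [← lintegral_indicator measurableSet_Ioi]
    refine lintegral_congr fun v => ?_
    by_cases h : u < v <;>
      simp [hH, Set.indicator_apply, h, Set.mem_Ioi]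
  have step2 : ∀ v : ℝ, ∫⁻ u in Ioi (0:ℝ), H u v
      = f v * ∫⁻ u in Ioo (0:ℝ) v, W u v := by
    intro v
    have : ∀ u : ℝ, H u v = Set.indicator (Iio v) (fun u => f v * W u v) u := by
      intro u
      by_cases h : u < v <;> simp [hH, Set.indicator_apply, h, Set.mem_Iio]
    simp_rw [this]
    rw [lintegral_indicator measurableSet_Iio, Measure.restrict_restrict measurableSet_Iio]
    rw [show Iio v ∩ Ioi (0:ℝ) = Ioo 0 v from by rw [Set.inter_comm]; exact Set.Ioi_inter_Iio]
    rw [lintegral_const_mul]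
    exact hW.comp (measurable_id.prodMk measurable_const)
  calc ∫⁻ u in Ioi (0:ℝ), ∫⁻ v in Ioi u, f v * W u v
      = ∫⁻ u in Ioi (0:ℝ), ∫⁻ v, H u v := by simp_rw [step1]
    _ = ∫⁻ v, ∫⁻ u in Ioi (0:ℝ), H u v := by
        exact lintegral_lintegral_swap (hHm.aemeasurable)
    _ = ∫⁻ v in Ioi (0:ℝ), f v * ∫⁻ u in Ioo (0:ℝ) v, W u v := by
        simp_rw [step2]
        rw [← lintegral_indicator measurableSet_Ioi]
        refine lintegral_congr fun v => ?_
        by_cases h : 0 < v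
        · simp [Set.indicator_apply, h]
        · simp [Set.indicator_apply, h, Set.Ioo_eq_empty h]



lemma real_beta0 (k : ℕ) (v : ℝ) :
    ∫ u in (0:ℝ)..v, (v - u) ^ k = v ^ (k+1) / (k+1) := by
  rw [intervalIntegral.integral_comp_sub_left (fun x => x ^ k) v]
  simp [integral_pow]

lemma lint_beta0 (k : ℕ) {v : ℝ} (hv : 0 < v) :
    ∫⁻ u in Ioo (0:ℝ) v, ENNReal.ofReal ((v - u) ^ k / k.factorial)
      = ENNReal.ofReal (v ^ (k+1) / (k+1).factorial) := by
  have hcont : Continuous (fun u : ℝ => (v - u) ^ k / k.factorial) := by continuity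
  have hint : IntegrableOn (fun u : ℝ => (v - u) ^ k / k.factorial) (Ioo 0 v) :=
    (hcont.integrableOn_Icc).mono_set Ioo_subset_Icc_self
  have hnn : 0 ≤ᵐ[volume.restrict (Ioo (0:ℝ) v)]
      fun u : ℝ => (v - u) ^ k / k.factorial := by
    refine ae_restrict_of_forall_mem measurableSet_Ioo fun u hu => ?_
    have : 0 ≤ v - u := by linarith [hu.2]
    positivity
  rw [← ofReal_integral_eq_lintegral_ofReal hint hnn]
  congr 1
  rw [← integral_Ioc_eq_integral_Ioo, ← intervalIntegral.integral_of_le hv.le]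
  rw [intervalIntegral.integral_div, real_beta0]
  rw [Nat.factorial_succ]
  push_cast
  have := k.factorial_pos
  have h1 : ((k:ℝ)+1) ≠ 0 := by positivity
  have h2 : ((k.factorial : ℝ)) ≠ 0 := by positivity
  field_simp

lemma real_beta1 (k : ℕ) (v : ℝ) :
    ∫ u in (0:ℝ)..v, u * (v - u) ^ k = v ^ (k+2) / ((k+1) * (k+2)) := by
  have h : ∫ u in (0:ℝ)..v, u * (v - u) ^ k
      = ∫ u in (0:ℝ)..v, (v - (v - u)) * (v - u) ^ k := by
    refine intervalIntegral.integral_congr fun u _ => by ring_nf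
  rw [h, intervalIntegral.integral_comp_sub_left (fun x => (v - x) * x ^ k) v]
  simp only [sub_self, sub_zero]
  have h2 : ∫ x in (0:ℝ)..v, (v - x) * x ^ k
      = (v * ∫ x in (0:ℝ)..v, x ^ k) - ∫ x in (0:ℝ)..v, x ^ (k+1) := by
    rw [← intervalIntegral.integral_const_mul, ← intervalIntegral.integral_sub]
    · exact intervalIntegral.integral_congr fun u _ => by ring
    · exact (intervalIntegral.intervalIntegrable_pow k).const_mul v
    · exact intervalIntegral.intervalIntegrable_pow (k+1)
  rw [h2, integral_pow, integral_pow]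
  have hk1 : ((k:ℝ) + 1) ≠ 0 := by positivity
  have hk2 : ((k:ℝ) + 2) ≠ 0 := by positivity
  push_cast
  field_simp
  ring

lemma lint_beta1 (k : ℕ) {v : ℝ} (hv : 0 < v) :
    ∫⁻ u in Ioo (0:ℝ) v, ENNReal.ofReal u * ENNReal.ofReal ((v - u) ^ k / k.factorial)
      = ENNReal.ofReal (v ^ (k+2) / (k+2).factorial) := by
  have hpt : ∀ u ∈ Ioo (0:ℝ) v,
      ENNReal.ofReal u * ENNReal.ofReal ((v - u) ^ k / k.factorial)
        = ENNReal.ofReal (u * ((v - u) ^ k / k.factorial)) := by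
    intro u hu
    rw [ENNReal.ofReal_mul hu.1.le]
  rw [setLIntegral_congr_fun measurableSet_Ioo hpt]
  have hcont : Continuous (fun u : ℝ => u * ((v - u) ^ k / k.factorial)) := by continuity
  have hint : IntegrableOn (fun u : ℝ => u * ((v - u) ^ k / k.factorial)) (Ioo 0 v) :=
    (hcont.integrableOn_Icc).mono_set Ioo_subset_Icc_self
  have hnn : 0 ≤ᵐ[volume.restrict (Ioo (0:ℝ) v)]
      fun u : ℝ => u * ((v - u) ^ k / k.factorial) := by
    refine ae_restrict_of_forall_mem measurableSet_Ioo fun u hu => ?_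
    have h1 : 0 ≤ v - u := by linarith [hu.2]
    have h2 : 0 ≤ u := hu.1.le
    positivity
  rw [← ofReal_integral_eq_lintegral_ofReal hint hnn]
  congr 1
  rw [← integral_Ioc_eq_integral_Ioo, ← intervalIntegral.integral_of_le hv.le]
  have : ∫ u in (0:ℝ)..v, u * ((v - u) ^ k / k.factorial)
      = (∫ u in (0:ℝ)..v, u * (v - u) ^ k) / k.factorial := by
    rw [← intervalIntegral.integral_div]
    exact intervalIntegral.integral_congr fun u _ => by ring
  rw [this, real_beta1]
  have hf0 : (k+2).factorial = (k+2) * ((k+1) * k.factorial) := by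
    rw [Nat.factorial_succ, Nat.factorial_succ]
  rw [hf0]
  push_cast
  have := k.factorial_pos
  have h1 : ((k:ℝ)+1) ≠ 0 := by positivity
  have h2 : ((k:ℝ)+2) ≠ 0 := by positivity
  have h3 : ((k.factorial : ℝ)) ≠ 0 := by positivity
  field_simp


lemma measurable_sumc {m : ℕ} (c : Fin m → ℝ) :
    Measurable (fun x : Fin m → ℝ => ∑ j, c j * x j) :=
  Finset.measurable_sum _ fun j _ => measurable_const.mul (measurable_pi_apply j)

lemma measurable_W (n : ℕ) :
    Measurable (Function.uncurry fun u v : ℝ =>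
      ENNReal.ofReal ((v - u) ^ n / n.factorial)) := by
  apply ENNReal.measurable_ofReal.comp
  exact ((measurable_snd.sub measurable_fst).pow_const n).div_const _

lemma measurable_g (n : ℕ) (f : ℝ → ℝ≥0∞) (hf : Measurable f) :
    Measurable (fun u : ℝ =>
      ∫⁻ v in Ioi u, f v * ENNReal.ofReal ((v - u) ^ n / n.factorial)) := by
  have heq : ∀ u : ℝ, (∫⁻ v in Ioi u, f v * ENNReal.ofReal ((v - u) ^ n / n.factorial))
      = ∫⁻ v, Set.indicator {q : ℝ × ℝ | q.1 < q.2}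
          (fun q => f q.2 * ENNReal.ofReal ((q.2 - q.1) ^ n / n.factorial)) (u, v) := by
    intro u
    rw [← lintegral_indicator measurableSet_Ioi]
    refine lintegral_congr fun v => ?_
    by_cases h : u < v <;> simp [Set.indicator_apply, h, Set.mem_Ioi]
  simp_rw [heq]
  apply Measurable.lintegral_prod_right
  exact Measurable.indicator
    ((hf.comp measurable_snd).mul (measurable_W n))
    (measurableSet_lt measurable_fst measurable_snd)

lemma L : ∀ (n : ℕ) (c : Fin (n+1) → ℝ), (∀ j, 0 < c j) → ∀ (f : ℝ → ℝ≥0∞), Measurable f →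
    ∫⁻ x in {x : Fin (n+1) → ℝ | ∀ j, 0 < x j}, f (∑ j, c j * x j)
      = (∏ j, ENNReal.ofReal (c j))⁻¹ *
        ∫⁻ s in Ioi (0:ℝ), f s * ENNReal.ofReal (s ^ n / n.factorial) := by
  intro n
  induction n with
  | zero =>
    intro c hc f hf
    rw [split 0 0 (fun x => f (∑ j : Fin (0+1), c j * x j)) (hf.comp (measurable_sumc c))]
    have h1 : ∀ (t : ℝ) (z : Fin 0 → ℝ),
        (∑ j : Fin (0+1), c j * (Fin.insertNth (α := fun _ => ℝ) 0 t z) j) = c 0 * t := by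
      intro t z
      simp [Fin.sum_univ_one, Fin.insertNth_apply_same]
    have h2 : {z : Fin 0 → ℝ | ∀ j, 0 < z j} = univ := by
      ext z; simp [Fin.elim0]
    calc ∫⁻ t in Ioi (0:ℝ), ∫⁻ z in {z : Fin 0 → ℝ | ∀ j, 0 < z j},
            f (∑ j : Fin (0+1), c j * (Fin.insertNth (α := fun _ => ℝ) 0 t z) j)
        = ∫⁻ t in Ioi (0:ℝ), f (c 0 * t) := by
          refine setLIntegral_congr_fun measurableSet_Ioi
            (fun t _ => ?_)
          simp_rw [h1, h2]
          simp [lintegral_const, volume_pi, Measure.pi_univ]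
      _ = ENNReal.ofReal (c 0)⁻¹ * ∫⁻ s in Ioi (0:ℝ), f s :=
          lint_scale f hf (hc 0)
      _ = (∏ j, ENNReal.ofReal (c j))⁻¹ *
            ∫⁻ s in Ioi (0:ℝ), f s * ENNReal.ofReal (s ^ 0 / Nat.factorial 0) := by
          rw [Fin.prod_univ_one, ← ENNReal.ofReal_inv_of_pos (hc 0)]
          congr 1
          refine setLIntegral_congr_fun measurableSet_Ioi
            (fun s _ => ?_)
          norm_num
  | succ n ih =>
    intro c hc f hf
    set c' : Fin (n+1) → ℝ := fun k => c ((0 : Fin (n+1+1)).succAbove k) with hc'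
    have hc'pos : ∀ k, 0 < c' k := fun k => hc _
    rw [split (n+1) 0 (fun x => f (∑ j : Fin (n+1+1), c j * x j)) (hf.comp (measurable_sumc c))]
    have h1 : ∀ (t : ℝ) (z : Fin (n+1) → ℝ),
        (∑ j : Fin (n+1+1), c j * (Fin.insertNth (α := fun _ => ℝ) 0 t z) j)
          = c 0 * t + ∑ k, c' k * z k := by
      intro t z
      rw [Fin.sum_univ_succAbove (fun j => c j * (Fin.insertNth (α := fun _ => ℝ) 0 t z) j) 0]
      simp [hc', Fin.insertNth_apply_same, Fin.insertNth_apply_succAbove]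
    have step1 : ∫⁻ t in Ioi (0:ℝ), ∫⁻ z in {z : Fin (n+1) → ℝ | ∀ j, 0 < z j},
            f (∑ j : Fin (n+1+1), c j * (Fin.insertNth (α := fun _ => ℝ) 0 t z) j)
        = ∫⁻ t in Ioi (0:ℝ), (∏ k, ENNReal.ofReal (c' k))⁻¹ *
            ∫⁻ v in Ioi (c 0 * t), f v *
              ENNReal.ofReal ((v - c 0 * t) ^ n / n.factorial) := by
      refine setLIntegral_congr_fun measurableSet_Ioi
        (fun t _ => ?_)
      simp_rw [h1]
      rw [ih c' hc'pos (fun s => f (c 0 * t + s))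
        (hf.comp (measurable_const.add measurable_id))]
      congr 1
      have := lint_shift (fun v => f v *
        ENNReal.ofReal ((v - c 0 * t) ^ n / n.factorial)) (c 0 * t)
      rw [← this]
      refine setLIntegral_congr_fun measurableSet_Ioi
        (fun s _ => ?_)
      simp [add_sub_cancel_left]
    rw [step1]
    rw [lintegral_const_mul' _ _ (by
      simp only [ne_eq, ENNReal.inv_eq_top]
      intro hzero
      rw [Finset.prod_eq_zero_iff] at hzero
      obtain ⟨k, _, hk⟩ := hzero
      exact absurd hk (by simp [ENNReal.ofReal_eq_zero, not_le, hc'pos k]))]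
    have hscale := lint_scale (fun u => ∫⁻ v in Ioi u, f v *
        ENNReal.ofReal ((v - u) ^ n / n.factorial)) (measurable_g n f hf) (hc 0)
    rw [hscale]
    rw [swap_lemma f hf _ (measurable_W n)]
    have hbeta : ∫⁻ v in Ioi (0:ℝ), f v * ∫⁻ u in Ioo (0:ℝ) v,
          ENNReal.ofReal ((v - u) ^ n / n.factorial)
        = ∫⁻ s in Ioi (0:ℝ), f s * ENNReal.ofReal (s ^ (n+1) / (n+1).factorial) := by
      refine setLIntegral_congr_fun measurableSet_Ioi
        (fun v hv => ?_)
      rw [lint_beta0 n hv]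
    rw [hbeta]
    rw [Fin.prod_univ_succAbove (fun j => ENNReal.ofReal (c j)) 0]
    rw [ENNReal.mul_inv (Or.inl (by simp [ENNReal.ofReal_eq_zero, not_le, hc 0]))
      (Or.inl ENNReal.ofReal_ne_top)]
    rw [ENNReal.ofReal_inv_of_pos (hc 0)]
    ring

lemma L2 (n : ℕ) (c : Fin (n+1+1) → ℝ) (hc : ∀ j, 0 < c j) (f : ℝ → ℝ≥0∞)
    (hf : Measurable f) (i : Fin (n+1+1)) :
    ∫⁻ x in {x : Fin (n+1+1) → ℝ | ∀ j, 0 < x j},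
        ENNReal.ofReal (x i) * f (∑ j, c j * x j)
      = ENNReal.ofReal (c i)⁻¹ * (∏ j, ENNReal.ofReal (c j))⁻¹ *
        ∫⁻ s in Ioi (0:ℝ), f s * ENNReal.ofReal (s ^ (n+2) / (n+2).factorial) := by
  have hFm : Measurable (fun x : Fin (n+1+1) → ℝ =>
      ENNReal.ofReal (x i) * f (∑ j, c j * x j)) :=
    (ENNReal.measurable_ofReal.comp (measurable_pi_apply i)).mul
      (hf.comp (measurable_sumc c))
  rw [split (n+1) i (fun x => ENNReal.ofReal (x i) * f (∑ j : Fin (n+1+1), c j * x j)) hFm]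
  set c' : Fin (n+1) → ℝ := fun k => c (i.succAbove k) with hc'
  have hc'pos : ∀ k, 0 < c' k := fun k => hc _
  have hc'prod_ne_top : (∏ k, ENNReal.ofReal (c' k))⁻¹ ≠ ⊤ := by
    simp only [ne_eq, ENNReal.inv_eq_top]
    intro hzero
    rw [Finset.prod_eq_zero_iff] at hzero
    obtain ⟨k, _, hk⟩ := hzero
    exact absurd hk (by simp [ENNReal.ofReal_eq_zero, not_le, hc'pos k])
  have h1 : ∀ (t : ℝ) (z : Fin (n+1) → ℝ),
      (∑ j : Fin (n+1+1), c j * (Fin.insertNth (α := fun _ => ℝ) i t z) j)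
        = c i * t + ∑ k, c' k * z k := by
    intro t z
    rw [Fin.sum_univ_succAbove (fun j => c j * (Fin.insertNth (α := fun _ => ℝ) i t z) j) i]
    simp [hc', Fin.insertNth_apply_same, Fin.insertNth_apply_succAbove]
  have step1 : ∫⁻ t in Ioi (0:ℝ), ∫⁻ z in {z : Fin (n+1) → ℝ | ∀ j, 0 < z j},
          ENNReal.ofReal ((Fin.insertNth (α := fun _ => ℝ) i t z) i) *
            f (∑ j : Fin (n+1+1), c j * (Fin.insertNth (α := fun _ => ℝ) i t z) j)
      = ∫⁻ t in Ioi (0:ℝ), (∏ k, ENNReal.ofReal (c' k))⁻¹ *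
          (ENNReal.ofReal t * ∫⁻ v in Ioi (c i * t), f v *
            ENNReal.ofReal ((v - c i * t) ^ n / n.factorial)) := by
    refine setLIntegral_congr_fun measurableSet_Ioi
      (fun t _ => ?_)
    simp_rw [h1, Fin.insertNth_apply_same]
    rw [lintegral_const_mul' _ _ ENNReal.ofReal_ne_top]
    rw [L n c' hc'pos (fun s => f (c i * t + s))
      (hf.comp (measurable_const.add measurable_id))]
    have hshift := lint_shift (fun v => f v *
      ENNReal.ofReal ((v - c i * t) ^ n / n.factorial)) (c i * t)
    have : ∫⁻ s in Ioi (0:ℝ), f (c i * t + s) * ENNReal.ofReal (s ^ n / n.factorial)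
        = ∫⁻ v in Ioi (c i * t), f v * ENNReal.ofReal ((v - c i * t) ^ n / n.factorial) := by
      rw [← hshift]
      refine setLIntegral_congr_fun measurableSet_Ioi
        (fun s _ => ?_)
      simp [add_sub_cancel_left]
    rw [this]
    ring
  rw [step1, lintegral_const_mul' _ _ hc'prod_ne_top]
  have hg : Measurable (fun u : ℝ => ENNReal.ofReal ((c i)⁻¹ * u) *
      ∫⁻ v in Ioi u, f v * ENNReal.ofReal ((v - u) ^ n / n.factorial)) :=
    (ENNReal.measurable_ofReal.comp (measurable_id.const_mul _)).mul (measurable_g n f hf)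
  have hsc : ∀ t : ℝ, ENNReal.ofReal t * ∫⁻ v in Ioi (c i * t), f v *
        ENNReal.ofReal ((v - c i * t) ^ n / n.factorial)
      = (fun u : ℝ => ENNReal.ofReal ((c i)⁻¹ * u) *
          ∫⁻ v in Ioi u, f v * ENNReal.ofReal ((v - u) ^ n / n.factorial)) (c i * t) := by
    intro t
    simp only []
    rw [inv_mul_cancel_left₀ (ne_of_gt (hc i))]
  simp_rw [hsc]
  rw [lint_scale _ hg (hc i)]
  have hrest : ∫⁻ u in Ioi (0:ℝ), ENNReal.ofReal ((c i)⁻¹ * u) *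
        ∫⁻ v in Ioi u, f v * ENNReal.ofReal ((v - u) ^ n / n.factorial)
      = ENNReal.ofReal (c i)⁻¹ *
        ∫⁻ u in Ioi (0:ℝ), ∫⁻ v in Ioi u, f v *
          (ENNReal.ofReal u * ENNReal.ofReal ((v - u) ^ n / n.factorial)) := by
    rw [← lintegral_const_mul' _ _ (ENNReal.ofReal_ne_top (r := (c i)⁻¹))]
    refine setLIntegral_congr_fun measurableSet_Ioi
      (fun u hu => ?_)
    rw [ENNReal.ofReal_mul (le_of_lt (inv_pos.mpr (hc i))), mul_assoc]
    congr 1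
    rw [← lintegral_const_mul' (ENNReal.ofReal u) _ (ENNReal.ofReal_ne_top (r := u))]
    refine setLIntegral_congr_fun measurableSet_Ioi
      (fun v _ => ?_)
    ring
  rw [hrest]
  have hWW : Measurable (Function.uncurry fun u v : ℝ =>
      ENNReal.ofReal u * ENNReal.ofReal ((v - u) ^ n / n.factorial)) := by
    have huneq : (Function.uncurry fun u v : ℝ =>
        ENNReal.ofReal u * ENNReal.ofReal ((v - u) ^ n / n.factorial))
        = fun q : ℝ × ℝ => ENNReal.ofReal q.1 *
            ENNReal.ofReal ((q.2 - q.1) ^ n / n.factorial) := rfl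
    rw [huneq]
    exact (ENNReal.measurable_ofReal.comp measurable_fst).mul
      (ENNReal.measurable_ofReal.comp
        (((measurable_snd.sub measurable_fst).pow_const n).div_const _))
  rw [swap_lemma f hf _ hWW]
  have hbeta : ∫⁻ v in Ioi (0:ℝ), f v * ∫⁻ u in Ioo (0:ℝ) v,
        ENNReal.ofReal u * ENNReal.ofReal ((v - u) ^ n / n.factorial)
      = ∫⁻ s in Ioi (0:ℝ), f s * ENNReal.ofReal (s ^ (n+2) / (n+2).factorial) := by
    refine setLIntegral_congr_fun measurableSet_Ioi
      (fun v hv => ?_)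
    rw [lint_beta1 n hv]
  rw [hbeta]
  rw [Fin.prod_univ_succAbove (fun j => ENNReal.ofReal (c j)) i]
  rw [ENNReal.mul_inv (Or.inl (by simp [ENNReal.ofReal_eq_zero, not_le, hc i]))
    (Or.inl ENNReal.ofReal_ne_top)]
  rw [ENNReal.ofReal_inv_of_pos (hc i)]
  ring

lemma prod_c_eq {n : ℕ} (C : Fin (n+1) → ℝ) :
    (∏ j, (Fin.snoc C 1 : Fin (n+1+1) → ℝ) j) = ∏ l, C l := by
  rw [Fin.prod_univ_castSucc (f := fun j => (Fin.snoc C 1 : Fin (n+1+1) → ℝ) j)]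
  simp [Fin.snoc_castSucc, Fin.snoc_last]

theorem key (n : ℕ) (a b : ℝ) (ha : -((n+1 : ℕ) + 1 : ℝ) < a) (hb : 0 < b)
    (C : Fin (n+1) → ℝ) (hC : ∀ l, 0 < C l) (idx : Fin (n+1+1)) :
    (∫ x : Fin (n + 1 + 1) → ℝ in {x | ∀ j, 0 < x j},
        x idx *
          ((((n+1).factorial : ℝ) * b ^ (a + (n+1:ℕ) + 1) * (∏ l, C l) / Real.Gamma (a + (n+1:ℕ) + 1)) *
            ((∑ l : Fin (n+1), C l * x l.castSucc + x (Fin.last (n+1))) ^ a *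
              Real.exp (-b * (∑ l : Fin (n+1), C l * x l.castSucc + x (Fin.last (n+1)))))))
      = (a + (n+1:ℕ) + 1) / (((n+1:ℕ) + 1) * (Fin.snoc C 1 : Fin (n+1+1) → ℝ) idx * b) := by
  set q : ℝ := a + (n+1:ℕ) + 1 with hq_def
  have hqpos : 0 < q := by
    have : -((n+1 : ℕ) + 1 : ℝ) < a := ha
    simp only [hq_def]
    linarith
  have hq1 : (-1 : ℝ) < q - 1 + 1 := by linarith
  set c : Fin (n+1+1) → ℝ := Fin.snoc C 1 with hc_def
  have hcpos : ∀ j, 0 < c j := by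
    intro j
    refine Fin.lastCases ?_ ?_ j
    · simp [hc_def, Fin.snoc_last]
    · intro l
      simpa [hc_def, Fin.snoc_castSucc] using hC l
  set K : ℝ := ((n+1).factorial : ℝ) * b ^ q * (∏ l, C l) / Real.Gamma q with hK_def
  have hprodC : 0 < ∏ l, C l := Finset.prod_pos fun l _ => hC l
  have hGamma : 0 < Real.Gamma q := Real.Gamma_pos_of_pos hqpos
  have hbq : 0 < b ^ q := Real.rpow_pos_of_pos hb q
  have hK : 0 ≤ K := by
    rw [hK_def]
    exact div_nonneg (mul_nonneg (mul_nonneg (Nat.cast_nonneg _) hbq.le) hprodC.le) hGamma.le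
  set S : (Fin (n+1+1) → ℝ) → ℝ :=
    fun x => ∑ l : Fin (n+1), C l * x l.castSucc + x (Fin.last (n+1)) with hS_def
  have hsum : ∀ x : Fin (n+1+1) → ℝ, S x = ∑ j, c j * x j := by
    intro x
    rw [Fin.sum_univ_castSucc (f := fun j => c j * x j)]
    simp [hc_def, hS_def, Fin.snoc_castSucc, Fin.snoc_last]
  have hSpos : ∀ x : Fin (n+1+1) → ℝ, (∀ j, 0 < x j) → 0 < S x := by
    intro x hx
    exact add_pos_of_nonneg_of_pos
      (Finset.sum_nonneg fun l _ => (mul_pos (hC l) (hx _)).le) (hx _)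
  set f : ℝ → ℝ≥0∞ :=
    fun s => ENNReal.ofReal (Real.exp (Real.log s * a) * Real.exp (-b * s)) with hf_def
  have hfm : Measurable f :=
    ENNReal.measurable_ofReal.comp
      (((Real.measurable_log.mul_const a).exp).mul ((measurable_id.const_mul (-b)).exp))
  have hfeq : ∀ s : ℝ, 0 < s → f s = ENNReal.ofReal (s ^ a * Real.exp (-b * s)) := by
    intro s hs
    rw [hf_def, Real.rpow_def_of_pos hs]
  set G : (Fin (n+1+1) → ℝ) → ℝ :=
    fun x => x idx * (K * (S x ^ a * Real.exp (-b * S x))) with hG_def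
  have hGnn : 0 ≤ᵐ[volume.restrict {x : Fin (n+1+1) → ℝ | ∀ j, 0 < x j}] G := by
    refine ae_restrict_of_forall_mem (orthant_meas (n+1+1)) fun x hx => ?_
    have h1 := hSpos x hx
    exact mul_nonneg (hx idx).le (mul_nonneg hK (mul_nonneg
      (Real.rpow_nonneg h1.le a) (Real.exp_nonneg _)))
  have hGm : AEStronglyMeasurable G
      (volume.restrict {x : Fin (n+1+1) → ℝ | ∀ j, 0 < x j}) := by
    have hG'm : Measurable (fun x : Fin (n+1+1) → ℝ =>
        x idx * (K * (Real.exp (Real.log (S x) * a) * Real.exp (-b * S x)))) := by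
      have hSm : Measurable S := by
        refine Measurable.add ?_ (measurable_pi_apply _)
        exact Finset.measurable_sum _ fun l _ =>
          measurable_const.mul (measurable_pi_apply _)
      exact (measurable_pi_apply idx).mul (measurable_const.mul
        (((hSm.log.mul_const a).exp).mul ((hSm.const_mul (-b)).exp)))
    refine hG'm.aestronglyMeasurable.congr ?_
    refine ae_restrict_of_forall_mem (orthant_meas (n+1+1)) fun x hx => ?_
    rw [hG_def]
    simp only []
    rw [Real.rpow_def_of_pos (hSpos x hx)]
  have hbochner : ∫ x : Fin (n+1+1) → ℝ in {x | ∀ j, 0 < x j}, G x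
      = (∫⁻ x in {x : Fin (n+1+1) → ℝ | ∀ j, 0 < x j}, ENNReal.ofReal (G x)).toReal :=
    integral_eq_lintegral_of_nonneg_ae hGnn hGm
  have hlin : ∫⁻ x in {x : Fin (n+1+1) → ℝ | ∀ j, 0 < x j}, ENNReal.ofReal (G x)
      = ENNReal.ofReal K * ∫⁻ x in {x : Fin (n+1+1) → ℝ | ∀ j, 0 < x j},
          ENNReal.ofReal (x idx) * f (∑ j, c j * x j) := by
    rw [← lintegral_const_mul' _ _ ENNReal.ofReal_ne_top]
    refine setLIntegral_congr_fun (orthant_meas (n+1+1))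
      (fun x hx => ?_)
    have h1 := hSpos x hx
    rw [← hsum x, hfeq (S x) h1, hG_def]
    simp only []
    rw [ENNReal.ofReal_mul (hx idx).le, ENNReal.ofReal_mul hK]
    ring
  have hGam : ∫⁻ s in Ioi (0:ℝ), f s * ENNReal.ofReal (s ^ (n+2) / (n+2).factorial)
      = ENNReal.ofReal (Real.Gamma (q+1) * b ^ (-(q+1)) / (n+2).factorial) := by
    have hpt : ∀ s ∈ Ioi (0:ℝ), f s * ENNReal.ofReal (s ^ (n+2) / (n+2).factorial)
        = ENNReal.ofReal ((s ^ q * Real.exp (-b * s)) * ((n+2).factorial : ℝ)⁻¹) := by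
      intro s hs
      have hs' : (0:ℝ) < s := hs
      rw [hfeq s hs', ← ENNReal.ofReal_mul
        (mul_nonneg (Real.rpow_nonneg hs'.le a) (Real.exp_nonneg _))]
      congr 1
      have hpow : (s : ℝ) ^ (n+2) = s ^ ((n+2 : ℕ) : ℝ) := (Real.rpow_natCast s (n+2)).symm
      have : s ^ a * s ^ ((n+2 : ℕ) : ℝ) = s ^ q := by
        rw [← Real.rpow_add hs']
        congr 1
        rw [hq_def]
        push_cast
        ring
      rw [hpow, div_eq_mul_inv, ← this]
      ring
    rw [setLIntegral_congr_fun measurableSet_Ioi hpt]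
    have hint : IntegrableOn (fun s : ℝ => s ^ q * Real.exp (-b * s) *
        (((n+2).factorial : ℝ))⁻¹) (Ioi 0) := by
      refine Integrable.mul_const ?_ _
      have := integrableOn_rpow_mul_exp_neg_mul_rpow (s := q) (p := 1)
        (by linarith) one_pos hb
      refine this.congr_fun (fun x hx => ?_) measurableSet_Ioi
      simp only [Real.rpow_one]
    have hnn : 0 ≤ᵐ[volume.restrict (Ioi (0:ℝ))]
        fun s : ℝ => s ^ q * Real.exp (-b * s) * (((n+2).factorial : ℝ))⁻¹ := by
      refine ae_restrict_of_forall_mem measurableSet_Ioi fun s hs => ?_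
      have : (0:ℝ) < s := hs
      positivity
    rw [← ofReal_integral_eq_lintegral_ofReal hint hnn]
    congr 1
    rw [MeasureTheory.integral_mul_const]
    have hval : ∫ s in Ioi (0:ℝ), s ^ q * Real.exp (-b * s)
        = Real.Gamma (q+1) * b ^ (-(q+1)) := by
      have := integral_rpow_mul_exp_neg_mul_rpow (p := 1) (q := q) one_pos
        (by linarith) hb
      simp only [Real.rpow_one, div_one, one_mul, mul_one] at this
      rw [this]
      ring
    rw [hval]
    field_simp
  have hmain := L2 n c hcpos f hfm idx
  rw [hbochner, hlin, hmain, hGam]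
  have hprodc' : (∏ j, ENNReal.ofReal (c j)) = ENNReal.ofReal (∏ l, C l) := by
    rw [← ENNReal.ofReal_prod_of_nonneg (fun j _ => (hcpos j).le)]
    congr 1
    exact prod_c_eq C
  rw [hprodc', ← ENNReal.ofReal_inv_of_pos hprodC]
  rw [← ENNReal.ofReal_mul (inv_nonneg.mpr (hcpos idx).le)]
  rw [← ENNReal.ofReal_mul (mul_nonneg (inv_nonneg.mpr (hcpos idx).le)
    (inv_nonneg.mpr hprodC.le))]
  rw [← ENNReal.ofReal_mul hK]
  rw [ENNReal.toReal_ofReal (by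
    have h1 : 0 ≤ Real.Gamma (q+1) := (Real.Gamma_pos_of_pos (by linarith)).le
    have h2 : 0 ≤ b ^ (-(q+1)) := (Real.rpow_pos_of_pos hb _).le
    have h3 : (0:ℝ) < ((n+2).factorial : ℝ) := by positivity
    exact mul_nonneg hK (mul_nonneg (mul_nonneg (inv_nonneg.mpr (hcpos idx).le)
      (inv_nonneg.mpr hprodC.le)) (div_nonneg (mul_nonneg h1 h2) h3.le)))]
  -- final real arithmetic
  have hGadd : Real.Gamma (q+1) = q * Real.Gamma q := Real.Gamma_add_one (ne_of_gt hqpos)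
  have hbneg : b ^ (-(q+1)) = (b ^ q * b)⁻¹ := by
    rw [Real.rpow_neg hb.le, Real.rpow_add_one (ne_of_gt hb)]
  rw [hK_def, hGadd, hbneg]
  have hfac : ((n+2).factorial : ℝ) = ((n+2 : ℕ) : ℝ) * ((n+1).factorial : ℝ) := by
    rw [show (n+2) = (n+1)+1 from rfl, Nat.factorial_succ]
    push_cast
    ring
  rw [hfac]
  have hcidx : (0:ℝ) < c idx := hcpos idx
  have hfacpos : (0:ℝ) < ((n+1).factorial : ℝ) := by positivity
  have hn2 : (0:ℝ) < ((n+2:ℕ) : ℝ) := by positivity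
  have htarget : ((n+1:ℕ) : ℝ) + 1 = ((n+2:ℕ) : ℝ) := by push_cast; ring
  rw [htarget]
  field_simp

end JR

end JRhelpers

open MeasureTheory Real Finset

/-- Prior mean of each `β_i` and of `η` under the jointly robust prior with density
`C (∑ C_l β_l + η)^a exp(-b(∑ C_l β_l + η))` on the positive orthant of `ℝ^{p+1}`,
with normalizing constant `C = p! b^{a+p+1} ∏ C_l / Γ(a+p+1)`. -/
theorem jr_prior_mean
    (p : ℕ) (hp : 1 ≤ p) (a b : ℝ) (ha : -(p + 1 : ℝ) < a) (hb : 0 < b)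
    (C : Fin p → ℝ) (hC : ∀ l, 0 < C l) :
    (∀ i : Fin p,
      (∫ x : Fin (p + 1) → ℝ in {x | ∀ j, 0 < x j},
          x i.castSucc *
            (((p.factorial : ℝ) * b ^ (a + p + 1) * (∏ l, C l) / Real.Gamma (a + p + 1)) *
              ((∑ l : Fin p, C l * x l.castSucc + x (Fin.last p)) ^ a *
                Real.exp (-b * (∑ l : Fin p, C l * x l.castSucc + x (Fin.last p))))))
        = (a + p + 1) / ((p + 1) * C i * b)) ∧
    (∫ x : Fin (p + 1) → ℝ in {x | ∀ j, 0 < x j},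
        x (Fin.last p) *
          (((p.factorial : ℝ) * b ^ (a + p + 1) * (∏ l, C l) / Real.Gamma (a + p + 1)) *
            ((∑ l : Fin p, C l * x l.castSucc + x (Fin.last p)) ^ a *
              Real.exp (-b * (∑ l : Fin p, C l * x l.castSucc + x (Fin.last p))))))
      = (a + p + 1) / ((p + 1) * b) := by
  obtain ⟨n, rfl⟩ : ∃ n, p = n + 1 := ⟨p - 1, (Nat.succ_pred_eq_of_pos hp).symm⟩
  constructor
  · intro i
    have h := JR.key n a b ha hb C hC i.castSucc
    rw [h]
    congr 2
    simp [Fin.snoc_castSucc]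
  · have h := JR.key n a b ha hb C hC (Fin.last (n+1))
    rw [h]
    rw [show (Fin.snoc C 1 : Fin (n+1+1) → ℝ) (Fin.last (n+1)) = 1 from by
      simp [Fin.snoc_last]]
    rw [mul_one]
end

section
/- For the jointly robust prior density, the second moment of β_i equals 2(a+p+2)(a+p+1) / ((p+1)(p+2) C_i^2 b^2) for each i = 1,…,p. -/
open MeasureTheory Real Set
open scoped ENNReal

lemma lint_scale (g : ℝ → ℝ≥0∞) (hg : Measurable g) {c : ℝ} (hc : 0 < c) :
    ∫⁻ t in Ioi (0:ℝ), g (c * t) = ENNReal.ofReal c⁻¹ * ∫⁻ s in Ioi (0:ℝ), g s := by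
  have hmap : Measure.map (c * ·) volume = ENNReal.ofReal |c⁻¹| • volume :=
    Real.map_volume_mul_left (ne_of_gt hc)
  have hpre : (c * ·) ⁻¹' (Ioi (0:ℝ)) = Ioi 0 := by
    ext t; simp [mem_Ioi, mul_pos_iff_of_pos_left hc]
  rw [show (∫⁻ t in Ioi (0:ℝ), g (c * t)) =
      ∫⁻ t in (c * ·) ⁻¹' (Ioi (0:ℝ)), g (c * t) by rw [hpre],
    ← setLIntegral_map measurableSet_Ioi hg (measurable_const_mul c), hmap,
    Measure.restrict_smul, lintegral_smul_measure, abs_of_pos (inv_pos.mpr hc), smul_eq_mul]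

lemma lint_shift (g : ℝ → ℝ≥0∞) (hg : Measurable g) (r : ℝ) :
    ∫⁻ s in Ioi (0:ℝ), g (r + s) = ∫⁻ u in Ioi r, g u := by
  have hmap : Measure.map (r + ·) volume = volume := map_add_left_eq_self volume r
  have hpre : (r + ·) ⁻¹' (Ioi r) = Ioi 0 := by
    ext t; simp [mem_Ioi]
  rw [show (∫⁻ s in Ioi (0:ℝ), g (r + s)) =
      ∫⁻ s in (r + ·) ⁻¹' (Ioi r), g (r + s) by rw [hpre],
    ← setLIntegral_map measurableSet_Ioi hg (measurable_const_add r), hmap]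

lemma measS (m : ℕ) : MeasurableSet {x : Fin m → ℝ | ∀ j, 0 < x j} := by
  have h : {x : Fin m → ℝ | ∀ j, 0 < x j} = ⋂ j, {x | 0 < x j} := by ext; simp
  rw [h]
  exact MeasurableSet.iInter fun j => measurableSet_lt measurable_const (measurable_pi_apply j)

lemma lint_Ioi_indic (H : ℝ → ℝ≥0∞) {r : ℝ} (hr : 0 ≤ r) :
    ∫⁻ u in Ioi r, H u = ∫⁻ u in Ioi (0:ℝ), {u : ℝ | r < u}.indicator H u := by
  have hs : MeasurableSet {u : ℝ | r < u} := measurableSet_Ioi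
  rw [lintegral_indicator hs, Measure.restrict_restrict hs,
    show {u : ℝ | r < u} ∩ Ioi 0 = Ioi r from inter_eq_left.mpr (Ioi_subset_Ioi hr)]

lemma Jint (k : ℕ) {u c : ℝ} (hc : c ≠ 0) :
    ∫ t in (0:ℝ)..(u/c), (u - c*t)^k = u^(k+1) / (c*(k+1)) := by
  rw [intervalIntegral.integral_comp_sub_mul (fun y => y^k) hc u]
  rw [mul_div_cancel₀ _ hc, sub_self, mul_zero, sub_zero, integral_pow]
  simp only [smul_eq_mul]
  have : ((k:ℝ)+1) ≠ 0 := by positivity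
  rw [zero_pow (by omega)]
  push_cast
  field_simp
  ring

lemma lint_indic (F : ℝ → ℝ) (hF : Continuous F) {u c : ℝ} (hu : 0 < u) (hc : 0 < c)
    (hnn : ∀ t ∈ Ioo (0:ℝ) (u/c), 0 ≤ F t) :
    ∫⁻ t in Ioi (0:ℝ), {t : ℝ | c*t < u}.indicator (fun t => ENNReal.ofReal (F t)) t
      = ENNReal.ofReal (∫ t in (0:ℝ)..(u/c), F t) := by
  have hset : MeasurableSet {t : ℝ | c*t < u} :=
    measurableSet_lt (by fun_prop) measurable_const
  rw [lintegral_indicator hset, Measure.restrict_restrict hset]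
  have hIoo : {t : ℝ | c*t < u} ∩ Ioi 0 = Ioo 0 (u/c) := by
    ext t; simp only [mem_inter_iff, mem_setOf_eq, mem_Ioi, mem_Ioo, lt_div_iff₀ hc]
    constructor
    · rintro ⟨h1, h2⟩; exact ⟨h2, by linarith [mul_comm c t]⟩
    · rintro ⟨h1, h2⟩; exact ⟨by linarith [mul_comm t c], h1⟩
  rw [hIoo, ← ofReal_integral_eq_lintegral_ofReal
      ((hF.integrableOn_Icc).mono_set Ioo_subset_Icc_self)
      (ae_restrict_of_forall_mem measurableSet_Ioo hnn),
    intervalIntegral.integral_of_le (by positivity), integral_Ioc_eq_integral_Ioo]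

lemma betaA' (k : ℕ) {u c : ℝ} (hu : 0 < u) (hc : 0 < c) :
    ∫⁻ t in Ioi (0:ℝ), {t : ℝ | c*t < u}.indicator
        (fun t => ENNReal.ofReal (1 * ((u - c*t)^k / k.factorial))) t
      = ENNReal.ofReal (u^(k+1) / (c * (k+1).factorial)) := by
  rw [lint_indic _ (by continuity) hu hc ?_]
  · congr 1
    simp only [one_mul]
    rw [intervalIntegral.integral_div, Jint k (ne_of_gt hc)]
    have h1 : ((k:ℝ)+1) ≠ 0 := by positivity
    have h2 : ((k.factorial:ℕ):ℝ) ≠ 0 := Nat.cast_ne_zero.mpr (Nat.factorial_ne_zero _)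
    rw [Nat.factorial_succ]
    push_cast
    field_simp
  · intro t ht
    have h1 : c*t < u := by rw [mul_comm]; exact (lt_div_iff₀ hc).mp ht.2
    have h2 : (0:ℝ) ≤ u - c*t := by linarith
    positivity

lemma JB (k : ℕ) {u c : ℝ} (hc : 0 < c) :
    ∫ t in (0:ℝ)..(u/c), t^2 * (u - c*t)^k
      = 2*u^(k+3) / (c^3*(((k:ℝ)+1)*((k:ℝ)+2)*((k:ℝ)+3))) := by
  have hid : ∀ t : ℝ, t^2*(u-c*t)^k
      = (u^2*(u-c*t)^k - 2*u*(u-c*t)^(k+1) + (u-c*t)^(k+2))/c^2 := by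
    intro t
    field_simp
    ring
  rw [intervalIntegral.integral_congr (fun t _ => hid t)]
  have i1 : IntervalIntegrable (fun t : ℝ => u^2*(u-c*t)^k) volume 0 (u/c) :=
    (Continuous.intervalIntegrable (by continuity) _ _)
  have i2 : IntervalIntegrable (fun t : ℝ => 2*u*(u-c*t)^(k+1)) volume 0 (u/c) :=
    (Continuous.intervalIntegrable (by continuity) _ _)
  have i3 : IntervalIntegrable (fun t : ℝ => (u-c*t)^(k+2)) volume 0 (u/c) :=
    (Continuous.intervalIntegrable (by continuity) _ _)
  rw [intervalIntegral.integral_div,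
    intervalIntegral.integral_add (i1.sub i2) i3, intervalIntegral.integral_sub i1 i2]
  simp only [intervalIntegral.integral_const_mul]
  rw [Jint k (ne_of_gt hc), Jint (k+1) (ne_of_gt hc), Jint (k+2) (ne_of_gt hc)]
  have h1 : ((k:ℝ)+1) ≠ 0 := by positivity
  have h2 : ((k:ℝ)+2) ≠ 0 := by positivity
  have h3 : ((k:ℝ)+3) ≠ 0 := by positivity
  push_cast
  field_simp
  ring

lemma betaB' (k : ℕ) {u c : ℝ} (hu : 0 < u) (hc : 0 < c) :
    ∫⁻ t in Ioi (0:ℝ), {t : ℝ | c*t < u}.indicator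
        (fun t => ENNReal.ofReal (t^2 * ((u - c*t)^k / k.factorial))) t
      = ENNReal.ofReal (2 * u^(k+3) / (c^3 * (k+3).factorial)) := by
  rw [lint_indic _ (by continuity) hu hc ?_]
  · congr 1
    have hr : ∀ t : ℝ, t^2 * ((u - c*t)^k / k.factorial)
        = (t^2 * (u - c*t)^k) / k.factorial := fun t => by ring
    rw [intervalIntegral.integral_congr (fun t _ => hr t), intervalIntegral.integral_div,
      JB k hc]
    have h1 : ((k:ℝ)+1) ≠ 0 := by positivity
    have h2 : ((k:ℝ)+2) ≠ 0 := by positivity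
    have h3 : ((k:ℝ)+3) ≠ 0 := by positivity
    have h4 : ((k.factorial:ℕ):ℝ) ≠ 0 := Nat.cast_ne_zero.mpr (Nat.factorial_ne_zero _)
    rw [show k+3 = (k+2)+1 from rfl, Nat.factorial_succ, show k+2 = (k+1)+1 from rfl,
      Nat.factorial_succ, Nat.factorial_succ]
    push_cast
    field_simp
    ring
  · intro t ht
    have h1 : c*t < u := by rw [mul_comm]; exact (lt_div_iff₀ hc).mp ht.2
    have h2 : (0:ℝ) ≤ u - c*t := by linarith
    positivity

lemma step (n : ℕ) (c : Fin (n+2) → ℝ) (hc : ∀ j, 0 < c j) (i : Fin (n+2))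
    (g : ℝ → ℝ≥0∞) (hg : Measurable g) (w : ℝ → ℝ) (hw : Measurable w)
    (hwnn : ∀ t, 0 ≤ w t) (V : ℝ → ℝ)
    (hbeta : ∀ u : ℝ, 0 < u → (∫⁻ t in Ioi (0:ℝ),
        {t : ℝ | c i * t < u}.indicator
          (fun t => ENNReal.ofReal (w t * ((u - c i * t)^n / n.factorial))) t)
      = ENNReal.ofReal (V u))
    (hA : ∀ (g' : ℝ → ℝ≥0∞), Measurable g' →
      ∫⁻ z : Fin (n+1) → ℝ, {z : Fin (n+1) → ℝ | ∀ k, 0 < z k}.indicator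
          (fun z => g' (∑ k, c (i.succAbove k) * z k)) z
        = (∏ k, ENNReal.ofReal (c (i.succAbove k)))⁻¹ *
          ∫⁻ s in Ioi (0:ℝ), ENNReal.ofReal (s ^ n / n.factorial) * g' s) :
    ∫⁻ x : Fin (n+2) → ℝ, {x : Fin (n+2) → ℝ | ∀ j, 0 < x j}.indicator
        (fun x => ENNReal.ofReal (w (x i)) * g (∑ j, c j * x j)) x
      = (∏ k, ENNReal.ofReal (c (i.succAbove k)))⁻¹ *
        ∫⁻ u in Ioi (0:ℝ), ENNReal.ofReal (V u) * g u := by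
  classical
  set S : Set (Fin (n+2) → ℝ) := {x | ∀ j, 0 < x j} with hS
  set S' : Set (Fin (n+1) → ℝ) := {z | ∀ k, 0 < z k} with hS'
  set F : (Fin (n+2) → ℝ) → ℝ≥0∞ :=
    fun x => S.indicator (fun x => ENNReal.ofReal (w (x i)) * g (∑ j, c j * x j)) x with hF
  have hsum : Measurable fun x : Fin (n+2) → ℝ => ∑ j, c j * x j :=
    Finset.measurable_sum _ fun j _ => (measurable_pi_apply j).const_mul _
  have hFmeas : Measurable F :=
    (((ENNReal.measurable_ofReal.comp (hw.comp (measurable_pi_apply i)))).mul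
      (hg.comp hsum)).indicator (measS _)
  have e := MeasurableEquiv.piFinSuccAbove (fun _ : Fin (n+2) => ℝ) i
  have hvol : MeasurePreserving
      (MeasurableEquiv.piFinSuccAbove (fun _ : Fin (n+2) => ℝ) i).symm
      ((volume : Measure ℝ).prod (volume : Measure (Fin (n+1) → ℝ)))
      (volume : Measure (Fin (n+2) → ℝ)) :=
    (volume_preserving_piFinSuccAbove (fun _ : Fin (n+2) => ℝ) i).symm
  rw [show (∫⁻ x : Fin (n+2) → ℝ, F x) = ∫⁻ q : ℝ × (Fin (n+1) → ℝ),
      F ((MeasurableEquiv.piFinSuccAbove (fun _ : Fin (n+2) => ℝ) i).symm q)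
      ∂((volume : Measure ℝ).prod (volume : Measure (Fin (n+1) → ℝ)))
    from (hvol.lintegral_comp hFmeas).symm]
  rw [lintegral_prod (fun q => F ((MeasurableEquiv.piFinSuccAbove (fun _ : Fin (n+2) => ℝ) i).symm q))
    (hFmeas.comp (MeasurableEquiv.measurable _)).aemeasurable]
  have key : ∀ (t : ℝ) (z : Fin (n+1) → ℝ),
      F ((MeasurableEquiv.piFinSuccAbove (fun _ : Fin (n+2) => ℝ) i).symm (t, z))
        = (Ioi (0:ℝ)).indicator (fun t' => ENNReal.ofReal (w t') *
            S'.indicator (fun z' => g (c i * t' + ∑ k, c (i.succAbove k) * z' k)) z) t := by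
    intro t z
    have hsymm : (MeasurableEquiv.piFinSuccAbove (fun _ : Fin (n+2) => ℝ) i).symm (t, z)
        = i.insertNth t z := rfl
    have hmem : (i.insertNth t z ∈ S) ↔ (0 < t ∧ z ∈ S') := by
      simp only [hS, hS', mem_setOf_eq]
      constructor
      · intro h
        exact ⟨by simpa using h i, fun k => by simpa using h (i.succAbove k)⟩
      · rintro ⟨h1, h2⟩ j
        by_cases hji : j = i
        · subst hji; simpa using h1
        · obtain ⟨k, rfl⟩ := Fin.exists_succAbove_eq hji
          simpa using h2 k
    have hsum2 : (∑ j, c j * (i.insertNth t z : Fin (n+2) → ℝ) j)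
        = c i * t + ∑ k, c (i.succAbove k) * z k := by
      rw [Fin.sum_univ_succAbove (fun j => c j * (i.insertNth t z : Fin (n+2) → ℝ) j) i]
      simp
    rw [hsymm]
    simp only [hF, Set.indicator_apply]
    by_cases h1 : 0 < t <;> by_cases h2 : z ∈ S' <;>
      simp [hmem, h1, h2, mem_Ioi, hsum2, Fin.insertNth_apply_same]
  have key2 : ∀ t : ℝ, (∫⁻ z : Fin (n+1) → ℝ,
      F ((MeasurableEquiv.piFinSuccAbove (fun _ : Fin (n+2) => ℝ) i).symm (t, z)))
      = (Ioi (0:ℝ)).indicator (fun t' => ∫⁻ z : Fin (n+1) → ℝ, ENNReal.ofReal (w t') *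
          S'.indicator (fun z' => g (c i * t' + ∑ k, c (i.succAbove k) * z' k)) z) t := by
    intro t
    by_cases ht : t ∈ Ioi (0:ℝ)
    · rw [Set.indicator_of_mem ht]
      exact lintegral_congr fun z => by rw [key t z, Set.indicator_of_mem ht]
    · rw [Set.indicator_of_notMem ht]
      simp only [key t, Set.indicator_of_notMem ht]
      exact lintegral_zero
  simp only [key2]
  rw [lintegral_indicator measurableSet_Ioi]
  set P : ℝ≥0∞ := (∏ k, ENNReal.ofReal (c (i.succAbove k)))⁻¹ with hP
  have hPne : P ≠ ⊤ := by
    rw [hP]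
    refine ENNReal.inv_ne_top.mpr (Finset.prod_ne_zero_iff.mpr fun k _ => ?_)
    exact (ENNReal.ofReal_pos.mpr (hc _)).ne'
  set Φ : ℝ × ℝ → ℝ≥0∞ := fun q =>
    {q : ℝ × ℝ | c i * q.1 < q.2}.indicator (fun q => ENNReal.ofReal (w q.1) *
      (ENNReal.ofReal ((q.2 - c i * q.1)^n / n.factorial) * g q.2)) q with hΦ
  have hΦmeas : Measurable Φ := by
    refine Measurable.indicator ?_ (measurableSet_lt (measurable_fst.const_mul _) measurable_snd)
    refine (ENNReal.measurable_ofReal.comp (hw.comp measurable_fst)).mul ?_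
    refine (ENNReal.measurable_ofReal.comp ?_).mul (hg.comp measurable_snd)
    exact (measurable_snd.sub (measurable_fst.const_mul _)).pow_const _ |>.div_const _
  have ht1 : ∀ t ∈ Ioi (0:ℝ), (∫⁻ z : Fin (n+1) → ℝ, ENNReal.ofReal (w t) *
      S'.indicator (fun z' => g (c i * t + ∑ k, c (i.succAbove k) * z' k)) z)
      = P * ∫⁻ u in Ioi (0:ℝ), Φ (t, u) := by
    intro t ht
    rw [lintegral_const_mul' _ _ ENNReal.ofReal_ne_top]
    rw [hA (fun s => g (c i * t + s)) (hg.comp (measurable_const_add _))]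
    have hshift : (∫⁻ s in Ioi (0:ℝ), ENNReal.ofReal (s ^ n / n.factorial) * g (c i * t + s))
        = ∫⁻ u in Ioi (c i * t), ENNReal.ofReal ((u - c i * t) ^ n / n.factorial) * g u := by
      rw [← lint_shift (fun u => ENNReal.ofReal ((u - c i * t) ^ n / n.factorial) * g u)
        (by exact (ENNReal.measurable_ofReal.comp (((measurable_id.sub_const _).pow_const _).div_const _)).mul hg)
        (c i * t)]
      exact lintegral_congr fun s => by rw [add_sub_cancel_left]
    rw [hshift, lint_Ioi_indic _ (le_of_lt (mul_pos (hc i) (mem_Ioi.mp ht)))]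
    rw [← mul_assoc, mul_comm (ENNReal.ofReal (w t)) P, mul_assoc]
    congr 1
    rw [← lintegral_const_mul' _ _ ENNReal.ofReal_ne_top]
    refine lintegral_congr fun u => ?_
    simp only [hΦ, Set.indicator_apply, mem_setOf_eq]
    by_cases hcu : c i * t < u
    · simp [hcu]
    · simp [hcu]
  rw [setLIntegral_congr_fun measurableSet_Ioi ht1,
    lintegral_const_mul' P _ hPne]
  congr 1
  rw [lintegral_lintegral_swap hΦmeas.aemeasurable]
  refine setLIntegral_congr_fun measurableSet_Ioi (fun u hu => ?_)
  have hptw : ∀ t : ℝ, Φ (t, u) = ({t : ℝ | c i * t < u}.indicator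
      (fun t => ENNReal.ofReal (w t * ((u - c i * t)^n / n.factorial))) t) * g u := by
    intro t
    simp only [hΦ, Set.indicator_apply, mem_setOf_eq]
    by_cases hcu : c i * t < u
    · simp [hcu, ENNReal.ofReal_mul (hwnn t), mul_assoc]
    · simp [hcu]
  calc (∫⁻ t in Ioi (0:ℝ), Φ (t, u))
      = ∫⁻ t in Ioi (0:ℝ), ({t : ℝ | c i * t < u}.indicator
          (fun t => ENNReal.ofReal (w t * ((u - c i * t)^n / n.factorial))) t) * g u :=
        lintegral_congr fun t => hptw t
    _ = (∫⁻ t in Ioi (0:ℝ), {t : ℝ | c i * t < u}.indicator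
          (fun t => ENNReal.ofReal (w t * ((u - c i * t)^n / n.factorial))) t) * g u := by
        rw [lintegral_mul_const'' _ ?_]
        refine AEMeasurable.indicator ?_ (measurableSet_lt (measurable_id.const_mul _) measurable_const)
        exact (ENNReal.measurable_ofReal.comp ((hw.mul (((measurable_const.sub
          (measurable_id.const_mul _)).pow_const _).div_const _)))).aemeasurable
    _ = ENNReal.ofReal (V u) * g u := by rw [hbeta u (mem_Ioi.mp hu)]

lemma dirA (n : ℕ) (c : Fin (n+1) → ℝ) (hc : ∀ j, 0 < c j) (g : ℝ → ℝ≥0∞)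
    (hg : Measurable g) :
    ∫⁻ x : Fin (n+1) → ℝ, {x : Fin (n+1) → ℝ | ∀ j, 0 < x j}.indicator
        (fun x => g (∑ j, c j * x j)) x
      = (∏ j, ENNReal.ofReal (c j))⁻¹ *
        ∫⁻ s in Ioi (0:ℝ), ENNReal.ofReal (s ^ n / n.factorial) * g s := by
  induction n generalizing g with
  | zero =>
    have hvol : MeasurePreserving ((MeasurableEquiv.funUnique (Fin 1) ℝ).symm)
        (volume : Measure ℝ) (volume : Measure (Fin 1 → ℝ)) :=
      (volume_preserving_funUnique (Fin 1) ℝ).symm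
    have hFmeas : Measurable (fun x : Fin 1 → ℝ => {x : Fin 1 → ℝ | ∀ j, 0 < x j}.indicator
        (fun x => g (∑ j, c j * x j)) x) := by
      refine Measurable.indicator (hg.comp ?_) ?_
      · exact Finset.measurable_sum _ fun j _ => (measurable_pi_apply j).const_mul _
      · have h : {x : Fin 1 → ℝ | ∀ j, 0 < x j} = ⋂ j, {x | 0 < x j} := by ext; simp
        rw [h]
        exact MeasurableSet.iInter fun j =>
          measurableSet_lt measurable_const (measurable_pi_apply j)
    rw [← hvol.lintegral_comp hFmeas]
    have key : ∀ t : ℝ, ({x : Fin 1 → ℝ | ∀ j, 0 < x j}.indicator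
        (fun x => g (∑ j, c j * x j)) ((MeasurableEquiv.funUnique (Fin 1) ℝ).symm t))
        = (Ioi (0:ℝ)).indicator (fun t => g (c 0 * t)) t := by
      intro t
      simp only [Set.indicator_apply, mem_setOf_eq, mem_Ioi]
      have h1 : (∀ j : Fin 1, 0 < ((MeasurableEquiv.funUnique (Fin 1) ℝ).symm t) j) ↔ 0 < t := by
        constructor
        · intro h; exact h 0
        · intro h j; exact h
      have h2 : (∑ j : Fin 1, c j * ((MeasurableEquiv.funUnique (Fin 1) ℝ).symm t) j)
          = c 0 * t := by simp [Fin.sum_univ_one]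
      rw [h2]
      by_cases ht : 0 < t <;> simp [h1, ht]
    simp only [key]
    rw [lintegral_indicator measurableSet_Ioi, lint_scale g hg (hc 0)]
    simp only [pow_zero, Nat.factorial_zero, Nat.cast_one, div_one,
      ENNReal.ofReal_one, one_mul]
    rw [ENNReal.ofReal_inv_of_pos (hc 0),
      show (∏ j : Fin (0+1), ENNReal.ofReal (c j)) = ENNReal.ofReal (c 0) from
        Fin.prod_univ_one _]
  | succ m IH =>
    have h0 : (0:ℝ) < c 0 := hc 0
    have hstep := step m c hc 0 g hg (fun _ => (1:ℝ)) measurable_const (fun _ => zero_le_one)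
      (fun u => u^(m+1) / (c 0 * (m+1).factorial))
      (fun u hu => betaA' m hu (hc 0))
      (fun g' hg' => IH (fun k => c ((0:Fin (m+2)).succAbove k)) (fun k => hc _) g' hg')
    simp only [ENNReal.ofReal_one, one_mul] at hstep
    rw [hstep]
    have hVeq : ∀ u : ℝ, ENNReal.ofReal (u^(m+1) / (c 0 * (m+1).factorial))
        = ENNReal.ofReal ((c 0)⁻¹) * ENNReal.ofReal (u^(m+1) / (m+1).factorial) := by
      intro u
      rw [← ENNReal.ofReal_mul (by positivity)]
      congr 1
      field_simp
    have hprod : (∏ j : Fin (m+2), ENNReal.ofReal (c j))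
        = ENNReal.ofReal (c 0) * ∏ k : Fin (m+1), ENNReal.ofReal (c ((0:Fin (m+2)).succAbove k)) :=
      Fin.prod_univ_succAbove (fun j => ENNReal.ofReal (c j)) 0
    have hne0 : ∀ k : Fin (m+1), (ENNReal.ofReal (c ((0:Fin (m+2)).succAbove k))) ≠ 0 :=
      fun k => (ENNReal.ofReal_pos.mpr (hc _)).ne'
    calc (∏ k : Fin (m+1), ENNReal.ofReal (c ((0:Fin (m+2)).succAbove k)))⁻¹ *
          ∫⁻ u in Ioi (0:ℝ), ENNReal.ofReal (u^(m+1) / (c 0 * (m+1).factorial)) * g u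
        = (∏ k : Fin (m+1), ENNReal.ofReal (c ((0:Fin (m+2)).succAbove k)))⁻¹ *
          (ENNReal.ofReal ((c 0)⁻¹) *
            ∫⁻ u in Ioi (0:ℝ), ENNReal.ofReal (u^(m+1) / (m+1).factorial) * g u) := by
          congr 1
          rw [← lintegral_const_mul' _ _ ENNReal.ofReal_ne_top]
          exact lintegral_congr fun u => by rw [hVeq u, mul_assoc]
      _ = (∏ j : Fin (m+2), ENNReal.ofReal (c j))⁻¹ *
          ∫⁻ u in Ioi (0:ℝ), ENNReal.ofReal (u^(m+1) / (m+1).factorial) * g u := by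
          rw [← mul_assoc, hprod, ENNReal.ofReal_inv_of_pos h0, ENNReal.mul_inv
            (Or.inl (ENNReal.ofReal_pos.mpr h0).ne') (Or.inl ENNReal.ofReal_ne_top),
            mul_comm ((ENNReal.ofReal (c 0))⁻¹) _, mul_assoc]

lemma dirB (n : ℕ) (c : Fin (n+1) → ℝ) (hc : ∀ j, 0 < c j) (g : ℝ → ℝ≥0∞)
    (hg : Measurable g) (i : Fin (n+1)) :
    ∫⁻ x : Fin (n+1) → ℝ, {x : Fin (n+1) → ℝ | ∀ j, 0 < x j}.indicator
        (fun x => ENNReal.ofReal ((x i)^2) * g (∑ j, c j * x j)) x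
      = (ENNReal.ofReal ((c i)^2))⁻¹ * (∏ j, ENNReal.ofReal (c j))⁻¹ *
        ∫⁻ u in Ioi (0:ℝ), ENNReal.ofReal (2 * u^(n+2) / (n+2).factorial) * g u := by
  match n with
  | 0 =>
    have hi : i = 0 := Fin.fin_one_eq_zero i
    subst hi
    have h0 : (0:ℝ) < c 0 := hc 0
    have hvol : MeasurePreserving ((MeasurableEquiv.funUnique (Fin 1) ℝ).symm)
        (volume : Measure ℝ) (volume : Measure (Fin 1 → ℝ)) :=
      (volume_preserving_funUnique (Fin 1) ℝ).symm
    have hFmeas : Measurable (fun x : Fin 1 → ℝ => {x : Fin 1 → ℝ | ∀ j, 0 < x j}.indicator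
        (fun x => ENNReal.ofReal ((x 0)^2) * g (∑ j, c j * x j)) x) := by
      refine Measurable.indicator ?_ ?_
      · refine (ENNReal.measurable_ofReal.comp ((measurable_pi_apply 0).pow_const 2)).mul
          (hg.comp (Finset.measurable_sum _ fun j _ => (measurable_pi_apply j).const_mul _))
      · have h : {x : Fin 1 → ℝ | ∀ j, 0 < x j} = ⋂ j, {x | 0 < x j} := by ext; simp
        rw [h]
        exact MeasurableSet.iInter fun j =>
          measurableSet_lt measurable_const (measurable_pi_apply j)
    rw [← hvol.lintegral_comp hFmeas]
    have key : ∀ t : ℝ, ({x : Fin 1 → ℝ | ∀ j, 0 < x j}.indicator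
        (fun x => ENNReal.ofReal ((x 0)^2) * g (∑ j, c j * x j))
          ((MeasurableEquiv.funUnique (Fin 1) ℝ).symm t))
        = (Ioi (0:ℝ)).indicator (fun t => ENNReal.ofReal (t^2) * g (c 0 * t)) t := by
      intro t
      simp only [Set.indicator_apply, mem_setOf_eq, mem_Ioi]
      have h1 : (∀ j : Fin 1, 0 < ((MeasurableEquiv.funUnique (Fin 1) ℝ).symm t) j) ↔ 0 < t := by
        constructor
        · intro h; exact h 0
        · intro h j; exact h
      have h2 : (∑ j : Fin 1, c j * ((MeasurableEquiv.funUnique (Fin 1) ℝ).symm t) j)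
          = c 0 * t := by simp [Fin.sum_univ_one]
      rw [h2]
      by_cases ht : 0 < t <;> simp [h1, ht]
    simp only [key]
    rw [lintegral_indicator measurableSet_Ioi]
    have hGmeas : Measurable (fun v : ℝ => ENNReal.ofReal ((v * (c 0)⁻¹)^2) * g v) :=
      (ENNReal.measurable_ofReal.comp ((measurable_id.mul_const _).pow_const 2)).mul hg
    have hpt : ∀ t : ℝ, ENNReal.ofReal (t^2) * g (c 0 * t)
        = (fun v : ℝ => ENNReal.ofReal ((v * (c 0)⁻¹)^2) * g v) (c 0 * t) := by
      intro t
      simp only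
      rw [mul_comm (c 0) t, mul_assoc, mul_inv_cancel₀ h0.ne', mul_one]
    rw [lintegral_congr fun t => hpt t, lint_scale _ hGmeas h0]
    have hpt2 : ∀ v : ℝ, ENNReal.ofReal ((v * (c 0)⁻¹)^2) * g v
        = ENNReal.ofReal (((c 0)^2)⁻¹) * (ENNReal.ofReal (2 * v^(0+2) / ((0+2).factorial:ℝ)) * g v) := by
      intro v
      rw [← mul_assoc, ← ENNReal.ofReal_mul (by positivity)]
      congr 2
      have hf : (((0+2).factorial : ℕ) : ℝ) = 2 := by norm_num [Nat.factorial]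
      rw [hf]
      field_simp
    rw [lintegral_congr fun v => hpt2 v, lintegral_const_mul' _ _ ENNReal.ofReal_ne_top,
      ← mul_assoc]
    congr 1
    rw [show (∏ j : Fin (0+1), ENNReal.ofReal (c j)) = ENNReal.ofReal (c 0) from
      Fin.prod_univ_one _, ENNReal.ofReal_inv_of_pos h0,
      ENNReal.ofReal_inv_of_pos (pow_pos h0 2), mul_comm]
  | Nat.succ m =>
    have hci : (0:ℝ) < c i := hc i
    have hstep := step m c hc i g hg (fun t => t^2) (measurable_id.pow_const 2)
      (fun t => sq_nonneg t)
      (fun u => 2 * u^(m+3) / ((c i)^3 * (m+3).factorial))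
      (fun u hu => betaB' m hu (hc i))
      (fun g' hg' => dirA m (fun k => c (i.succAbove k)) (fun k => hc _) g' hg')
    rw [hstep]
    have hVeq : ∀ u : ℝ, ENNReal.ofReal (2 * u^(m+3) / ((c i)^3 * (m+3).factorial))
        = ENNReal.ofReal (((c i)^3)⁻¹) * ENNReal.ofReal (2 * u^(m+3) / (m+3).factorial) := by
      intro u
      rw [← ENNReal.ofReal_mul (by positivity)]
      congr 1
      rw [div_mul_eq_div_div_swap, div_eq_mul_inv, mul_comm]
    have hprod : (∏ j : Fin (m+2), ENNReal.ofReal (c j))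
        = ENNReal.ofReal (c i) * ∏ k : Fin (m+1), ENNReal.ofReal (c (i.succAbove k)) :=
      Fin.prod_univ_succAbove (fun j => ENNReal.ofReal (c j)) i
    have hprodtail : (∏ k : Fin (m+1), ENNReal.ofReal (c (i.succAbove k)))
        = ENNReal.ofReal (∏ k : Fin (m+1), c (i.succAbove k)) :=
      (ENNReal.ofReal_prod_of_nonneg (fun k _ => (hc _).le)).symm
    have hptpos : (0:ℝ) < ∏ k : Fin (m+1), c (i.succAbove k) :=
      Finset.prod_pos (fun k _ => hc _)
    calc (∏ k : Fin (m+1), ENNReal.ofReal (c (i.succAbove k)))⁻¹ *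
          ∫⁻ u in Ioi (0:ℝ), ENNReal.ofReal (2 * u^(m+3) / ((c i)^3 * (m+3).factorial)) * g u
        = (∏ k : Fin (m+1), ENNReal.ofReal (c (i.succAbove k)))⁻¹ *
          (ENNReal.ofReal (((c i)^3)⁻¹) *
            ∫⁻ u in Ioi (0:ℝ), ENNReal.ofReal (2 * u^(m+3) / (m+3).factorial) * g u) := by
          congr 1
          rw [← lintegral_const_mul' _ _ ENNReal.ofReal_ne_top]
          exact lintegral_congr fun u => by rw [hVeq u, mul_assoc]
      _ = (ENNReal.ofReal ((c i)^2))⁻¹ * (∏ j : Fin (m+2), ENNReal.ofReal (c j))⁻¹ *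
          ∫⁻ u in Ioi (0:ℝ), ENNReal.ofReal (2 * u^(m+3) / (m+3).factorial) * g u := by
          rw [← mul_assoc, hprod, hprodtail]
          congr 1
          rw [← ENNReal.ofReal_mul (hc i).le,
            ← ENNReal.ofReal_inv_of_pos hptpos,
            ← ENNReal.ofReal_inv_of_pos (pow_pos hci 2),
            ← ENNReal.ofReal_inv_of_pos (mul_pos hci hptpos),
            ← ENNReal.ofReal_mul (by positivity),
            ← ENNReal.ofReal_mul (by positivity)]
          congr 1
          rw [mul_inv]
          have h1 : c i ≠ 0 := hci.ne'
          have h2 : (∏ k : Fin (m+1), c (i.succAbove k)) ≠ 0 := hptpos.ne'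
          field_simp

/-- Second moment of each `β_i` under the jointly robust prior:
`E[β_i²] = 2(a+p+2)(a+p+1) / ((p+1)(p+2) C_i² b²)`. -/
theorem jr_prior_second_moment
    (p : ℕ) (hp : 1 ≤ p) (a b : ℝ) (ha : -(p + 1 : ℝ) < a) (hb : 0 < b)
    (C : Fin p → ℝ) (hC : ∀ l, 0 < C l) (i : Fin p) :
    (∫ x : Fin (p + 1) → ℝ in {x | ∀ j, 0 < x j},
        x i.castSucc ^ 2 *
          (((p.factorial : ℝ) * b ^ (a + p + 1) * (∏ l, C l) / Real.Gamma (a + p + 1)) *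
            ((∑ l : Fin p, C l * x l.castSucc + x (Fin.last p)) ^ a *
              Real.exp (-b * (∑ l : Fin p, C l * x l.castSucc + x (Fin.last p))))))
      = 2 * (a + p + 2) * (a + p + 1) / ((p + 1) * (p + 2) * C i ^ 2 * b ^ 2) := by
  have hap1 : (0:ℝ) < a + p + 1 := by linarith
  set K : ℝ := (p.factorial : ℝ) * b ^ (a + p + 1) * (∏ l, C l) / Real.Gamma (a + p + 1)
    with hKdef
  have hGpos : 0 < Real.Gamma (a + p + 1) := Real.Gamma_pos_of_pos hap1
  have hPc : (0:ℝ) < ∏ l, C l := Finset.prod_pos fun l _ => hC l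
  have hbp : (0:ℝ) < b ^ (a + p + 1) := Real.rpow_pos_of_pos hb _
  have hfacp : (0:ℝ) < (p.factorial : ℕ) := by exact_mod_cast Nat.factorial_pos p
  have hK : 0 < K := by rw [hKdef]; positivity
  set c : Fin (p+1) → ℝ := Fin.snoc C 1 with hcdef
  have hc : ∀ j, 0 < c j := by
    intro j
    refine Fin.lastCases ?_ (fun l => ?_) j
    · simp [hcdef]
    · simp [hcdef, hC l]
  have hsum : ∀ x : Fin (p+1) → ℝ, (∑ j, c j * x j)
      = ∑ l : Fin p, C l * x l.castSucc + x (Fin.last p) := by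
    intro x
    rw [Fin.sum_univ_castSucc]
    simp [hcdef]
  set g : ℝ → ℝ≥0∞ := fun s => ENNReal.ofReal (s ^ a * Real.exp (-b * s)) with hgdef
  have hg : Measurable g := by rw [hgdef]; fun_prop
  set S : Set (Fin (p+1) → ℝ) := {x | ∀ j, 0 < x j} with hSdef
  set T : (Fin (p+1) → ℝ) → ℝ :=
    fun x => ∑ l : Fin p, C l * x l.castSucc + x (Fin.last p) with hTdef
  have hT : ∀ x ∈ S, 0 < T x := by
    intro x hx
    refine add_pos_of_nonneg_of_pos (Finset.sum_nonneg fun l _ => ?_) (hx (Fin.last p))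
    exact mul_nonneg (hC l).le (hx _).le
  set f : (Fin (p+1) → ℝ) → ℝ := fun x => x i.castSucc ^ 2 * (K * ((T x) ^ a *
    Real.exp (-b * T x))) with hfdef
  have hfm : Measurable f := by rw [hfdef, hTdef]; fun_prop
  have h_nn : 0 ≤ᵐ[volume.restrict S] f := by
    refine ae_restrict_of_forall_mem (measS _) fun x hx => ?_
    have h1 := hT x hx
    rw [hfdef]
    have h2 : 0 ≤ (T x) ^ a := Real.rpow_nonneg h1.le a
    positivity
  rw [show (∫ x : Fin (p + 1) → ℝ in {x | ∀ j, 0 < x j},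
        x i.castSucc ^ 2 *
          (((p.factorial : ℝ) * b ^ (a + p + 1) * (∏ l, C l) / Real.Gamma (a + p + 1)) *
            ((∑ l : Fin p, C l * x l.castSucc + x (Fin.last p)) ^ a *
              Real.exp (-b * (∑ l : Fin p, C l * x l.castSucc + x (Fin.last p))))))
      = ∫ x in S, f x from rfl]
  rw [integral_eq_lintegral_of_nonneg_ae h_nn hfm.aestronglyMeasurable]
  rw [← lintegral_indicator (measS (p+1))]
  have hind : ∀ x, S.indicator (fun x => ENNReal.ofReal (f x)) x
      = ENNReal.ofReal K *
        (S.indicator (fun x => ENNReal.ofReal ((x i.castSucc)^2) * g (∑ j, c j * x j)) x) := by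
    intro x
    by_cases hx : x ∈ S
    · rw [Set.indicator_of_mem hx, Set.indicator_of_mem hx, hsum x, hfdef, hgdef]
      simp only
      rw [ENNReal.ofReal_mul (sq_nonneg (x i.castSucc)), ENNReal.ofReal_mul hK.le, hTdef]
      ring
    · rw [Set.indicator_of_notMem hx, Set.indicator_of_notMem hx, mul_zero]
  rw [lintegral_congr hind, lintegral_const_mul' _ _ ENNReal.ofReal_ne_top,
    dirB p c hc g hg i.castSucc]
  have hci : c i.castSucc = C i := by simp [hcdef]
  have hprodc : (∏ j, ENNReal.ofReal (c j)) = ENNReal.ofReal (∏ l, C l) := by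
    rw [← ENNReal.ofReal_prod_of_nonneg (fun j _ => (hc j).le)]
    congr 1
    rw [Fin.prod_univ_castSucc]
    simp [hcdef]
  -- compute the 1-D Gamma integral
  have hap3 : (0:ℝ) < a + p + 3 := by linarith
  have hIntOn : IntegrableOn (fun u : ℝ => u ^ (a + (p:ℝ) + 2) * Real.exp (-(b * u)))
      (Ioi 0) := by
    have h := integrableOn_rpow_mul_exp_neg_mul_rpow
      (show (-1:ℝ) < a + p + 2 by linarith) zero_lt_one hb
    simpa [Real.rpow_one] using h
  have hval : ∫ u in Ioi (0:ℝ), u ^ (a + (p:ℝ) + 2) * Real.exp (-(b * u))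
      = (1/b) ^ (a + (p:ℝ) + 3) * Real.Gamma (a + p + 3) := by
    have h := Real.integral_rpow_mul_exp_neg_mul_Ioi hap3 hb
    rw [show (a + (p:ℝ) + 3) - 1 = a + p + 2 by ring] at h
    exact h
  have hlint : (∫⁻ u in Ioi (0:ℝ),
        ENNReal.ofReal (2 * u^(p+2) / ((p+2).factorial:ℕ)) * g u)
      = ENNReal.ofReal ((2 / ((p+2).factorial:ℕ)) *
          ((1/b) ^ (a + (p:ℝ) + 3) * Real.Gamma (a + p + 3))) := by
    have hcong : ∀ u ∈ Ioi (0:ℝ),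
        ENNReal.ofReal (2 * u^(p+2) / ((p+2).factorial:ℕ)) * g u
        = ENNReal.ofReal ((2 / ((p+2).factorial:ℕ)) *
            (u ^ (a + (p:ℝ) + 2) * Real.exp (-(b * u)))) := by
      intro u hu
      have hu0 : (0:ℝ) < u := hu
      rw [hgdef]
      simp only
      rw [← ENNReal.ofReal_mul (by positivity)]
      congr 1
      have hpow : (u:ℝ) ^ ((p:ℕ)+2) * u ^ a = u ^ (a + (p:ℝ) + 2) := by
        rw [← Real.rpow_natCast u (p+2), ← Real.rpow_add hu0]
        congr 1
        push_cast
        ring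
      rw [← hpow]
      rw [show -(b*u) = -b*u by ring]
      ring
    rw [setLIntegral_congr_fun measurableSet_Ioi hcong,
      ← ofReal_integral_eq_lintegral_ofReal (hIntOn.const_mul _)
        (ae_restrict_of_forall_mem measurableSet_Ioi fun u hu => by
          have hu0 : (0:ℝ) < u := hu
          positivity)]
    rw [MeasureTheory.integral_const_mul, hval]
  rw [hlint, hci, hprodc]
  -- now all toReal algebra
  rw [ENNReal.toReal_mul, ENNReal.toReal_mul, ENNReal.toReal_mul, ENNReal.toReal_inv,
    ENNReal.toReal_inv, ENNReal.toReal_ofReal hK.le,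
    ENNReal.toReal_ofReal (by positivity : (0:ℝ) ≤ C i ^2),
    ENNReal.toReal_ofReal hPc.le,
    ENNReal.toReal_ofReal (by positivity)]
  -- real algebra
  have hG3 : Real.Gamma (a + p + 3) = (a+p+2)*((a+p+1)*Real.Gamma (a + p + 1)) := by
    rw [show a+(p:ℝ)+3 = (a+(p:ℝ)+2)+1 by ring,
      Real.Gamma_add_one (by linarith : a+(p:ℝ)+2 ≠ 0)]
    rw [show a+(p:ℝ)+2 = (a+(p:ℝ)+1)+1 by ring,
      Real.Gamma_add_one hap1.ne']
  have hbb : b ^ (a + (p:ℝ) + 3) = b ^ (a + (p:ℝ) + 1) * b^2 := by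
    rw [← Real.rpow_natCast b 2, ← Real.rpow_add hb]
    congr 1
    push_cast
    ring
  have hfac2 : (((p+2).factorial:ℕ):ℝ) = ((p:ℝ)+2)*(((p:ℝ)+1)*(p.factorial:ℕ)) := by
    rw [Nat.factorial_succ, Nat.factorial_succ]
    push_cast
    ring
  rw [one_div, Real.inv_rpow hb.le, hG3, hbb, hfac2, hKdef]
  have h1 : Real.Gamma (a+p+1) ≠ 0 := hGpos.ne'
  have h2 : b ^ (a + (p:ℝ) + 1) ≠ 0 := hbp.ne'
  have h3 : (∏ l, C l) ≠ 0 := hPc.ne'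
  have h4 : C i ≠ 0 := (hC i).ne'
  have h5 : ((p.factorial:ℕ):ℝ) ≠ 0 := hfacp.ne'
  have h6 : ((p:ℝ)+1) ≠ 0 := by positivity
  have h7 : ((p:ℝ)+2) ≠ 0 := by positivity
  have h8 : b ≠ 0 := hb.ne'
  field_simp
end

section
/- For the jointly robust prior density, the variance of β_i equals (a+p+1)·((p+1)^2 + p + a·p + 1) / ((p+1)^2 (p+2) C_i^2 b^2) for each i = 1,…,p. -/
/-!
Integrating out a coordinate `x_j` turns `∫₀^∞ g (c_j x_j + S) dx_j` into `c_j⁻¹ ∫_S^∞ g`, and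
Tonelli turns `∫₀^∞ s^m ∫_s^∞ g` into `(m+1)⁻¹ ∫₀^∞ u^(m+1) g(u) du`. Removing the coordinates
other than `x_i` one at a time, the `k`-th moment of `x_i` against `g (∑ c_l x_l)` on the open
orthant of `ℝⁿ⁺¹` is `k! / ((n+k)! ∏ c_l c_i^k) ∫₀^∞ s^(n+k) g(s) ds`. For `g(s) = s^a e^(-bs)` this
is a Gamma integral, so `E β_i^k = k! p! Γ(a+p+1+k) / ((p+k)! Γ(a+p+1) C_i^k b^k)`.
-/

open MeasureTheory Real Finset

open scoped ENNReal Nat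

theorem lintegral_Ioi_comp_const_mul {c : ℝ} (hc : 0 < c) {f : ℝ → ℝ≥0∞} (hf : Measurable f) :
    ∫⁻ t in Set.Ioi 0, f (c * t) = ENNReal.ofReal c⁻¹ * ∫⁻ t in Set.Ioi 0, f t := by
  have hpre : (c * ·) ⁻¹' Set.Ioi 0 = Set.Ioi (0 : ℝ) := by
    ext t; simp [mul_pos_iff_of_pos_left hc]
  rw [← hpre, ← setLIntegral_map measurableSet_Ioi hf (measurable_const_mul c), hpre,
    Real.map_volume_mul_left hc.ne', Measure.restrict_smul, lintegral_smul_measure,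
    abs_of_pos (inv_pos.mpr hc), smul_eq_mul]

theorem lintegral_Ioi_comp_add_const (S : ℝ) {f : ℝ → ℝ≥0∞} (hf : Measurable f) :
    ∫⁻ t in Set.Ioi 0, f (t + S) = ∫⁻ t in Set.Ioi S, f t := by
  have hpre : (· + S) ⁻¹' Set.Ioi S = Set.Ioi 0 := by ext t; simp
  rw [← hpre, (measurePreserving_add_right volume S).setLIntegral_comp_preimage measurableSet_Ioi hf]

theorem lintegral_Ioi_comp_mul_add {c : ℝ} (hc : 0 < c) (S : ℝ) {f : ℝ → ℝ≥0∞}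
    (hf : Measurable f) :
    ∫⁻ t in Set.Ioi 0, f (c * t + S) = ENNReal.ofReal c⁻¹ * ∫⁻ t in Set.Ioi S, f t := by
  rw [← lintegral_Ioi_comp_add_const S hf]
  exact lintegral_Ioi_comp_const_mul hc (hf.comp (measurable_add_const S))

theorem lintegral_Ioi_pow_mul_comp_const_mul {c : ℝ} (hc : 0 < c) (k : ℕ) {f : ℝ → ℝ≥0∞}
    (hf : Measurable f) :
    ∫⁻ t in Set.Ioi 0, ENNReal.ofReal (t ^ k) * f (c * t)
      = ENNReal.ofReal (c ^ (k + 1))⁻¹ * ∫⁻ t in Set.Ioi 0, ENNReal.ofReal (t ^ k) * f t := by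
  have hf' : Measurable fun s => ENNReal.ofReal ((c⁻¹ * s) ^ k) * f s := by fun_prop
  have hscale : ∀ s,
      ENNReal.ofReal ((c⁻¹ * s) ^ k) = ENNReal.ofReal (c ^ k)⁻¹ * ENNReal.ofReal (s ^ k) := by
    intro s
    rw [mul_pow, inv_pow, ENNReal.ofReal_mul (by positivity)]
  calc ∫⁻ t in Set.Ioi 0, ENNReal.ofReal (t ^ k) * f (c * t)
      = ∫⁻ t in Set.Ioi 0, ENNReal.ofReal ((c⁻¹ * (c * t)) ^ k) * f (c * t) := by
        simp_rw [inv_mul_cancel_left₀ hc.ne']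
    _ = ENNReal.ofReal c⁻¹ * ∫⁻ s in Set.Ioi 0, ENNReal.ofReal ((c⁻¹ * s) ^ k) * f s :=
        lintegral_Ioi_comp_const_mul hc hf'
    _ = _ := by
        simp_rw [hscale, mul_assoc]
        rw [lintegral_const_mul _ (by fun_prop), ← mul_assoc, ← ENNReal.ofReal_mul (by positivity),
          ← mul_inv, pow_succ']

theorem lintegral_Ioo_zero_pow (m : ℕ) {u : ℝ} (hu : 0 < u) :
    ∫⁻ s in Set.Ioo 0 u, ENNReal.ofReal (s ^ m) = ENNReal.ofReal (u ^ (m + 1) / (m + 1)) := by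
  have hint : IntegrableOn (fun s : ℝ => s ^ m) (Set.Ioo 0 u) :=
    (intervalIntegral.intervalIntegrable_pow m).1.mono_set Set.Ioo_subset_Ioc_self
  rw [← ofReal_integral_eq_lintegral_ofReal hint, ← integral_Ioc_eq_integral_Ioo,
    ← intervalIntegral.integral_of_le hu.le, integral_pow]
  · simp
  · filter_upwards [ae_restrict_mem measurableSet_Ioo] with s hs
    exact pow_nonneg hs.1.le m

theorem lintegral_Ioi_pow_mul_lintegral_Ioi (m : ℕ) {g : ℝ → ℝ≥0∞} (hg : Measurable g) :
    ∫⁻ s in Set.Ioi 0, ENNReal.ofReal (s ^ m) * ∫⁻ u in Set.Ioi s, g u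
      = ENNReal.ofReal (m + 1 : ℝ)⁻¹ * ∫⁻ u in Set.Ioi 0, ENNReal.ofReal (u ^ (m + 1)) * g u := by
  set F : ℝ → ℝ → ℝ≥0∞ := fun s u => if s < u then ENNReal.ofReal (s ^ m) * g u else 0
  have hF : Measurable (Function.uncurry F) :=
    Measurable.ite (measurableSet_lt measurable_fst measurable_snd) (by fun_prop) measurable_const
  have inner_u : ∀ s ∈ Set.Ioi (0 : ℝ),
      ∫⁻ u in Set.Ioi 0, F s u = ENNReal.ofReal (s ^ m) * ∫⁻ u in Set.Ioi s, g u := by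
    intro s hs
    have hFs : ∀ u, F s u = (Set.Ioi s).indicator (fun u => ENNReal.ofReal (s ^ m) * g u) u := by
      intro u; simp [F, Set.indicator_apply]
    simp_rw [hFs]
    rw [lintegral_indicator measurableSet_Ioi, Measure.restrict_restrict measurableSet_Ioi,
      Set.Ioi_inter_Ioi, max_eq_left (le_of_lt hs), lintegral_const_mul _ hg]
  have inner_s : ∀ u ∈ Set.Ioi (0 : ℝ), ∫⁻ s in Set.Ioi 0, F s u
      = ENNReal.ofReal (m + 1 : ℝ)⁻¹ * (ENNReal.ofReal (u ^ (m + 1)) * g u) := by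
    intro u hu
    have hFu : ∀ s, F s u = (Set.Iio u).indicator (fun s => ENNReal.ofReal (s ^ m) * g u) s := by
      intro s; simp [F, Set.indicator_apply]
    simp_rw [hFu]
    rw [lintegral_indicator measurableSet_Iio, Measure.restrict_restrict measurableSet_Iio,
      Set.Iio_inter_Ioi, lintegral_mul_const _ (by fun_prop), lintegral_Ioo_zero_pow m hu,
      ← mul_assoc, ← ENNReal.ofReal_mul (by positivity), div_eq_inv_mul]
  calc ∫⁻ s in Set.Ioi 0, ENNReal.ofReal (s ^ m) * ∫⁻ u in Set.Ioi s, g u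
      = ∫⁻ s in Set.Ioi 0, ∫⁻ u in Set.Ioi 0, F s u :=
        (setLIntegral_congr_fun measurableSet_Ioi inner_u).symm
    _ = ∫⁻ u in Set.Ioi 0, ∫⁻ s in Set.Ioi 0, F s u := lintegral_lintegral_swap hF.aemeasurable
    _ = ∫⁻ u in Set.Ioi 0, ENNReal.ofReal (m + 1 : ℝ)⁻¹ * (ENNReal.ofReal (u ^ (m + 1)) * g u) :=
        setLIntegral_congr_fun measurableSet_Ioi inner_s
    _ = _ := lintegral_const_mul _ (by fun_prop)

theorem measurableSet_orthant (ι : Type*) [Countable ι] :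
    MeasurableSet {x : ι → ℝ | ∀ j, 0 < x j} := by
  simp only [Set.ofPred_forall]
  exact MeasurableSet.iInter fun j => measurableSet_lt measurable_const (measurable_pi_apply j)

theorem lintegral_orthant_eq_lintegral_insertNth {n : ℕ} (j : Fin (n + 1))
    {F : (Fin (n + 1) → ℝ) → ℝ≥0∞} (hF : Measurable F) :
    ∫⁻ x in {x | ∀ l, 0 < x l}, F x
      = ∫⁻ y in {y : Fin n → ℝ | ∀ l, 0 < y l}, ∫⁻ t in Set.Ioi 0, F (j.insertNth t y) := by
  have he := (volume_preserving_piFinSuccAbove (fun _ : Fin (n + 1) => ℝ) j).symm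
  have hpre : (MeasurableEquiv.piFinSuccAbove (fun _ => ℝ) j).symm ⁻¹' {x | ∀ l, 0 < x l}
      = Set.Ioi 0 ×ˢ {y : Fin n → ℝ | ∀ l, 0 < y l} := by
    ext ⟨t, y⟩
    simp [MeasurableEquiv.piFinSuccAbove_symm_apply, Fin.forall_iff_succAbove j]
  rw [← he.setLIntegral_comp_preimage (measurableSet_orthant _) hF, hpre, Measure.volume_eq_prod]
  exact setLIntegral_prod_symm _ (hF.comp he.measurable).aemeasurable

theorem lintegral_orthant_pow_mul_comp_sum (n k : ℕ) {c : Fin (n + 1) → ℝ} (hc : ∀ j, 0 < c j)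
    (i : Fin (n + 1)) {g : ℝ → ℝ≥0∞} (hg : Measurable g) :
    ∫⁻ x in {x : Fin (n + 1) → ℝ | ∀ j, 0 < x j}, ENNReal.ofReal (x i ^ k) * g (∑ l, c l * x l)
      = ENNReal.ofReal ((k ! : ℝ) / ((n + k)! * ((∏ l, c l) * c i ^ k)))
        * ∫⁻ s in Set.Ioi 0, ENNReal.ofReal (s ^ (n + k)) * g s := by
  induction n generalizing g with
  | zero =>
    obtain rfl : i = 0 := Fin.eq_zero i
    rw [lintegral_orthant_eq_lintegral_insertNth 0 (by fun_prop)]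
    simp only [Fin.insertNth_zero', Fin.cons_zero, Fin.sum_univ_succ, Fin.sum_univ_zero, add_zero,
      IsEmpty.forall_iff, Set.ofPred_true, Measure.restrict_univ, lintegral_unique, volume_pi,
      Measure.pi_empty_univ, mul_one, zero_add]
    rw [lintegral_Ioi_pow_mul_comp_const_mul (hc 0) k hg, Fin.prod_univ_succ, Fin.prod_univ_zero,
      mul_one, ← pow_succ', div_mul_cancel_left₀ (by positivity)]
  | succ n ih =>
    obtain ⟨j, hji⟩ := exists_ne i
    obtain ⟨i, rfl⟩ := Fin.exists_succAbove_eq hji.symm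
    have hcj := hc j
    have hci := hc (j.succAbove i)
    have hprod : 0 < ∏ l, c (j.succAbove l) := prod_pos fun l _ => hc _
    set G : ℝ → ℝ≥0∞ := fun S => ∫⁻ t in Set.Ioi S, g t
    have hG : Measurable G :=
      Antitone.measurable fun S T hST => lintegral_mono_set (Set.Ioi_subset_Ioi hST)
    have inner : ∀ (y : Fin (n + 1) → ℝ) (S : ℝ),
        ∫⁻ t in Set.Ioi 0, ENNReal.ofReal (y i ^ k) * g (c j * t + S)
          = ENNReal.ofReal (c j)⁻¹ * (ENNReal.ofReal (y i ^ k) * G S) := by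
      intro y S
      rw [lintegral_const_mul _ (by fun_prop), lintegral_Ioi_comp_mul_add (hc j) S hg]
      ring
    rw [lintegral_orthant_eq_lintegral_insertNth j (by fun_prop)]
    simp only [Fin.insertNth_apply_succAbove, Fin.sum_univ_succAbove _ j, Fin.insertNth_apply_same,
      inner]
    rw [lintegral_const_mul _ (by fun_prop), ih (fun l => hc _) i hG,
      lintegral_Ioi_pow_mul_lintegral_Ioi _ hg, ← mul_assoc, ← mul_assoc,
      ← ENNReal.ofReal_mul (by positivity), ← ENNReal.ofReal_mul (by positivity),
      Nat.add_right_comm n 1 k]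
    congr 2
    rw [Fin.prod_univ_succAbove c j, Nat.factorial_succ]
    push_cast
    field_simp

theorem lintegral_Ioi_pow_mul_rpow_mul_exp_neg_mul (m : ℕ) {a b : ℝ} (ha : -(m + 1 : ℝ) < a)
    (hb : 0 < b) :
    ∫⁻ s in Set.Ioi 0, ENNReal.ofReal (s ^ m) * ENNReal.ofReal (s ^ a * exp (-b * s))
      = ENNReal.ofReal ((1 / b) ^ (a + m + 1) * Gamma (a + m + 1)) := by
  have hint : IntegrableOn (fun s : ℝ => s ^ (a + m + 1 - 1) * exp (-(b * s))) (Set.Ioi 0) := by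
    refine (integrableOn_rpow_mul_exp_neg_mul_rpow (s := a + m) (by linarith) one_pos hb).congr_fun
      (fun s _ => ?_) measurableSet_Ioi
    simp only [rpow_one, add_sub_cancel_right, neg_mul]
  rw [← integral_rpow_mul_exp_neg_mul_Ioi (by linarith) hb,
    ofReal_integral_eq_lintegral_ofReal hint
      ((ae_restrict_iff' measurableSet_Ioi).2 (ae_of_all _ fun s (hs : 0 < s) => by positivity))]
  refine setLIntegral_congr_fun measurableSet_Ioi fun s (hs : 0 < s) => ?_
  rw [← ENNReal.ofReal_mul (by positivity), ← rpow_natCast, ← mul_assoc, ← rpow_add hs,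
    add_sub_cancel_right, add_comm (m : ℝ), neg_mul]

theorem integral_orthant_pow_mul_rpow_mul_exp_neg_mul_sum (n k : ℕ) {a b : ℝ}
    (ha : -(n + 1 : ℝ) < a) (hb : 0 < b) {c : Fin (n + 1) → ℝ} (hc : ∀ j, 0 < c j)
    (i : Fin (n + 1)) :
    ∫ x in {x : Fin (n + 1) → ℝ | ∀ j, 0 < x j},
        x i ^ k * ((∑ l, c l * x l) ^ a * exp (-b * ∑ l, c l * x l))
      = k ! / ((n + k)! * ((∏ l, c l) * c i ^ k))
        * ((1 / b) ^ (a + (n + k : ℕ) + 1) * Gamma (a + (n + k : ℕ) + 1)) := by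
  have hO := measurableSet_orthant (Fin (n + 1))
  have hsum : ∀ x ∈ {x : Fin (n + 1) → ℝ | ∀ j, 0 < x j}, 0 ≤ ∑ l, c l * x l :=
    fun x hx => sum_nonneg fun l _ => (mul_pos (hc l) (hx l)).le
  have hprod : 0 < ∏ l, c l := prod_pos fun l _ => hc l
  have hci := hc i
  have hA : 0 < a + (n + k : ℕ) + 1 := by push_cast; linarith [(Nat.cast_nonneg k : (0 : ℝ) ≤ k)]
  rw [integral_eq_lintegral_of_nonneg_ae ((ae_restrict_iff' hO).2 (ae_of_all _ fun x hx => by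
      have := hsum x hx; have := hx i; positivity)) (by fun_prop)]
  rw [setLIntegral_congr_fun hO fun x hx => ENNReal.ofReal_mul (pow_nonneg (hx i).le k),
    lintegral_orthant_pow_mul_comp_sum n k hc i (g := fun s => ENNReal.ofReal (s ^ a * exp (-b * s)))
      (by fun_prop),
    lintegral_Ioi_pow_mul_rpow_mul_exp_neg_mul _ (by push_cast; linarith) hb,
    ← ENNReal.ofReal_mul (by positivity), ENNReal.toReal_ofReal (by positivity)]

/-- `x l.castSucc` is `β_l` and `x (Fin.last p)` is `η`; the constant normalises the density on
the open orthant. -/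
noncomputable def jrPriorDensity (p : ℕ) (a b : ℝ) (C : Fin p → ℝ) (x : Fin (p + 1) → ℝ) : ℝ :=
  ((p.factorial : ℝ) * b ^ (a + p + 1) * (∏ l, C l) / Real.Gamma (a + p + 1)) *
    ((∑ l : Fin p, C l * x l.castSucc + x (Fin.last p)) ^ a *
      Real.exp (-b * (∑ l : Fin p, C l * x l.castSucc + x (Fin.last p))))

theorem integral_pow_mul_jrPriorDensity (p k : ℕ) {a b : ℝ} (ha : -(p + 1 : ℝ) < a) (hb : 0 < b)
    {C : Fin p → ℝ} (hC : ∀ l, 0 < C l) (i : Fin p) :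
    ∫ x in {x : Fin (p + 1) → ℝ | ∀ j, 0 < x j}, x i.castSucc ^ k * jrPriorDensity p a b C x
      = k ! * p ! * Gamma (a + p + 1 + k) / ((p + k)! * Gamma (a + p + 1) * C i ^ k * b ^ k) := by
  set c : Fin (p + 1) → ℝ := Fin.snoc C 1
  have hc : ∀ j, 0 < c j := Fin.lastCases (by simp [c]) (fun l => by simpa [c] using hC l)
  have hsum : ∀ x : Fin (p + 1) → ℝ,
      ∑ l : Fin p, C l * x l.castSucc + x (Fin.last p) = ∑ l, c l * x l := by
    intro x
    simp [c, Fin.sum_univ_castSucc]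
  have hmoment := integral_orthant_pow_mul_rpow_mul_exp_neg_mul_sum p k ha hb hc i.castSucc
  have hprod : ∏ l, c l = ∏ l, C l := by simp [c, Fin.prod_univ_castSucc]
  have hexp : a + (p + k : ℕ) + 1 = a + p + 1 + k := by push_cast; ring
  have hprodC : 0 < ∏ l, C l := prod_pos fun l _ => hC l
  simp only [jrPriorDensity, hsum, mul_left_comm _ (_ / Gamma (a + p + 1)), integral_const_mul,
    hmoment, hprod, hexp, c, Fin.snoc_castSucc]
  rw [rpow_add (one_div_pos.2 hb) (a + p + 1), rpow_natCast, one_div, inv_rpow hb.le, inv_pow]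
  field_simp

theorem integral_mul_jrPriorDensity (p : ℕ) {a b : ℝ} (ha : -(p + 1 : ℝ) < a) (hb : 0 < b)
    {C : Fin p → ℝ} (hC : ∀ l, 0 < C l) (i : Fin p) :
    ∫ x in {x : Fin (p + 1) → ℝ | ∀ j, 0 < x j}, x i.castSucc * jrPriorDensity p a b C x
      = (a + p + 1) / ((p + 1) * C i * b) := by
  have hA : 0 < a + p + 1 := by linarith
  have h := integral_pow_mul_jrPriorDensity p 1 ha hb hC i
  simp only [pow_one, Nat.cast_one, Nat.factorial_one] at h
  rw [h, Gamma_add_one hA.ne', Nat.factorial_succ p]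
  push_cast
  field_simp

theorem integral_sq_mul_jrPriorDensity (p : ℕ) {a b : ℝ} (ha : -(p + 1 : ℝ) < a) (hb : 0 < b)
    {C : Fin p → ℝ} (hC : ∀ l, 0 < C l) (i : Fin p) :
    ∫ x in {x : Fin (p + 1) → ℝ | ∀ j, 0 < x j}, x i.castSucc ^ 2 * jrPriorDensity p a b C x
      = 2 * (a + p + 2) * (a + p + 1) / ((p + 1) * (p + 2) * C i ^ 2 * b ^ 2) := by
  have hA : 0 < a + p + 1 := by linarith
  rw [integral_pow_mul_jrPriorDensity p 2 ha hb hC i,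
    show a + p + 1 + (2 : ℕ) = a + p + 1 + 1 + 1 by push_cast; ring,
    Gamma_add_one (by positivity), Gamma_add_one hA.ne', Nat.factorial_two,
    Nat.factorial_succ (p + 1), Nat.factorial_succ p]
  push_cast
  field_simp
  ring

theorem jr_prior_variance_general
    (p : ℕ) (a b : ℝ) (ha : -(p + 1 : ℝ) < a) (hb : 0 < b)
    (C : Fin p → ℝ) (hC : ∀ l, 0 < C l) (i : Fin p) :
    (∫ x : Fin (p + 1) → ℝ in {x | ∀ j, 0 < x j},
        x i.castSucc ^ 2 *
          (((p.factorial : ℝ) * b ^ (a + p + 1) * (∏ l, C l) / Real.Gamma (a + p + 1)) *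
            ((∑ l : Fin p, C l * x l.castSucc + x (Fin.last p)) ^ a *
              Real.exp (-b * (∑ l : Fin p, C l * x l.castSucc + x (Fin.last p))))))
      - (∫ x : Fin (p + 1) → ℝ in {x | ∀ j, 0 < x j},
          x i.castSucc *
            (((p.factorial : ℝ) * b ^ (a + p + 1) * (∏ l, C l) / Real.Gamma (a + p + 1)) *
              ((∑ l : Fin p, C l * x l.castSucc + x (Fin.last p)) ^ a *
                Real.exp (-b * (∑ l : Fin p, C l * x l.castSucc + x (Fin.last p)))))) ^ 2
      = (a + p + 1) * ((p + 1) ^ 2 + p + a * p + 1) / ((p + 1) ^ 2 * (p + 2) * C i ^ 2 * b ^ 2) := by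
  have hmean := integral_mul_jrPriorDensity p ha hb hC i
  have hsecond := integral_sq_mul_jrPriorDensity p ha hb hC i
  simp only [jrPriorDensity] at hmean hsecond
  rw [hsecond, hmean]
  field_simp
  ring

/-- Variance of each `β_i` under the jointly robust prior:
`Var[β_i] = E[β_i²] - (E[β_i])² = (a+p+1)((p+1)² + p + ap + 1) / ((p+1)²(p+2) C_i² b²)`. -/
theorem jr_prior_variance
    (p : ℕ) (hp : 1 ≤ p) (a b : ℝ) (ha : -(p + 1 : ℝ) < a) (hb : 0 < b)
    (C : Fin p → ℝ) (hC : ∀ l, 0 < C l) (i : Fin p) :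
    (∫ x : Fin (p + 1) → ℝ in {x | ∀ j, 0 < x j},
        x i.castSucc ^ 2 *
          (((p.factorial : ℝ) * b ^ (a + p + 1) * (∏ l, C l) / Real.Gamma (a + p + 1)) *
            ((∑ l : Fin p, C l * x l.castSucc + x (Fin.last p)) ^ a *
              Real.exp (-b * (∑ l : Fin p, C l * x l.castSucc + x (Fin.last p))))))
      - (∫ x : Fin (p + 1) → ℝ in {x | ∀ j, 0 < x j},
          x i.castSucc *
            (((p.factorial : ℝ) * b ^ (a + p + 1) * (∏ l, C l) / Real.Gamma (a + p + 1)) *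
              ((∑ l : Fin p, C l * x l.castSucc + x (Fin.last p)) ^ a *
                Real.exp (-b * (∑ l : Fin p, C l * x l.castSucc + x (Fin.last p)))))) ^ 2
      = (a + p + 1) * ((p + 1) ^ 2 + p + a * p + 1) / ((p + 1) ^ 2 * (p + 2) * C i ^ 2 * b ^ 2) :=
  jr_prior_variance_general p a b ha hb C hC i
end

section
/- Let π^{JR}(β_1,…,β_p) = C₀ (∑_{l=1}^p C_l β_l)^a exp(−b ∑_{l=1}^p C_l β_l) on (0,∞)^p with a > −p, b > 0, C_l > 0. Then the normalizing constant is C₀ = (p−1)! b^{a+p} ∏_{l=1}^p C_l / Γ(a+p), i.e., ∫_{(0,∞)^p} (∑ C_l β_l)^a exp(−b ∑ C_l β_l) dβ = Γ(a+p) / ((p−1)! b^{a+p} ∏ C_l). -/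
open MeasureTheory Real Finset
open scoped ENNReal

lemma aux_1d (F : ℝ → ℝ≥0∞) (hF : Measurable F) {c : ℝ} (hc : 0 < c) (r : ℝ) :
    ∫⁻ t in Set.Ioi (0:ℝ), F (c * t + r) = ENNReal.ofReal c⁻¹ * ∫⁻ v in Set.Ioi r, F v := by
  have hφ : Measurable fun t : ℝ => c * t + r := (measurable_const_mul c).add_const r
  have hpre : (fun t : ℝ => c * t + r) ⁻¹' Set.Ioi r = Set.Ioi 0 := by
    ext t
    simp only [Set.mem_preimage, Set.mem_Ioi]
    constructor
    · intro h; nlinarith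
    · intro h; nlinarith
  have hmap : Measure.map (fun t : ℝ => c * t + r) volume
      = (ENNReal.ofReal c⁻¹) • volume := by
    have h1 : (fun t : ℝ => c * t + r) = (fun x : ℝ => x + r) ∘ (fun t : ℝ => c * t) := rfl
    rw [h1, ← Measure.map_map (measurable_add_const r) (measurable_const_mul c)]
    have h2 : Measure.map (fun t : ℝ => c * t) (volume : Measure ℝ)
        = ENNReal.ofReal |c⁻¹| • volume := Real.map_volume_mul_left hc.ne'
    rw [h2, Measure.map_smul, map_add_right_eq_self, abs_of_pos (inv_pos.mpr hc)]
  calc ∫⁻ t in Set.Ioi (0:ℝ), F (c * t + r)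
      = ∫⁻ t in (fun t : ℝ => c * t + r) ⁻¹' Set.Ioi r, F (c * t + r) := by rw [hpre]
    _ = ∫⁻ v, F v ∂(Measure.map (fun t : ℝ => c * t + r) (volume.restrict ((fun t : ℝ => c * t + r) ⁻¹' Set.Ioi r))) := (lintegral_map hF hφ).symm
    _ = ∫⁻ v, F v ∂((Measure.map (fun t : ℝ => c * t + r) volume).restrict (Set.Ioi r)) := by
          rw [Measure.restrict_map hφ measurableSet_Ioi]
    _ = ENNReal.ofReal c⁻¹ * ∫⁻ v in Set.Ioi r, F v := by
          rw [hmap, Measure.restrict_smul, lintegral_smul_measure, smul_eq_mul]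

lemma aux_Ioo (n : ℕ) {v : ℝ} (hv : 0 < v) :
    ∫⁻ r in Set.Ioo (0:ℝ) v, ENNReal.ofReal (r ^ n / n.factorial)
      = ENNReal.ofReal (v ^ (n+1) / (n+1).factorial) := by
  have hint : IntegrableOn (fun r : ℝ => r ^ n / n.factorial) (Set.Ioo 0 v) := by
    apply Integrable.div_const
    exact (intervalIntegral.intervalIntegrable_pow (μ := volume) (a := 0) (b := v) n).1.mono_set
      Set.Ioo_subset_Ioc_self
  rw [← ofReal_integral_eq_lintegral_ofReal hint]
  · congr 1
    have h1 : ∫ r in Set.Ioo (0:ℝ) v, r ^ n / n.factorial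
        = (∫ r in Set.Ioo (0:ℝ) v, r ^ n) / n.factorial := by
      simp [div_eq_mul_inv, integral_mul_const]
    rw [h1, ← integral_Ioc_eq_integral_Ioo,
      ← intervalIntegral.integral_of_le hv.le, integral_pow]
    rw [Nat.factorial_succ]
    have hn : (0:ℝ) < n.factorial := by positivity
    push_cast
    field_simp
    simp
  · filter_upwards [self_mem_ae_restrict measurableSet_Ioo] with r hr
    have : 0 < r := hr.1
    positivity

lemma aux_swap (F : ℝ → ℝ≥0∞) (hF : Measurable F) (n : ℕ) :
    ∫⁻ r in Set.Ioi (0:ℝ), ENNReal.ofReal (r ^ n / n.factorial) * ∫⁻ v in Set.Ioi r, F v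
      = ∫⁻ v in Set.Ioi (0:ℝ), ENNReal.ofReal (v ^ (n+1) / (n+1).factorial) * F v := by
  set g : ℝ → ℝ≥0∞ := fun r => ENNReal.ofReal (r ^ n / n.factorial) with hg_def
  have hg : Measurable g := ((measurable_id.pow_const n).div_const _).ennreal_ofReal
  set A : Set (ℝ × ℝ) := {z | z.1 < z.2} with hA_def
  have hA : MeasurableSet A := measurableSet_lt measurable_fst measurable_snd
  set H : ℝ → ℝ → ℝ≥0∞ := fun r v => g r * A.indicator (fun z => F z.2) (r, v) with hH_def
  have hH : Measurable (Function.uncurry H) := by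
    apply Measurable.mul
    · exact hg.comp measurable_fst
    · exact ((hF.comp measurable_snd).indicator hA).comp measurable_id
  have step1 : ∫⁻ r in Set.Ioi (0:ℝ), g r * ∫⁻ v in Set.Ioi r, F v
      = ∫⁻ r in Set.Ioi (0:ℝ), ∫⁻ v in Set.Ioi (0:ℝ), H r v := by
    refine setLIntegral_congr_fun measurableSet_Ioi (fun r hr => ?_)
    have h1 : ∫⁻ v in Set.Ioi r, F v = ∫⁻ v in Set.Ioi (0:ℝ), (Set.Ioi r).indicator F v := by
      rw [lintegral_indicator measurableSet_Ioi, Measure.restrict_restrict measurableSet_Ioi,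
        Set.inter_eq_left.mpr (Set.Ioi_subset_Ioi hr.le)]
    rw [h1, ← lintegral_const_mul _ (hF.indicator measurableSet_Ioi)]
    refine lintegral_congr fun v => ?_
    simp only [hH_def]
    congr 1
  have step2 : ∫⁻ r in Set.Ioi (0:ℝ), ∫⁻ v in Set.Ioi (0:ℝ), H r v
      = ∫⁻ v in Set.Ioi (0:ℝ), ∫⁻ r in Set.Ioi (0:ℝ), H r v :=
    lintegral_lintegral_swap hH.aemeasurable
  have step3 : ∫⁻ v in Set.Ioi (0:ℝ), ∫⁻ r in Set.Ioi (0:ℝ), H r v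
      = ∫⁻ v in Set.Ioi (0:ℝ), ENNReal.ofReal (v ^ (n+1) / (n+1).factorial) * F v := by
    refine setLIntegral_congr_fun measurableSet_Ioi (fun v hv => ?_)
    have h1 : ∀ r : ℝ, H r v = (Set.Iio v).indicator (fun r => g r * F v) r := by
      intro r
      by_cases h : r < v <;> simp [hH_def, Set.indicator, hA_def, h]
    simp_rw [h1]
    rw [lintegral_indicator measurableSet_Iio, Measure.restrict_restrict measurableSet_Iio]
    have h2 : Set.Iio v ∩ Set.Ioi 0 = Set.Ioo 0 v := by
      ext z; simp [Set.mem_Ioo, and_comm]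
    rw [h2, lintegral_mul_const _ hg, aux_Ioo n hv]
  rw [step1, step2, step3]

lemma aux_base (C : Fin 1 → ℝ) (hC : ∀ i, 0 < C i) (F : ℝ → ℝ≥0∞) (hF : Measurable F) :
    ∫⁻ x in {x : Fin 1 → ℝ | ∀ i, 0 < x i}, F (∑ i, C i * x i)
      = (∏ i, ENNReal.ofReal (C i))⁻¹
          * ∫⁻ r in Set.Ioi (0:ℝ), ENNReal.ofReal (r ^ (1-1) / (1-1).factorial) * F r := by
  have hex : ∀ x : Fin 1 → ℝ, (MeasurableEquiv.funUnique (Fin 1) ℝ) x = x 0 := fun _ => rfl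
  have hs : {x : Fin 1 → ℝ | ∀ i, 0 < x i}
      = (MeasurableEquiv.funUnique (Fin 1) ℝ) ⁻¹' Set.Ioi 0 := by
    ext x
    simp only [Set.mem_setOf_eq, Set.mem_preimage, Set.mem_Ioi, hex]
    constructor
    · intro h; exact h 0
    · intro h i; exact Fin.cases h (fun i => i.elim0) i
  have h3 : ∫⁻ x in {x : Fin 1 → ℝ | ∀ i, 0 < x i}, F (∑ i, C i * x i)
      = ENNReal.ofReal (C 0)⁻¹ * ∫⁻ v in Set.Ioi (0:ℝ), F v := calc
    ∫⁻ x in {x : Fin 1 → ℝ | ∀ i, 0 < x i}, F (∑ i, C i * x i)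
      = ∫⁻ x in (MeasurableEquiv.funUnique (Fin 1) ℝ) ⁻¹' Set.Ioi 0,
          F (C 0 * (MeasurableEquiv.funUnique (Fin 1) ℝ) x + 0) := by
        rw [hs]
        exact setLIntegral_congr_fun
          ((MeasurableEquiv.funUnique (Fin 1) ℝ).measurableSet_preimage.mpr measurableSet_Ioi)
          (fun x _ => by rw [Fin.sum_univ_one, hex, add_zero])
    _ = ∫⁻ t in Set.Ioi (0:ℝ), F (C 0 * t + 0) :=
        (volume_preserving_funUnique (Fin 1) ℝ).setLIntegral_comp_preimage measurableSet_Ioi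
          (hF.comp ((measurable_const_mul _).add_const 0))
    _ = ENNReal.ofReal (C 0)⁻¹ * ∫⁻ v in Set.Ioi (0:ℝ), F v := aux_1d F hF (hC 0) 0
  rw [h3]
  norm_num [Fin.prod_univ_one, ENNReal.ofReal_inv_of_pos (hC 0)]

lemma aux_Sp_meas (p : ℕ) : MeasurableSet {y : Fin p → ℝ | ∀ i, 0 < y i} := by
  have : {y : Fin p → ℝ | ∀ i, 0 < y i} = ⋂ i, (fun y : Fin p → ℝ => y i) ⁻¹' Set.Ioi 0 := by
    ext y; simp [Set.mem_iInter]
  rw [this]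
  exact MeasurableSet.iInter fun i => measurable_pi_apply i measurableSet_Ioi

lemma aux_step (p : ℕ) (hp : 1 ≤ p)
    (IH : ∀ (C : Fin p → ℝ), (∀ i, 0 < C i) → ∀ (F : ℝ → ℝ≥0∞), Measurable F →
      ∫⁻ x in {x : Fin p → ℝ | ∀ i, 0 < x i}, F (∑ i, C i * x i)
        = (∏ i, ENNReal.ofReal (C i))⁻¹
            * ∫⁻ r in Set.Ioi (0:ℝ), ENNReal.ofReal (r ^ (p-1) / (p-1).factorial) * F r)
    (C : Fin (p+1) → ℝ) (hC : ∀ i, 0 < C i) (F : ℝ → ℝ≥0∞) (hF : Measurable F) :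
    ∫⁻ x in {x : Fin (p+1) → ℝ | ∀ i, 0 < x i}, F (∑ i, C i * x i)
      = (∏ i, ENNReal.ofReal (C i))⁻¹
          * ∫⁻ r in Set.Ioi (0:ℝ), ENNReal.ofReal (r ^ p / p.factorial) * F r := by
  have hCprod_ne_top : (∏ i, ENNReal.ofReal (C (Fin.succ i))) ≠ ⊤ :=
    (ENNReal.prod_lt_top fun i _ => ENNReal.ofReal_lt_top).ne
  have hCprod_inv_ne_top : (∏ i, ENNReal.ofReal (C (Fin.succ i)))⁻¹ ≠ ⊤ := by
    rw [Ne, ENNReal.inv_eq_top]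
    exact Finset.prod_ne_zero_iff.mpr fun i _ =>
      (ENNReal.ofReal_pos.mpr (hC _)).ne'
  set g : ℝ × (Fin p → ℝ) → ℝ≥0∞ :=
    fun z => F (C 0 * z.1 + ∑ i, C (Fin.succ i) * z.2 i) with hg_def
  have hg : Measurable g := by
    apply hF.comp
    exact ((measurable_fst.const_mul _).add
      (Finset.measurable_sum univ fun i _ =>
        ((measurable_pi_apply i).comp measurable_snd).const_mul _))
  have hgm : ∀ t, Measurable fun y : Fin p → ℝ => g (t, y) := fun t =>
    hg.comp (measurable_const.prodMk measurable_id)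
  set Sp := {y : Fin p → ℝ | ∀ i, 0 < y i} with hSp_def
  have hSp : MeasurableSet Sp := aux_Sp_meas p
  have hs : MeasurableSet (Set.Ioi (0:ℝ) ×ˢ Sp) := measurableSet_Ioi.prod hSp
  have hpre : (MeasurableEquiv.piFinSuccAbove (fun _ : Fin (p+1) => ℝ) 0) ⁻¹' (Set.Ioi 0 ×ˢ Sp)
      = {x : Fin (p+1) → ℝ | ∀ i, 0 < x i} := by
    ext x
    simp only [Set.mem_preimage, MeasurableEquiv.piFinSuccAbove_apply, Set.mem_prod,
      Set.mem_Ioi, hSp_def, Set.mem_setOf_eq, Fin.forall_fin_succ, Fin.removeNth,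
      Fin.insertNthEquiv, Fin.zero_succAbove, Equiv.coe_fn_symm_mk]
  have step1 : ∫⁻ x in {x : Fin (p+1) → ℝ | ∀ i, 0 < x i}, F (∑ i, C i * x i)
      = ∫⁻ z in Set.Ioi (0:ℝ) ×ˢ Sp, g z := by
    rw [← hpre]
    rw [← (volume_preserving_piFinSuccAbove (fun _ : Fin (p+1) => ℝ) 0).setLIntegral_comp_preimage
      hs hg]
    refine setLIntegral_congr_fun (hs.preimage (MeasurableEquiv.measurable _))
      (fun x _ => ?_)
    simp only [hg_def, MeasurableEquiv.piFinSuccAbove_apply, Fin.removeNth,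
      Fin.insertNthEquiv, Fin.zero_succAbove, Equiv.coe_fn_symm_mk]
    rw [Fin.sum_univ_succ]
  have step2 : ∫⁻ z in Set.Ioi (0:ℝ) ×ˢ Sp, g z
      = ∫⁻ t in Set.Ioi (0:ℝ), ∫⁻ y in Sp, g (t, y) := by
    rw [MeasureTheory.Measure.volume_eq_prod, ← Measure.prod_restrict,
      lintegral_prod _ hg.aemeasurable]
  have step3 : ∫⁻ t in Set.Ioi (0:ℝ), ∫⁻ y in Sp, g (t, y)
      = (∏ i, ENNReal.ofReal (C (Fin.succ i)))⁻¹ * ∫⁻ t in Set.Ioi (0:ℝ),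
          ∫⁻ r in Set.Ioi (0:ℝ), ENNReal.ofReal (r ^ (p-1) / (p-1).factorial)
            * F (C 0 * t + r) := by
    rw [← lintegral_const_mul' _ _ hCprod_inv_ne_top]
    refine setLIntegral_congr_fun measurableSet_Ioi
      (fun t _ => ?_)
    exact IH (fun i => C (Fin.succ i)) (fun i => hC _)
      (fun r => F (C 0 * t + r)) (hF.comp (measurable_id.const_add (C 0 * t)))
  have hg'_ne_top : ∀ r : ℝ, ENNReal.ofReal (r ^ (p-1) / (p-1).factorial) ≠ ⊤ :=
    fun r => ENNReal.ofReal_ne_top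
  have hC0_inv_ne_top : ENNReal.ofReal ((C 0)⁻¹) ≠ ⊤ := ENNReal.ofReal_ne_top
  have step4 : ∫⁻ t in Set.Ioi (0:ℝ), ∫⁻ r in Set.Ioi (0:ℝ),
        ENNReal.ofReal (r ^ (p-1) / (p-1).factorial) * F (C 0 * t + r)
      = ∫⁻ r in Set.Ioi (0:ℝ), ∫⁻ t in Set.Ioi (0:ℝ),
        ENNReal.ofReal (r ^ (p-1) / (p-1).factorial) * F (C 0 * t + r) := by
    refine lintegral_lintegral_swap ?_
    apply Measurable.aemeasurable
    exact (((measurable_snd.pow_const _).div_const _).ennreal_ofReal).mul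
      (hF.comp ((measurable_fst.const_mul _).add measurable_snd))
  have step5 : ∫⁻ r in Set.Ioi (0:ℝ), ∫⁻ t in Set.Ioi (0:ℝ),
        ENNReal.ofReal (r ^ (p-1) / (p-1).factorial) * F (C 0 * t + r)
      = ENNReal.ofReal ((C 0)⁻¹) * ∫⁻ r in Set.Ioi (0:ℝ),
          ENNReal.ofReal (r ^ (p-1) / (p-1).factorial) * ∫⁻ v in Set.Ioi r, F v := by
    rw [← lintegral_const_mul' _ _ hC0_inv_ne_top]
    refine setLIntegral_congr_fun measurableSet_Ioi
      (fun r _ => ?_)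
    rw [lintegral_const_mul' _ _ (hg'_ne_top r), aux_1d F hF (hC 0) r]
    ring
  have hp1 : p - 1 + 1 = p := Nat.succ_pred_eq_of_pos hp
  have step6 : ∫⁻ r in Set.Ioi (0:ℝ),
        ENNReal.ofReal (r ^ (p-1) / (p-1).factorial) * ∫⁻ v in Set.Ioi r, F v
      = ∫⁻ v in Set.Ioi (0:ℝ), ENNReal.ofReal (v ^ p / p.factorial) * F v := by
    rw [aux_swap F hF (p-1), hp1]
  rw [step1, step2, step3, step4, step5, step6]
  rw [Fin.prod_univ_succ, ENNReal.mul_inv (Or.inl (ENNReal.ofReal_pos.mpr (hC 0)).ne')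
    (Or.inl ENNReal.ofReal_ne_top), ENNReal.ofReal_inv_of_pos (hC 0)]
  ring

lemma aux_key : ∀ (p : ℕ), 1 ≤ p → ∀ (C : Fin p → ℝ), (∀ i, 0 < C i) →
    ∀ (F : ℝ → ℝ≥0∞), Measurable F →
    ∫⁻ x in {x : Fin p → ℝ | ∀ i, 0 < x i}, F (∑ i, C i * x i)
      = (∏ i, ENNReal.ofReal (C i))⁻¹
          * ∫⁻ r in Set.Ioi (0:ℝ), ENNReal.ofReal (r ^ (p-1) / (p-1).factorial) * F r := by
  refine Nat.le_induction aux_base ?_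
  intro p hp IH C hC F hF
  exact aux_step p hp IH C hC F hF

/-- Normalizing constant of the no-nugget jointly robust prior:
`∫_{(0,∞)^p} (∑ C_l β_l)^a exp(-b ∑ C_l β_l) dβ = Γ(a+p)/((p-1)! b^{a+p} ∏ C_l)`. -/
theorem jr_prior_no_nugget_normalizing_constant
    (p : ℕ) (hp : 1 ≤ p) (a b : ℝ) (ha : -(p : ℝ) < a) (hb : 0 < b)
    (C : Fin p → ℝ) (hC : ∀ l, 0 < C l) :
    (∫ x : Fin p → ℝ in {x | ∀ i, 0 < x i},
        (∑ l, C l * x l) ^ a * Real.exp (-b * ∑ l, C l * x l))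
      = Real.Gamma (a + p) / (((p - 1).factorial : ℝ) * b ^ (a + p) * ∏ l, C l) := by
  have hap : (0:ℝ) < a + p := by linarith
  have hS : MeasurableSet {x : Fin p → ℝ | ∀ i, 0 < x i} := aux_Sp_meas p
  have hsum_meas : Measurable fun x : Fin p → ℝ => ∑ l, C l * x l := by fun_prop
  have hf_meas : Measurable fun x : Fin p → ℝ =>
      (∑ l, C l * x l) ^ a * Real.exp (-b * ∑ l, C l * x l) := by fun_prop
  haveI : Nonempty (Fin p) := ⟨⟨0, hp⟩⟩
  have h0 : 0 ≤ᵐ[volume.restrict {x : Fin p → ℝ | ∀ i, 0 < x i}]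
      fun x => (∑ l, C l * x l) ^ a * Real.exp (-b * ∑ l, C l * x l) := by
    filter_upwards [self_mem_ae_restrict hS] with x hx
    have hpos : 0 < ∑ l, C l * x l :=
      Finset.sum_pos (fun l _ => mul_pos (hC l) (hx l)) Finset.univ_nonempty
    exact mul_nonneg (Real.rpow_nonneg hpos.le a) (Real.exp_nonneg _)
  rw [MeasureTheory.integral_eq_lintegral_of_nonneg_ae h0
    (hf_meas.aestronglyMeasurable.restrict)]
  have hFm : Measurable fun r : ℝ => ENNReal.ofReal (r ^ a * Real.exp (-b * r)) := by fun_prop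
  have key : ∫⁻ x in {x : Fin p → ℝ | ∀ i, 0 < x i},
        ENNReal.ofReal ((∑ l, C l * x l) ^ a * Real.exp (-b * ∑ l, C l * x l))
      = (∏ i, ENNReal.ofReal (C i))⁻¹
          * ∫⁻ r in Set.Ioi (0:ℝ), ENNReal.ofReal (r ^ (p-1) / (p-1).factorial)
              * ENNReal.ofReal (r ^ a * Real.exp (-b * r)) :=
    aux_key p hp C hC (fun r => ENNReal.ofReal (r ^ a * Real.exp (-b * r))) hFm
  rw [key]
  -- compute the 1D integral
  have hkval : ∫ r in Set.Ioi (0:ℝ), r ^ (a + p - 1) * Real.exp (-(b * r))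
      = (1/b) ^ (a + (p:ℝ)) * Real.Gamma (a + p) :=
    Real.integral_rpow_mul_exp_neg_mul_Ioi hap hb
  have hkpos : 0 < (1/b) ^ (a + (p:ℝ)) * Real.Gamma (a + p) :=
    mul_pos (Real.rpow_pos_of_pos (by positivity) _) (Real.Gamma_pos_of_pos hap)
  have hkint : IntegrableOn (fun r : ℝ => r ^ (a + (p:ℝ) - 1) * Real.exp (-(b * r)))
      (Set.Ioi 0) := by
    by_contra h
    rw [MeasureTheory.integral_undef h] at hkval
    linarith
  have hstep : ∫⁻ r in Set.Ioi (0:ℝ), ENNReal.ofReal (r ^ (p-1) / (p-1).factorial)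
        * ENNReal.ofReal (r ^ a * Real.exp (-b * r))
      = ENNReal.ofReal ((((p-1).factorial : ℝ))⁻¹)
          * ENNReal.ofReal ((1/b) ^ (a + (p:ℝ)) * Real.Gamma (a + p)) := by
    have hcongr : ∀ r ∈ Set.Ioi (0:ℝ),
        ENNReal.ofReal (r ^ (p-1) / (p-1).factorial) * ENNReal.ofReal (r ^ a * Real.exp (-b * r))
        = ENNReal.ofReal ((((p-1).factorial : ℝ))⁻¹)
            * ENNReal.ofReal (r ^ (a + (p:ℝ) - 1) * Real.exp (-(b * r))) := by
      intro r hr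
      have hr0 : (0:ℝ) < r := hr
      rw [← ENNReal.ofReal_mul (by positivity), ← ENNReal.ofReal_mul (by positivity)]
      congr 1
      have e1 : r ^ (a + (p:ℝ) - 1) = r ^ (p-1) * r ^ a := by
        rw [show a + (p:ℝ) - 1 = ((p-1:ℕ):ℝ) + a by
          push_cast [Nat.cast_sub hp]; ring, Real.rpow_add hr0, Real.rpow_natCast]
      rw [e1, neg_mul]
      have hfac : (0:ℝ) < (p-1).factorial := by positivity
      field_simp
    rw [setLIntegral_congr_fun measurableSet_Ioi hcongr,
      lintegral_const_mul' _ _ ENNReal.ofReal_ne_top,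
      ← ofReal_integral_eq_lintegral_ofReal hkint ?_, hkval]
    · filter_upwards [self_mem_ae_restrict measurableSet_Ioi] with r hr
      have hr0 : (0:ℝ) < r := hr
      positivity
  rw [hstep]
  -- final real arithmetic
  have hprod_pos : 0 < ∏ l, C l := Finset.prod_pos fun l _ => hC l
  have hprod : (∏ i, ENNReal.ofReal (C i)) = ENNReal.ofReal (∏ l, C l) := by
    rw [← ENNReal.ofReal_prod_of_nonneg fun i _ => (hC i).le]
  rw [hprod, ← ENNReal.ofReal_inv_of_pos hprod_pos, ← ENNReal.ofReal_mul (by positivity),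
    ← ENNReal.ofReal_mul (by positivity), ENNReal.toReal_ofReal (by positivity)]
  have hbpow : (1/b) ^ (a + (p:ℝ)) = (b ^ (a + (p:ℝ)))⁻¹ := by
    rw [one_div, Real.inv_rpow hb.le]
  rw [hbpow]
  have hb1 : (0:ℝ) < b ^ (a + (p:ℝ)) := Real.rpow_pos_of_pos hb _
  have hfac : (0:ℝ) < (p-1).factorial := by positivity
  rw [eq_div_iff (by positivity)]
  field_simp
end

section
/- Let L: (0,∞)^p → (0,∞) be a function (a marginal likelihood) such that L(β) remains bounded (L(β) ≤ M for some M) as any β_l → ∞ or as all β_l → 0. Let π(β) = (∑_{l=1}^p C_l β_l)^a exp(−b ∑_{l=1}^p C_l β_l) with a > 0, b > 0, C_l > 0. Then the product L(β)·π(β) tends to 0 as any β_l → ∞ and as all β_l → 0 simultaneously. Consequently, if L·π attains a maximum on the closure of (0,∞)^p and is positive somewhere on (0,∞)^p, the maximizer β̂ satisfies 0 < ∑_{l=1}^p C_l β̂_l < ∞ with β̂_l < ∞ for all l. -/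
open Real Finset Filter Topology

/-!
Write `s = ∑ C_l β_l`, so that `π = s ^ a * exp (-b * s)`. This factor tends to `0` both as
`s → ∞` (exponential decay beats polynomial growth) and as `s → 0` (because `a > 0`), and `s`
does the former when one `β_l → ∞` and the latter when all `β_l → 0`. Since `0 < L ≤ M`, the
bounded factor `L` cannot spoil either limit. At a point where `L · π` is positive, `s ≠ 0`
since `0 ^ a = 0`.
-/

lemma tendsto_rpow_mul_exp_neg_mul_nhds_zero {a : ℝ} (ha : 0 < a) (b : ℝ) :
    Tendsto (fun x : ℝ => x ^ a * exp (-b * x)) (𝓝 0) (𝓝 0) := by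
  have hcont : ContinuousAt (fun x : ℝ => x ^ a * exp (-b * x)) 0 :=
    (continuousAt_rpow_const 0 a (Or.inr ha.le)).mul (by fun_prop)
  simpa [zero_rpow ha.ne'] using hcont.tendsto

lemma tendsto_mul_zero_of_nonneg_of_le {α : Type*} {F : Filter α} {f g : α → ℝ} {M : ℝ}
    (hf₀ : ∀ᶠ x in F, 0 ≤ f x) (hfM : ∀ᶠ x in F, f x ≤ M) (hg : Tendsto g F (𝓝 0)) :
    Tendsto (fun x => f x * g x) F (𝓝 0) := by
  refine isBoundedUnder_le_mul_tendsto_zero (isBoundedUnder_of_eventually_le (a := M) ?_) hg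
  filter_upwards [hf₀, hfM] with x hx₀ hxM
  simpa [abs_of_nonneg hx₀] using hxM

lemma sum_mul_update {ι R : Type*} [Fintype ι] [DecidableEq ι] [CommSemiring R]
    (C β : ι → R) (l : ι) (t : R) :
    ∑ i, C i * Function.update β l t i = C l * t + ∑ i ∈ univ.erase l, C i * β i := by
  rw [← add_sum_erase _ _ (mem_univ l), Function.update_self]
  congr 1
  exact sum_congr rfl fun i hi => by rw [Function.update_of_ne (ne_of_mem_erase hi)]

lemma tendsto_sum_mul_update_atTop {ι : Type*} [Fintype ι] [DecidableEq ι]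
    {C : ι → ℝ} (β : ι → ℝ) {l : ι} (hCl : 0 < C l) :
    Tendsto (fun t : ℝ => ∑ i, C i * Function.update β l t i) atTop atTop := by
  simp only [sum_mul_update]
  exact tendsto_atTop_add_const_right _ _ (tendsto_id.const_mul_atTop hCl)

lemma tendsto_sum_mul_nhdsWithin_zero {ι : Type*} [Fintype ι] (C : ι → ℝ) (s : Set (ι → ℝ)) :
    Tendsto (fun β : ι → ℝ => ∑ i, C i * β i) (𝓝[s] 0) (𝓝 0) := by
  have hcont : Continuous fun β : ι → ℝ => ∑ i, C i * β i := by fun_prop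
  exact (hcont.tendsto' 0 0 (by simp)).mono_left nhdsWithin_le_nhds

theorem jr_posterior_mode_robust_general
    (p : ℕ) (a b : ℝ) (ha : 0 < a) (hb : 0 < b)
    (C : Fin p → ℝ) (hC : ∀ l, 0 < C l)
    (L : (Fin p → ℝ) → ℝ) (M : ℝ)
    (hLpos : ∀ β, (∀ i, 0 < β i) → 0 < L β)
    (hLbdd : ∀ β, (∀ i, 0 < β i) → L β ≤ M) :
    (∀ (l : Fin p) (β : Fin p → ℝ), (∀ i, 0 < β i) →
      Tendsto (fun t : ℝ =>
          L (Function.update β l t) *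
            ((∑ i, C i * Function.update β l t i) ^ a *
              Real.exp (-b * ∑ i, C i * Function.update β l t i)))
        atTop (nhds 0)) ∧
    (Tendsto (fun β : Fin p → ℝ =>
        L β * ((∑ l, C l * β l) ^ a * Real.exp (-b * ∑ l, C l * β l)))
      (nhdsWithin 0 {β : Fin p → ℝ | ∀ i, 0 < β i}) (nhds 0)) ∧
    (∀ βhat : Fin p → ℝ, (∀ i, 0 < βhat i) →
      (∀ β, (∀ i, 0 < β i) →
        L β * ((∑ l, C l * β l) ^ a * Real.exp (-b * ∑ l, C l * β l)) ≤
          L βhat * ((∑ l, C l * βhat l) ^ a * Real.exp (-b * ∑ l, C l * βhat l))) →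
      0 < L βhat * ((∑ l, C l * βhat l) ^ a * Real.exp (-b * ∑ l, C l * βhat l)) →
      0 < ∑ l, C l * βhat l) := by
  refine ⟨fun l β hβ => ?_, ?_, fun βhat hβhat _ hpos => ?_⟩
  · have hupdate : ∀ᶠ t in atTop, ∀ i, 0 < Function.update β l t i := by
      filter_upwards [eventually_gt_atTop 0] with t ht
      exact (Function.forall_update_iff β fun _ x => 0 < x).2 ⟨ht, fun i _ => hβ i⟩
    exact tendsto_mul_zero_of_nonneg_of_le (hupdate.mono fun t ht => (hLpos _ ht).le)
      (hupdate.mono fun t ht => hLbdd _ ht)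
      ((tendsto_rpow_mul_exp_neg_mul_atTop_nhds_zero a b hb).comp
        (tendsto_sum_mul_update_atTop β (hC l)))
  · exact tendsto_mul_zero_of_nonneg_of_le
      (eventually_nhdsWithin_of_forall fun β hβ => (hLpos β hβ).le)
      (eventually_nhdsWithin_of_forall hLbdd)
      ((tendsto_rpow_mul_exp_neg_mul_nhds_zero ha b).comp (tendsto_sum_mul_nhdsWithin_zero C _))
  · refine (sum_nonneg fun i _ => (mul_pos (hC i) (hβhat i)).le).lt_of_ne fun hzero => ?_
    rw [← hzero, zero_rpow ha.ne', zero_mul, mul_zero] at hpos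
    exact hpos.false

/-- Robustness of the marginal posterior mode with the jointly robust prior: if the marginal
likelihood `L` is positive and bounded on the positive orthant, then the marginal posterior
`L·π` tends to `0` as any single `β_l → ∞` and as all `β_l → 0` simultaneously; consequently
any maximizer `βhat` of `L·π` over the positive orthant at which `L·π` is positive satisfies
`0 < ∑ C_l βhat_l` (and trivially each `βhat_l` is finite). -/
theorem jr_posterior_mode_robust
    (p : ℕ) (hp : 1 ≤ p) (a b : ℝ) (ha : 0 < a) (hb : 0 < b)
    (C : Fin p → ℝ) (hC : ∀ l, 0 < C l)
    (L : (Fin p → ℝ) → ℝ) (M : ℝ)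
    (hLpos : ∀ β, (∀ i, 0 < β i) → 0 < L β)
    (hLbdd : ∀ β, (∀ i, 0 < β i) → L β ≤ M) :
    (∀ (l : Fin p) (β : Fin p → ℝ), (∀ i, 0 < β i) →
      Tendsto (fun t : ℝ =>
          L (Function.update β l t) *
            ((∑ i, C i * Function.update β l t i) ^ a *
              Real.exp (-b * ∑ i, C i * Function.update β l t i)))
        atTop (nhds 0)) ∧
    (Tendsto (fun β : Fin p → ℝ =>
        L β * ((∑ l, C l * β l) ^ a * Real.exp (-b * ∑ l, C l * β l)))
      (nhdsWithin 0 {β : Fin p → ℝ | ∀ i, 0 < β i}) (nhds 0)) ∧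
    (∀ βhat : Fin p → ℝ, (∀ i, 0 < βhat i) →
      (∀ β, (∀ i, 0 < β i) →
        L β * ((∑ l, C l * β l) ^ a * Real.exp (-b * ∑ l, C l * β l)) ≤
          L βhat * ((∑ l, C l * βhat l) ^ a * Real.exp (-b * ∑ l, C l * βhat l))) →
      0 < L βhat * ((∑ l, C l * βhat l) ^ a * Real.exp (-b * ∑ l, C l * βhat l)) →
      0 < ∑ l, C l * βhat l) :=
  jr_posterior_mode_robust_general p a b ha hb C hC L M hLpos hLbdd
end

section
/- Under the jointly robust prior with density proportional to (∑_{l=1}^p C_l β_l + η)^a exp(−b(∑_{l=1}^p C_l β_l + η)) on (0,∞)^{p+1}, the random variable Z = ∑_{l=1}^p C_l β_l + η has a Gamma distribution with shape parameter a + p + 1 and rate parameter b. -/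
/-!
Write `Z = ∑ i, w i * x i` with positive weights `w = (C₁, …, C_p, 1)`. Integrating out one
coordinate at a time, the push-forward of Lebesgue measure on the open orthant of `ℝ^{n+1}` under
`Z` has density `z ^ n / (n! ∏ w)` on `(0, ∞)`: a scaling gives the factor `1 / w 0`, and the
convolution of `z ^ n / n!` with Lebesgue measure on `(0, ∞)` is `z ^ (n + 1) / (n + 1)!`.
Multiplying by the prior density, which is a function of `Z` only, yields the Gamma density.
-/

open MeasureTheory Real ProbabilityTheory Set
open scoped ENNReal Nat

theorem lintegral_Ioi_comp_const_mul_s16 {c : ℝ} (hc : 0 < c) (f : ℝ → ℝ≥0∞) :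
    ENNReal.ofReal c * ∫⁻ x in Ioi 0, f (c * x) = ∫⁻ y in Ioi 0, f y := by
  have h := lintegral_image_eq_lintegral_abs_deriv_mul (measurableSet_Ioi (a := 0))
    (fun x _ => (hasDerivAt_id' x).const_mul c |>.hasDerivWithinAt)
    (mul_right_injective₀ hc.ne').injOn f
  rw [image_const_mul_Ioi_zero hc] at h
  simp only [mul_one, abs_of_pos hc] at h
  rw [h, lintegral_const_mul' _ _ ENNReal.ofReal_ne_top]

theorem lintegral_Ioi_comp_add_right (z : ℝ) (f : ℝ → ℝ≥0∞) :
    ∫⁻ x in Ioi 0, f (x + z) = ∫⁻ w in Ioi z, f w := by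
  have h := lintegral_image_eq_lintegral_abs_deriv_mul (measurableSet_Ioi (a := 0))
    (fun x _ => (hasDerivAt_id' x).add_const z |>.hasDerivWithinAt)
    (add_left_injective z).injOn f
  rw [image_add_const_Ioi, zero_add] at h
  simpa using h.symm

theorem lintegral_Ioi_lintegral_Ioi_mul_comp_add {g f : ℝ → ℝ≥0∞} (hg : Measurable g)
    (hf : Measurable f) :
    ∫⁻ t in Ioi 0, ∫⁻ z in Ioi 0, g z * f (t + z)
      = ∫⁻ w in Ioi 0, (∫⁻ z in Ioo 0 w, g z) * f w := by
  -- both sides integrate `g z * f w` over `0 < z < w`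
  set H : ℝ × ℝ → ℝ≥0∞ := {q | q.1 < q.2}.indicator fun q => g q.1 * f q.2
  have hH : Measurable H :=
    ((hg.comp measurable_fst).mul (hf.comp measurable_snd)).indicator
      (measurableSet_lt measurable_fst measurable_snd)
  have hH_left (z : ℝ) : (fun w => H (z, w)) = (Ioi z).indicator fun w => g z * f w := by
    ext w; simp [H, indicator_apply]
  have hH_right (w : ℝ) : (fun z => H (z, w)) = (Iio w).indicator fun z => g z * f w := by
    ext z; simp [H, indicator_apply]
  calc ∫⁻ t in Ioi 0, ∫⁻ z in Ioi 0, g z * f (t + z)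
      = ∫⁻ z in Ioi 0, ∫⁻ t in Ioi 0, g z * f (t + z) :=
        lintegral_lintegral_swap ((hg.comp measurable_snd).mul
          (hf.comp (measurable_fst.add measurable_snd))).aemeasurable
    _ = ∫⁻ z in Ioi 0, ∫⁻ w in Ioi 0, H (z, w) := by
        refine setLIntegral_congr_fun measurableSet_Ioi fun z hz => ?_
        rw [lintegral_const_mul _ (show Measurable fun t => f (t + z) by fun_prop),
          lintegral_Ioi_comp_add_right, hH_left, lintegral_indicator measurableSet_Ioi,
          Measure.restrict_restrict measurableSet_Ioi,
          inter_eq_left.2 (Ioi_subset_Ioi (le_of_lt hz)), lintegral_const_mul _ hf]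
    _ = ∫⁻ w in Ioi 0, ∫⁻ z in Ioi 0, H (z, w) :=
        lintegral_lintegral_swap hH.aemeasurable
    _ = ∫⁻ w in Ioi 0, (∫⁻ z in Ioo 0 w, g z) * f w := by
        refine setLIntegral_congr_fun measurableSet_Ioi fun w _ => ?_
        rw [hH_right, lintegral_indicator measurableSet_Iio,
          Measure.restrict_restrict measurableSet_Iio, Iio_inter_Ioi, lintegral_mul_const _ hg]

theorem lintegral_Ioo_pow_div_factorial (n : ℕ) {w : ℝ} (hw : 0 ≤ w) :
    ∫⁻ z in Ioo 0 w, ENNReal.ofReal (z ^ n / n !) = ENNReal.ofReal (w ^ (n + 1) / (n + 1)!) := by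
  rw [← ofReal_integral_eq_lintegral_ofReal, integral_Ioc_eq_integral_Ioo.symm,
    ← intervalIntegral.integral_of_le hw, intervalIntegral.integral_div, integral_pow,
    Nat.factorial_succ]
  · push_cast
    field_simp
    simp
  · exact (continuous_pow n |>.div_const _).integrableOn_Icc.mono_set Ioo_subset_Icc_self
  · filter_upwards [ae_restrict_mem measurableSet_Ioo] with z hz
    exact div_nonneg (pow_nonneg hz.1.le n) (Nat.cast_nonneg _)

theorem lintegral_Ioi_lintegral_Ioi_pow_mul_comp_add (n : ℕ) {f : ℝ → ℝ≥0∞}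
    (hf : Measurable f) :
    ∫⁻ t in Ioi 0, ∫⁻ z in Ioi 0, ENNReal.ofReal (z ^ n / n !) * f (t + z)
      = ∫⁻ w in Ioi 0, ENNReal.ofReal (w ^ (n + 1) / (n + 1)!) * f w := by
  rw [lintegral_Ioi_lintegral_Ioi_mul_comp_add (by fun_prop) hf]
  exact setLIntegral_congr_fun measurableSet_Ioi fun w hw => by
    rw [lintegral_Ioo_pow_div_factorial n (le_of_lt hw)]

theorem lintegral_pi_fin_succ {α : Type*} [MeasurableSpace α] (μ : Measure α) [SigmaFinite μ]
    {n : ℕ} {F : (Fin (n + 1) → α) → ℝ≥0∞} (hF : Measurable F) :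
    ∫⁻ x, F x ∂(Measure.pi fun _ => μ)
      = ∫⁻ t, ∫⁻ y, F (Fin.cons t y) ∂(Measure.pi fun _ => μ) ∂μ := by
  rw [(measurePreserving_piFinSuccAbove (fun _ => μ) 0).symm.lintegral_map_equiv F,
    lintegral_prod]
  · simp only [MeasurableEquiv.piFinSuccAbove_symm_apply, Fin.insertNthEquiv_zero]
    rfl
  · exact (hF.comp (MeasurableEquiv.measurable _)).aemeasurable

theorem lintegral_pi_Ioi_comp_sum_mul (n : ℕ) {w : Fin (n + 1) → ℝ} (hw : ∀ i, 0 < w i)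
    {f : ℝ → ℝ≥0∞} (hf : Measurable f) :
    (∏ i, ENNReal.ofReal (w i)) *
        ∫⁻ x, f (∑ i, w i * x i) ∂(Measure.pi fun _ => volume.restrict (Ioi 0))
      = ∫⁻ z in Ioi 0, ENNReal.ofReal (z ^ n / n !) * f z := by
  induction n generalizing f with
  | zero =>
    rw [lintegral_pi_fin_succ _ (by fun_prop)]
    simpa using lintegral_Ioi_comp_const_mul_s16 (hw 0) f
  | succ n ih =>
    set w' : Fin (n + 1) → ℝ := fun i => w i.succ
    have hsum (t : ℝ) (y : Fin (n + 1) → ℝ) :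
        ∑ i, w i * (Fin.cons t y : Fin (n + 2) → ℝ) i = w 0 * t + ∑ i, w' i * y i := by
      simp [Fin.sum_univ_succ, w']
    calc (∏ i, ENNReal.ofReal (w i)) *
          ∫⁻ x, f (∑ i, w i * x i) ∂(Measure.pi fun _ => volume.restrict (Ioi 0))
        = ENNReal.ofReal (w 0) * ∫⁻ t in Ioi 0, (∏ i, ENNReal.ofReal (w' i)) *
            ∫⁻ y, f (w 0 * t + ∑ i, w' i * y i)
              ∂(Measure.pi fun _ => volume.restrict (Ioi 0)) := by
          rw [lintegral_pi_fin_succ _ (by fun_prop), Fin.prod_univ_succ, mul_assoc,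
            lintegral_const_mul' _ _ (ENNReal.prod_ne_top fun _ _ => ENNReal.ofReal_ne_top)]
          simp only [hsum]
          rfl
      _ = ENNReal.ofReal (w 0) * ∫⁻ t in Ioi 0, ∫⁻ z in Ioi 0,
            ENNReal.ofReal (z ^ n / n !) * f (w 0 * t + z) := by
          congr 1
          exact lintegral_congr fun t => ih (fun i => hw i.succ) (hf.comp (measurable_const_add _))
      _ = ∫⁻ w in Ioi 0, ENNReal.ofReal (w ^ (n + 1) / (n + 1)!) * f w := by
          rw [lintegral_Ioi_comp_const_mul_s16 (hw 0)
              fun t => ∫⁻ z in Ioi 0, ENNReal.ofReal (z ^ n / n !) * f (t + z),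
            lintegral_Ioi_lintegral_Ioi_pow_mul_comp_add n hf]

theorem map_pi_Ioi_sum_mul (n : ℕ) {w : Fin (n + 1) → ℝ} (hw : ∀ i, 0 < w i) :
    (Measure.pi fun _ => volume.restrict (Ioi (0 : ℝ))).map (fun x => ∑ i, w i * x i)
      = (volume.restrict (Ioi 0)).withDensity
          fun z => ENNReal.ofReal (z ^ n / (n ! * ∏ i, w i)) := by
  have hprod : ∏ i, ENNReal.ofReal (w i) = ENNReal.ofReal (∏ i, w i) :=
    (ENNReal.ofReal_prod_of_nonneg fun i _ => (hw i).le).symm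
  have hprod_pos : 0 < ∏ i, w i := Finset.prod_pos fun i _ => hw i
  refine Measure.ext_of_lintegral _ fun f hf => ?_
  rw [lintegral_map hf (by fun_prop), lintegral_withDensity_eq_lintegral_mul _ (by fun_prop) hf]
  refine (ENNReal.mul_right_inj (a := ∏ i, ENNReal.ofReal (w i)) ?_ ?_).1 ?_
  · simpa [hprod] using hprod_pos
  · exact ENNReal.prod_ne_top fun _ _ => ENNReal.ofReal_ne_top
  rw [lintegral_pi_Ioi_comp_sum_mul n hw hf, ← lintegral_const_mul' _ _ (by simp [hprod])]
  refine setLIntegral_congr_fun measurableSet_Ioi fun z hz => ?_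
  rw [Pi.mul_apply, ← mul_assoc, hprod, ← ENNReal.ofReal_mul hprod_pos.le]
  congr 2
  field_simp

theorem map_withDensity_comp {α β : Type*} [MeasurableSpace α] [MeasurableSpace β]
    {μ : Measure α} {T : α → β} (hT : Measurable T) {h : β → ℝ≥0∞} (hh : Measurable h) :
    (μ.withDensity fun x => h (T x)).map T = (μ.map T).withDensity h := by
  ext s hs
  rw [Measure.map_apply hT hs, withDensity_apply _ (hT hs), withDensity_apply _ hs,
    setLIntegral_map hs hh hT]

theorem restrict_setOf_forall_pos_eq_pi (ι : Type*) [Fintype ι] :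
    volume.restrict {x : ι → ℝ | ∀ i, 0 < x i} = Measure.pi fun _ => volume.restrict (Ioi 0) := by
  rw [← Measure.restrict_pi_pi, ← volume_pi]
  congr 1
  ext x
  simp

theorem gammaMeasure_eq_withDensity_restrict_Ioi (a r : ℝ) :
    gammaMeasure a r = (volume.restrict (Ioi 0)).withDensity (gammaPDF a r) := by
  have hpdf : (Ici (0 : ℝ)).indicator (gammaPDF a r) = gammaPDF a r := by
    ext z
    by_cases hz : 0 ≤ z
    · simp [hz]
    · simp [hz, gammaPDF_of_neg (not_le.1 hz)]
  rw [gammaMeasure, Measure.restrict_congr_set Ioi_ae_eq_Ici,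
    ← withDensity_indicator measurableSet_Ici, hpdf]

theorem jr_prior_sum_gamma_distributed_general
    (p : ℕ) (a b : ℝ)
    (C : Fin p → ℝ) (hC : ∀ l, 0 < C l) :
    Measure.map
      (fun x : Fin (p + 1) → ℝ => ∑ l : Fin p, C l * x l.castSucc + x (Fin.last p))
      ((volume.restrict {x : Fin (p + 1) → ℝ | ∀ i, 0 < x i}).withDensity
        (fun x => ENNReal.ofReal
          (((p.factorial : ℝ) * b ^ (a + p + 1) * (∏ l, C l) / Real.Gamma (a + p + 1)) *
            ((∑ l : Fin p, C l * x l.castSucc + x (Fin.last p)) ^ a *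
              Real.exp (-b * (∑ l : Fin p, C l * x l.castSucc + x (Fin.last p)))))))
      = gammaMeasure (a + p + 1) b := by
  set K : ℝ := p ! * b ^ (a + p + 1) * (∏ l, C l) / Gamma (a + p + 1) with hK
  have hweights : (fun x : Fin (p + 1) → ℝ => ∑ l : Fin p, C l * x l.castSucc + x (Fin.last p))
      = fun x => ∑ i, Fin.snoc C 1 i * x i := by
    ext x; simp [Fin.sum_univ_castSucc]
  have hprod : ∏ i, (Fin.snoc C 1 : Fin (p + 1) → ℝ) i = ∏ l, C l := by
    simp [Fin.prod_univ_castSucc]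
  have hprod_pos : 0 < ∏ l, C l := Finset.prod_pos fun l _ => hC l
  have hweights_pos (i : Fin (p + 1)) : 0 < (Fin.snoc C 1 : Fin (p + 1) → ℝ) i := by
    refine Fin.lastCases ?_ (fun l => ?_) i <;> simp [hC]
  rw [restrict_setOf_forall_pos_eq_pi,
    map_withDensity_comp (by fun_prop)
      (h := fun z => ENNReal.ofReal (K * (z ^ a * exp (-b * z)))) (by fun_prop),
    hweights, map_pi_Ioi_sum_mul p hweights_pos, ← withDensity_mul _ (by fun_prop) (by fun_prop),
    gammaMeasure_eq_withDensity_restrict_Ioi]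
  refine withDensity_congr_ae <| (ae_restrict_iff' measurableSet_Ioi).2 <|
    .of_forall fun z (hz : 0 < z) => ?_
  rw [Pi.mul_apply, hprod, ← ENNReal.ofReal_mul (by positivity), gammaPDF, gammaPDFReal,
    if_pos hz.le, show a + p + 1 - 1 = p + a by ring, rpow_add hz, rpow_natCast]
  congr 1
  rw [hK]
  field_simp

/-- Under the jointly robust prior, the random variable `Z = ∑ C_l β_l + η` has a Gamma
distribution with shape `a + p + 1` and rate `b`. -/
theorem jr_prior_sum_gamma_distributed
    (p : ℕ) (hp : 1 ≤ p) (a b : ℝ) (ha : -(p + 1 : ℝ) < a) (hb : 0 < b)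
    (C : Fin p → ℝ) (hC : ∀ l, 0 < C l) :
    Measure.map
      (fun x : Fin (p + 1) → ℝ => ∑ l : Fin p, C l * x l.castSucc + x (Fin.last p))
      ((volume.restrict {x : Fin (p + 1) → ℝ | ∀ i, 0 < x i}).withDensity
        (fun x => ENNReal.ofReal
          (((p.factorial : ℝ) * b ^ (a + p + 1) * (∏ l, C l) / Real.Gamma (a + p + 1)) *
            ((∑ l : Fin p, C l * x l.castSucc + x (Fin.last p)) ^ a *
              Real.exp (-b * (∑ l : Fin p, C l * x l.castSucc + x (Fin.last p)))))))
      = gammaMeasure (a + p + 1) b :=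
  jr_prior_sum_gamma_distributed_general p a b C hC
end

section
/- Let h: (0,1) → ℝ^q assign mean basis values and suppose the mean basis consists only of an intercept and linear terms in the input. If each input coordinate is transformed by x̃_l = (x_l − c_{0l})/c_{1l} with c_{1l} > 0, and the reference prior for range parameters γ under design {x_i} is π^R(γ_1,…,γ_p) ∝ |I*(γ)|^{1/2} with I* the expected Fisher information matrix of the GaSP, then the reference prior under the transformed design satisfies π̃^R(γ_1,…,γ_p) ∝ π^R(c_{11}γ_1,…,c_{1p}γ_p) — equivalently, for a product correlation c(x_a,x_b) = ∏_l c_l(|x_{al}−x_{bl}|/γ_l) the Fisher information matrix I* is invariant under simultaneously rescaling the lth input distances by c_{1l} and the lth range parameter by c_{1l}. -/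
open Matrix Finset Real

noncomputable section

/-- Product correlation matrix: `R(γ)_{ij} = ∏_l c_l(|x_{il} - x_{jl}| / γ_l)`. -/
def corrMatrix {n p : ℕ} (c : Fin p → ℝ → ℝ) (x : Fin n → Fin p → ℝ)
    (γ : Fin p → ℝ) : Matrix (Fin n) (Fin n) ℝ :=
  Matrix.of fun i j => ∏ l, c l (|x i l - x j l| / γ l)

/-- Partial derivative `Ṙ_l = ∂R/∂γ_l`, expressed via the derivative `c'` of each
one-dimensional kernel `c_l` (which depends on the input only through `d_l/γ_l`). -/
def corrMatrixDeriv {n p : ℕ} (c c' : Fin p → ℝ → ℝ) (x : Fin n → Fin p → ℝ)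
    (γ : Fin p → ℝ) (l₀ : Fin p) : Matrix (Fin n) (Fin n) ℝ :=
  Matrix.of fun i j =>
    (∏ l ∈ Finset.univ.erase l₀, c l (|x i l - x j l| / γ l)) *
      (c' l₀ (|x i l₀ - x j l₀| / γ l₀) * (-(|x i l₀ - x j l₀|) / γ l₀ ^ 2))

/-- Mean basis matrix consisting of an intercept and the linear terms of the input. -/
def meanBasis {n p : ℕ} (x : Fin n → Fin p → ℝ) : Matrix (Fin n) (Fin (p + 1)) ℝ :=
  Matrix.of fun i j => Fin.cases 1 (fun l => x i l) j

/-- `Q = R⁻¹ - R⁻¹ H (Hᵀ R⁻¹ H)⁻¹ Hᵀ R⁻¹`. -/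
def qMatrix {n p : ℕ} (c : Fin p → ℝ → ℝ) (x : Fin n → Fin p → ℝ)
    (γ : Fin p → ℝ) : Matrix (Fin n) (Fin n) ℝ :=
  let R := corrMatrix c x γ
  let H := meanBasis x
  R⁻¹ - R⁻¹ * H * (H.transpose * R⁻¹ * H)⁻¹ * H.transpose * R⁻¹

/-- `W_l = Ṙ_l Q`. -/
def wMatrix {n p : ℕ} (c c' : Fin p → ℝ → ℝ) (x : Fin n → Fin p → ℝ)
    (γ : Fin p → ℝ) (l : Fin p) : Matrix (Fin n) (Fin n) ℝ :=
  corrMatrixDeriv c c' x γ l * qMatrix c x γ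

/-- Expected Fisher information matrix `I*(γ)` of the GaSP (with `q = p+1` mean basis
functions): `(I*)_{00} = n - q`, `(I*)_{0,l} = tr(W_l)`, `(I*)_{l,m} = tr(W_l W_m)`. -/
def fisherInfo {n p : ℕ} (c c' : Fin p → ℝ → ℝ) (x : Fin n → Fin p → ℝ)
    (γ : Fin p → ℝ) : Matrix (Fin (p + 1)) (Fin (p + 1)) ℝ :=
  Matrix.of fun i j =>
    Fin.cases
      (Fin.cases ((n : ℝ) - (p + 1)) (fun m => (wMatrix c c' x γ m).trace) j)
      (fun l => Fin.cases ((wMatrix c c' x γ l).trace)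
        (fun m => (wMatrix c c' x γ l * wMatrix c c' x γ m).trace) j) i

/-- Reference prior density (up to normalization): `π^R(γ) = |I*(γ)|^{1/2}`. -/
def refPrior {n p : ℕ} (c c' : Fin p → ℝ → ℝ) (x : Fin n → Fin p → ℝ)
    (γ : Fin p → ℝ) : ℝ :=
  Real.sqrt |(fisherInfo (n := n) c c' x γ).det|

/-!
The affine change of inputs divides the `l`-th distances by `c1 l`, so the correlation matrix is
unchanged once `γ l` is replaced by `c1 l * γ l`, while `∂R/∂γ_l` picks up the factor `c1 l`.
The new mean basis is `H A` for an invertible upper triangular `A`, and `Q` only depends on the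
column space of `H`. Hence `W_l` scales by `c1 l`, so `I* ↦ D I* D` with `D = diag(1, c1)`, and
`|I*|^{1/2}` scales by `∏ l, c1 l`.
-/

section GLS

variable {m k : Type*} [Fintype m] [DecidableEq m] [Fintype k] [DecidableEq k]
  {α : Type*} [CommRing α]

def glsProj (R : Matrix m m α) (H : Matrix m k α) : Matrix m m α :=
  R⁻¹ * H * (Hᵀ * R⁻¹ * H)⁻¹ * Hᵀ * R⁻¹

theorem glsProj_mul_right (R : Matrix m m α) (H : Matrix m k α) {A : Matrix k k α}
    (hA : IsUnit A.det) : glsProj R (H * A) = glsProj R H := by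
  have hAt : IsUnit Aᵀ.det := by rwa [det_transpose]
  have hgram : ((H * A)ᵀ * R⁻¹ * (H * A))⁻¹ = A⁻¹ * ((Hᵀ * R⁻¹ * H)⁻¹ * (Aᵀ)⁻¹) := by
    rw [transpose_mul, show Aᵀ * Hᵀ * R⁻¹ * (H * A) = Aᵀ * (Hᵀ * R⁻¹ * H) * A by
      simp only [Matrix.mul_assoc], Matrix.mul_inv_rev, Matrix.mul_inv_rev]
  rw [glsProj, glsProj, hgram]
  simp only [transpose_mul, Matrix.mul_assoc, mul_nonsing_inv_cancel_left A _ hA,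
    nonsing_inv_mul_cancel_left Aᵀ _ hAt]

end GLS

theorem qMatrix_eq_inv_sub_glsProj {n p : ℕ} (c : Fin p → ℝ → ℝ) (x : Fin n → Fin p → ℝ)
    (γ : Fin p → ℝ) :
    qMatrix c x γ = (corrMatrix c x γ)⁻¹ - glsProj (corrMatrix c x γ) (meanBasis x) :=
  rfl

def rescaleDesign {n p : ℕ} (x : Fin n → Fin p → ℝ) (c0 c1 : Fin p → ℝ) :
    Fin n → Fin p → ℝ :=
  fun i l => (x i l - c0 l) / c1 l

section Rescale

variable {n p : ℕ} (x : Fin n → Fin p → ℝ) (c0 : Fin p → ℝ) {c1 : Fin p → ℝ}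

theorem abs_rescaleDesign_sub (hc1 : ∀ l, 0 < c1 l) (i j : Fin n) (l : Fin p) :
    |rescaleDesign x c0 c1 i l - rescaleDesign x c0 c1 j l| = |x i l - x j l| / c1 l := by
  rw [rescaleDesign, rescaleDesign, div_sub_div_same, sub_sub_sub_cancel_right, abs_div,
    abs_of_pos (hc1 l)]

theorem abs_rescaleDesign_sub_div (hc1 : ∀ l, 0 < c1 l) (γ : Fin p → ℝ) (i j : Fin n)
    (l : Fin p) :
    |rescaleDesign x c0 c1 i l - rescaleDesign x c0 c1 j l| / γ l
      = |x i l - x j l| / (c1 l * γ l) := by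
  rw [abs_rescaleDesign_sub x c0 hc1, div_div]

theorem corrMatrix_rescaleDesign (c : Fin p → ℝ → ℝ) (hc1 : ∀ l, 0 < c1 l) (γ : Fin p → ℝ) :
    corrMatrix c (rescaleDesign x c0 c1) γ = corrMatrix c x (fun l => c1 l * γ l) := by
  ext i j
  simp only [corrMatrix, of_apply, abs_rescaleDesign_sub_div x c0 hc1]

theorem corrMatrixDeriv_rescaleDesign (c c' : Fin p → ℝ → ℝ) (hc1 : ∀ l, 0 < c1 l)
    (γ : Fin p → ℝ) (l₀ : Fin p) :
    corrMatrixDeriv c c' (rescaleDesign x c0 c1) γ l₀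
      = c1 l₀ • corrMatrixDeriv c c' x (fun l => c1 l * γ l) l₀ := by
  ext i j
  have hc := (hc1 l₀).ne'
  simp only [corrMatrixDeriv, of_apply, Matrix.smul_apply, smul_eq_mul,
    abs_rescaleDesign_sub x c0 hc1]
  field_simp

/-- Rows `(1, -c0/c1)` and `(0, e_l / c1 l)`. -/
def affineBasisChange (c0 c1 : Fin p → ℝ) : Matrix (Fin (p + 1)) (Fin (p + 1)) ℝ :=
  Matrix.of <| Fin.cons (Fin.cons 1 fun m => -c0 m / c1 m)
    fun l => Fin.cons 0 (Pi.single l (c1 l)⁻¹)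

theorem meanBasis_rescaleDesign :
    meanBasis (rescaleDesign x c0 c1) = meanBasis x * affineBasisChange c0 c1 := by
  ext i j
  rw [mul_apply, Fin.sum_univ_succ]
  refine Fin.cases ?_ (fun m => ?_) j
  · simp [meanBasis, affineBasisChange]
  · simp only [meanBasis, rescaleDesign, affineBasisChange, of_apply, Fin.cases_succ,
      Fin.cases_zero, Fin.cons_zero, Fin.cons_succ, one_mul, Pi.single_apply, mul_ite, mul_zero,
      sum_ite_eq, mem_univ, if_true, sub_div]
    ring

theorem isUpperTriangular_affineBasisChange :
    (affineBasisChange c0 c1).IsUpperTriangular := by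
  intro i j hji
  induction i using Fin.cases with
  | zero => exact absurd hji (Fin.not_lt_zero j)
  | succ l =>
    induction j using Fin.cases with
    | zero => rfl
    | succ m => simp [affineBasisChange, (Fin.succ_lt_succ_iff.mp hji).ne]

theorem isUnit_det_affineBasisChange (hc1 : ∀ l, c1 l ≠ 0) :
    IsUnit (affineBasisChange c0 c1).det := by
  rw [det_of_isUpperTriangular (isUpperTriangular_affineBasisChange c0), Fin.prod_univ_succ]
  simp [affineBasisChange, Finset.prod_ne_zero_iff, hc1]

theorem qMatrix_rescaleDesign (c : Fin p → ℝ → ℝ) (hc1 : ∀ l, 0 < c1 l) (γ : Fin p → ℝ) :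
    qMatrix c (rescaleDesign x c0 c1) γ = qMatrix c x (fun l => c1 l * γ l) := by
  rw [qMatrix_eq_inv_sub_glsProj, qMatrix_eq_inv_sub_glsProj, corrMatrix_rescaleDesign x c0 c hc1,
    meanBasis_rescaleDesign,
    glsProj_mul_right _ _ (isUnit_det_affineBasisChange c0 fun l => (hc1 l).ne')]

theorem wMatrix_rescaleDesign (c c' : Fin p → ℝ → ℝ) (hc1 : ∀ l, 0 < c1 l) (γ : Fin p → ℝ)
    (l : Fin p) :
    wMatrix c c' (rescaleDesign x c0 c1) γ l
      = c1 l • wMatrix c c' x (fun l => c1 l * γ l) l := by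
  rw [wMatrix, wMatrix, corrMatrixDeriv_rescaleDesign x c0 c c' hc1,
    qMatrix_rescaleDesign x c0 c hc1, Matrix.smul_mul]

theorem fisherInfo_rescaleDesign (c c' : Fin p → ℝ → ℝ) (hc1 : ∀ l, 0 < c1 l)
    (γ : Fin p → ℝ) :
    fisherInfo (n := n) c c' (rescaleDesign x c0 c1) γ
      = diagonal (Fin.cons 1 c1) * fisherInfo (n := n) c c' x (fun l => c1 l * γ l) *
          diagonal (Fin.cons 1 c1) := by
  ext i j
  rw [mul_diagonal, diagonal_mul]
  induction i using Fin.cases <;> induction j using Fin.cases <;>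
    simp only [fisherInfo, of_apply, Fin.cases_zero, Fin.cases_succ, Fin.cons_zero, Fin.cons_succ,
      wMatrix_rescaleDesign x c0 c c' hc1, trace_smul, Matrix.smul_mul, Matrix.mul_smul, smul_smul,
      smul_eq_mul] <;> ring

end Rescale

theorem sqrt_abs_det_diagonal_mul_mul_diagonal {ι : Type*} [Fintype ι] [DecidableEq ι]
    (d : ι → ℝ) (M : Matrix ι ι ℝ) :
    √|(diagonal d * M * diagonal d).det| = |∏ i, d i| * √|M.det| := by
  rw [det_mul, det_mul, det_diagonal, abs_mul, abs_mul, mul_right_comm, ← sq,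
    Real.sqrt_mul (sq_nonneg _), Real.sqrt_sq (abs_nonneg _)]

theorem refPrior_location_scale_invariant_general
    (n p : ℕ)
    (c c' : Fin p → ℝ → ℝ)
    (x : Fin n → Fin p → ℝ) (c0 c1 : Fin p → ℝ) (hc1 : ∀ l, 0 < c1 l) :
    ∃ k : ℝ, 0 < k ∧ ∀ γ : Fin p → ℝ, (∀ l, 0 < γ l) →
      refPrior (n := n) c c' (fun i l => (x i l - c0 l) / c1 l) γ
        = k * refPrior (n := n) c c' x (fun l => c1 l * γ l) := by
  have hk : 0 < ∏ l, c1 l := Finset.prod_pos fun l _ => hc1 l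
  refine ⟨∏ l, c1 l, hk, fun γ _ => ?_⟩
  change √|(fisherInfo c c' (rescaleDesign x c0 c1) γ).det| = _
  rw [fisherInfo_rescaleDesign x c0 c c' hc1, sqrt_abs_det_diagonal_mul_mul_diagonal,
    Fin.prod_cons, one_mul, abs_of_pos hk, refPrior]

/-- Location–scale invariance of the reference prior when the mean basis consists of an
intercept and linear terms: if each input coordinate is transformed by
`x̃_l = (x_l - c₀_l)/c₁_l` with `c₁_l > 0`, then the reference prior under the transformed
design is proportional to `γ ↦ π^R(c₁_1 γ_1, …, c₁_p γ_p)`. -/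
theorem refPrior_location_scale_invariant
    (n p : ℕ) (hp : 1 ≤ p) (hn : p + 1 ≤ n)
    (c c' : Fin p → ℝ → ℝ) (hderiv : ∀ l t, HasDerivAt (c l) (c' l t) t)
    (x : Fin n → Fin p → ℝ) (c0 c1 : Fin p → ℝ) (hc1 : ∀ l, 0 < c1 l) :
    ∃ k : ℝ, 0 < k ∧ ∀ γ : Fin p → ℝ, (∀ l, 0 < γ l) →
      refPrior (n := n) c c' (fun i l => (x i l - c0 l) / c1 l) γ
        = k * refPrior (n := n) c c' x (fun l => c1 l * γ l) :=
  refPrior_location_scale_invariant_general n p c c' x c0 c1 hc1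

end
end
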